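/- arXiv:math/0503542 — 3 statements merged into one kernel-verified Lean document; each statement's English description precedes it below -/
import Mathlib

section
/- For every l ≥ 4, the determinant of the quantum affine Cartan matrix of type D_l equals (1-t^{2(l-2)})(1-t^4)(1-t^4)/(1-t^2). -/
open Polynomial Finset

/-- Adjacency in the affine Dₗ diagram on the `l+1` vertices `0,…,l`:
a chain `2 - 3 - ⋯ - (l-1)`, with the two extra leaves `0,1` attached to
vertex `2` and the extra leaf `l` attached to vertex `l-2`. -/
def affineDAdj (l i j : ℕ) : Prop :=
  (i = 0 ∧ j = 2) ∨ (j = 0 ∧ i = 2) ∨ (i = 1 ∧ j = 2) ∨ (j = 1 ∧ i = 2) ∨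
    (2 ≤ i ∧ j = i + 1 ∧ j ≤ l - 1) ∨ (2 ≤ j ∧ i = j + 1 ∧ i ≤ l - 1) ∨
    (i = l - 2 ∧ j = l) ∨ (j = l - 2 ∧ i = l)

instance (l i j : ℕ) : Decidable (affineDAdj l i j) := by
  unfold affineDAdj; infer_instance

/-- The affine Cartan matrix of type Dₗ. -/
def affineDCartanMatrix (l : ℕ) : Matrix (Fin (l + 1)) (Fin (l + 1)) ℤ :=
  fun i j =>
    (if i = j then 2 else 0) - (if affineDAdj l (i : ℕ) (j : ℕ) then 1 else 0)

/-- The quantum affine Cartan matrix `C(t) = (1-t)²·I + t·C_aff` of type Dₗ. -/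
noncomputable def quantumAffineD (l : ℕ) :
    Matrix (Fin (l + 1)) (Fin (l + 1)) (Polynomial ℤ) :=
  ((1 - X : Polynomial ℤ)) ^ 2 • (1 : Matrix (Fin (l + 1)) (Fin (l + 1)) (Polynomial ℤ))
    + (X : Polynomial ℤ) • ((affineDCartanMatrix l).map (Int.cast : ℤ → Polynomial ℤ))



/-- entries of the triangularizing matrix -/
noncomputable def vE (l i j : ℕ) : Polynomial ℤ :=
  if j ≤ 1 then (if i = j then 1 else 0)
  else if j < l then
    (if i ≤ 1 then X ^ (j - 1)
     else if i ≤ j then (1 + X ^ (2 * (i - 1))) * X ^ (j - i)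
     else 0)
  else
    (if i ≤ 1 then (1 + X ^ 2) * X ^ (l - 1)
     else if i ≤ l - 2 then (1 + X ^ 2) * (1 + X ^ (2 * (i - 1))) * X ^ (l - i)
     else if i = l - 1 then (1 + X ^ (2 * (l - 3))) * X ^ 3
     else X * (1 + X ^ (2 * (l - 1))))

noncomputable def Vmat (l : ℕ) : Matrix (Fin (l + 1)) (Fin (l + 1)) (Polynomial ℤ) :=
  fun i j => vE l i j

noncomputable def dN (l k : ℕ) : Polynomial ℤ :=
  if k ≤ 1 then 1 + X ^ 2
  else if k < l then 1 + X ^ (2 * k)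
  else (1 + X ^ 2) * X * ((1 + X ^ (2 * (l - 1))) - X ^ 2 * (1 + X ^ (2 * (l - 3))))

section vElemmas
variable {l i j : ℕ}

lemma vE_01 (hj : j ≤ 1) : vE l i j = if i = j then 1 else 0 := by
  unfold vE; rw [if_pos hj]

lemma vE_leaf (h2 : 2 ≤ j) (hjl : j < l) (hi : i ≤ 1) : vE l i j = X ^ (j - 1) := by
  unfold vE; rw [if_neg (by omega), if_pos hjl, if_pos hi]

lemma vE_chain (h2 : 2 ≤ i) (hij : i ≤ j) (hjl : j < l) :
    vE l i j = (1 + X ^ (2 * (i - 1))) * X ^ (j - i) := by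
  unfold vE; rw [if_neg (by omega), if_pos hjl, if_neg (by omega), if_pos hij]

lemma vE_zero (h2 : 2 ≤ j) (hjl : j < l) (hji : j < i) : vE l i j = 0 := by
  unfold vE; rw [if_neg (by omega), if_pos hjl, if_neg (by omega), if_neg (by omega)]

lemma vE_l_leaf (hl : 4 ≤ l) (hi : i ≤ 1) : vE l i l = (1 + X ^ 2) * X ^ (l - 1) := by
  unfold vE; rw [if_neg (by omega), if_neg (by omega), if_pos hi]

lemma vE_l_chain (hl : 4 ≤ l) (h2 : 2 ≤ i) (hi : i ≤ l - 2) :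
    vE l i l = (1 + X ^ 2) * (1 + X ^ (2 * (i - 1))) * X ^ (l - i) := by
  unfold vE; rw [if_neg (by omega), if_neg (by omega), if_neg (by omega), if_pos hi]

lemma vE_l_1 (hl : 4 ≤ l) : vE l (l - 1) l = (1 + X ^ (2 * (l - 3))) * X ^ 3 := by
  unfold vE
  rw [if_neg (by omega), if_neg (by omega), if_neg (by omega), if_neg (by omega),
    if_pos rfl]

lemma vE_l_l (hl : 4 ≤ l) : vE l l l = X * (1 + X ^ (2 * (l - 1))) := by
  unfold vE
  rw [if_neg (by omega), if_neg (by omega), if_neg (by omega), if_neg (by omega),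
    if_neg (by omega)]

end vElemmas

lemma qA_apply (l : ℕ) (hl : 4 ≤ l) (i k : Fin (l + 1)) :
    quantumAffineD l i k =
      if (i : ℕ) = (k : ℕ) then 1 + X ^ 2
      else if affineDAdj l (i : ℕ) (k : ℕ) then -X else 0 := by
  have hself : ¬ affineDAdj l (i : ℕ) (i : ℕ) := by unfold affineDAdj; omega
  simp only [quantumAffineD, Matrix.add_apply, Matrix.smul_apply, Matrix.map_apply,
    Matrix.one_apply, affineDCartanMatrix, smul_eq_mul]
  by_cases h : i = k
  · subst h
    rw [if_pos rfl, if_pos rfl, if_pos rfl, if_neg hself]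
    push_cast
    ring
  · have h' : ¬((i : ℕ) = (k : ℕ)) := by simpa [Fin.ext_iff] using h
    rw [if_neg h, if_neg h, if_neg h']
    by_cases ha : affineDAdj l (i : ℕ) (k : ℕ)
    · rw [if_pos ha, if_pos ha]
      push_cast
      ring
    · rw [if_neg ha, if_neg ha]
      push_cast
      ring

lemma sum_nbrs {S : Type*} [CommRing S] (n i : ℕ) (c x : S) (f : ℕ → S)
    (P : ℕ → Prop) [DecidablePred P] (t : Finset ℕ)
    (hin : i < n) (ht : ∀ k ∈ t, k < n) (hit : i ∉ t)
    (hchar : ∀ k, k < n → (P k ↔ k ∈ t)) :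
    ∑ k ∈ range n, (if i = k then c else if P k then x else 0) * f k
      = c * f i + x * ∑ k ∈ t, f k := by
  have H : ∀ k ∈ range n, (if i = k then c else if P k then x else 0) * f k
      = (if k = i then c * f k else 0) + (if k ∈ t then x * f k else 0) := by
    intro k hk; rw [mem_range] at hk
    by_cases h1 : k = i
    · subst h1; rw [if_pos rfl, if_pos rfl, if_neg hit]; ring
    · rw [if_neg (fun h => h1 h.symm), if_neg h1]
      by_cases h2 : k ∈ t
      · rw [if_pos ((hchar k hk).mpr h2), if_pos h2]; ring
      · rw [if_neg (fun hp => h2 ((hchar k hk).mp hp)), if_neg h2]; ring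
  rw [Finset.sum_congr rfl H, Finset.sum_add_distrib,
    Finset.sum_ite_eq' (range n) i (fun k => c * f k), if_pos (mem_range.mpr hin),
    Finset.sum_ite_mem (range n) t (fun k => x * f k),
    Finset.inter_eq_right.mpr (fun k hk => mem_range.mpr (ht k hk)), Finset.mul_sum]

lemma mulV_apply (l : ℕ) (hl : 4 ≤ l) (i j : Fin (l + 1)) (t : Finset ℕ)
    (ht : ∀ k ∈ t, k < l + 1) (hit : (i : ℕ) ∉ t)
    (hchar : ∀ k, k < l + 1 → (affineDAdj l (i : ℕ) k ↔ k ∈ t)) :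
    (quantumAffineD l * Vmat l) i j
      = (1 + X ^ 2) * vE l (i : ℕ) (j : ℕ) + (-X) * ∑ k ∈ t, vE l k (j : ℕ) := by
  rw [Matrix.mul_apply]
  have h1 : ∀ k : Fin (l + 1), quantumAffineD l i k * Vmat l k j
      = (fun k : ℕ => (if (i : ℕ) = k then (1 + X ^ 2 : Polynomial ℤ)
          else if affineDAdj l (i : ℕ) k then -X else 0) * vE l k (j : ℕ)) (k : ℕ) := by
    intro k; rw [qA_apply l hl]; rfl
  rw [Finset.sum_congr rfl (fun k _ => h1 k),
    Fin.sum_univ_eq_sum_range (fun k : ℕ => (if (i : ℕ) = k then (1 + X ^ 2 : Polynomial ℤ)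
          else if affineDAdj l (i : ℕ) k then -X else 0) * vE l k (j : ℕ)) (l + 1),
    sum_nbrs (l + 1) (i : ℕ) (1 + X ^ 2) (-X) (fun k => vE l k (j : ℕ))
      (fun k => affineDAdj l (i : ℕ) k) t i.isLt ht hit hchar]

lemma MV_zero (l : ℕ) (hl : 4 ≤ l) (i j : Fin (l + 1)) (hij : i < j) :
    (quantumAffineD l * Vmat l) i j = 0 := by
  have hjl : (j : ℕ) < l + 1 := j.isLt
  have hij' : (i : ℕ) < (j : ℕ) := hij
  rcases (by omega : (i : ℕ) = 0 ∨ (i : ℕ) = 1 ∨ ((i : ℕ) = 2 ∧ l = 4) ∨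
      ((i : ℕ) = 2 ∧ 5 ≤ l) ∨ (3 ≤ (i : ℕ) ∧ (i : ℕ) ≤ l - 3) ∨
      ((i : ℕ) = l - 2 ∧ 5 ≤ l) ∨ (i : ℕ) = l - 1) with
    h0 | h1 | ⟨h2, h4⟩ | ⟨h2, h5⟩ | ⟨h3, h3'⟩ | ⟨hm2, h5⟩ | hm1
  · -- i = 0
    rw [mulV_apply l hl i j {2}
      (by intro k hk; simp only [Finset.mem_singleton] at hk; omega)
      (by simp only [Finset.mem_singleton]; omega)
      (by intro k hk; rw [h0]; simp only [Finset.mem_singleton]; unfold affineDAdj; omega),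
      Finset.sum_singleton, h0]
    rcases (by omega : (j : ℕ) = 1 ∨ (2 ≤ (j : ℕ) ∧ (j : ℕ) < l) ∨ (j : ℕ) = l) with
      hj1 | ⟨hj2, hjlt⟩ | hjl'
    · rw [hj1, vE_01 (by omega), vE_01 (by omega)]; norm_num
    · rw [vE_leaf hj2 hjlt (by omega), vE_chain (by omega) (by omega) hjlt]
      obtain ⟨e, he⟩ : ∃ e, (j : ℕ) = e + 2 := ⟨(j : ℕ) - 2, by omega⟩
      rw [show (j : ℕ) - 1 = e + 1 by omega, show (j : ℕ) - 2 = e by omega,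
        show 2 * (2 - 1) = 2 by norm_num]
      ring
    · rw [hjl', vE_l_leaf hl (by omega), vE_l_chain hl (by omega) (by omega)]
      obtain ⟨m, hm⟩ : ∃ m, l = m + 4 := ⟨l - 4, by omega⟩
      rw [show l - 1 = m + 3 by omega, show l - 2 = m + 2 by omega,
        show 2 * (2 - 1) = 2 by norm_num]
      ring
  · -- i = 1
    rw [mulV_apply l hl i j {2}
      (by intro k hk; simp only [Finset.mem_singleton] at hk; omega)
      (by simp only [Finset.mem_singleton]; omega)
      (by intro k hk; rw [h1]; simp only [Finset.mem_singleton]; unfold affineDAdj; omega),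
      Finset.sum_singleton, h1]
    rcases (by omega : (2 ≤ (j : ℕ) ∧ (j : ℕ) < l) ∨ (j : ℕ) = l) with ⟨hj2, hjlt⟩ | hjl'
    · rw [vE_leaf hj2 hjlt (by omega), vE_chain (by omega) (by omega) hjlt]
      obtain ⟨e, he⟩ : ∃ e, (j : ℕ) = e + 2 := ⟨(j : ℕ) - 2, by omega⟩
      rw [show (j : ℕ) - 1 = e + 1 by omega, show (j : ℕ) - 2 = e by omega,
        show 2 * (2 - 1) = 2 by norm_num]
      ring
    · rw [hjl', vE_l_leaf hl (by omega), vE_l_chain hl (by omega) (by omega)]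
      obtain ⟨m, hm⟩ : ∃ m, l = m + 4 := ⟨l - 4, by omega⟩
      rw [show l - 1 = m + 3 by omega, show l - 2 = m + 2 by omega,
        show 2 * (2 - 1) = 2 by norm_num]
      ring
  · -- i = 2, l = 4
    subst h4
    rw [mulV_apply 4 hl i j {0, 1, 3, 4}
      (by intro k hk; simp only [Finset.mem_insert, Finset.mem_singleton] at hk; omega)
      (by simp only [Finset.mem_insert, Finset.mem_singleton]; omega)
      (by intro k hk; rw [h2]; simp only [Finset.mem_insert, Finset.mem_singleton];
          unfold affineDAdj; omega),
      Finset.sum_insert (by decide), Finset.sum_insert (by decide),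
      Finset.sum_insert (by decide), Finset.sum_singleton, h2]
    rcases (by omega : (j : ℕ) = 3 ∨ (j : ℕ) = 4) with hj3 | hj4
    · rw [hj3, vE_chain (by omega) (by omega) (by omega),
        vE_leaf (by omega) (by omega) (by omega), vE_leaf (by omega) (by omega) (by omega),
        vE_chain (by omega) (by omega) (by omega), vE_zero (by omega) (by omega) (by omega)]
      norm_num
      ring
    · have e2 : vE 4 2 4 = (1 + X ^ 2) * (1 + X ^ 2) * X ^ 2 := by
        have := vE_l_chain (l := 4) (i := 2) (by norm_num) (by norm_num) (by norm_num)
        simpa using this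
      have e0 : vE 4 0 4 = (1 + X ^ 2) * X ^ 3 := by
        have := vE_l_leaf (l := 4) (i := 0) (by norm_num) (by norm_num)
        simpa using this
      have e1 : vE 4 1 4 = (1 + X ^ 2) * X ^ 3 := by
        have := vE_l_leaf (l := 4) (i := 1) (by norm_num) (by norm_num)
        simpa using this
      have e3 : vE 4 3 4 = (1 + X ^ 2) * X ^ 3 := by
        have := vE_l_1 (l := 4) (by norm_num)
        simpa using this
      have e4 : vE 4 4 4 = X * (1 + X ^ 6) := by
        have := vE_l_l (l := 4) (by norm_num)
        simpa using this
      rw [hj4, e2, e0, e1, e3, e4]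
      ring
  · -- i = 2, 5 ≤ l
    rw [mulV_apply l hl i j {0, 1, 3}
      (by intro k hk; simp only [Finset.mem_insert, Finset.mem_singleton] at hk; omega)
      (by simp only [Finset.mem_insert, Finset.mem_singleton]; omega)
      (by intro k hk; rw [h2]; simp only [Finset.mem_insert, Finset.mem_singleton];
          unfold affineDAdj; omega),
      Finset.sum_insert (by decide), Finset.sum_insert (by decide),
      Finset.sum_singleton, h2]
    rcases (by omega : (3 ≤ (j : ℕ) ∧ (j : ℕ) < l) ∨ (j : ℕ) = l) with ⟨hj3, hjlt⟩ | hjl'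
    · rw [vE_chain (by omega) (by omega) hjlt, vE_leaf (by omega) hjlt (by omega),
        vE_leaf (by omega) hjlt (by omega), vE_chain (by omega) (by omega) hjlt]
      obtain ⟨e, he⟩ : ∃ e, (j : ℕ) = e + 3 := ⟨(j : ℕ) - 3, by omega⟩
      rw [show (j : ℕ) - 1 = e + 2 by omega, show (j : ℕ) - 2 = e + 1 by omega,
        show (j : ℕ) - 3 = e by omega, show 2 * (2 - 1) = 2 by norm_num,
        show 2 * (3 - 1) = 4 by norm_num]
      ring
    · rw [hjl', vE_l_chain hl (by omega) (by omega), vE_l_leaf hl (by omega),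
        vE_l_leaf hl (by omega), vE_l_chain hl (by omega) (by omega)]
      obtain ⟨m, hm⟩ : ∃ m, l = m + 5 := ⟨l - 5, by omega⟩
      rw [show l - 1 = m + 4 by omega, show l - 2 = m + 3 by omega,
        show l - 3 = m + 2 by omega, show 2 * (2 - 1) = 2 by norm_num,
        show 2 * (3 - 1) = 4 by norm_num]
      ring
  · -- 3 ≤ i ≤ l - 3
    rw [mulV_apply l hl i j {(i : ℕ) - 1, (i : ℕ) + 1}
      (by intro k hk; simp only [Finset.mem_insert, Finset.mem_singleton] at hk; omega)
      (by simp only [Finset.mem_insert, Finset.mem_singleton]; omega)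
      (by intro k hk; simp only [Finset.mem_insert, Finset.mem_singleton];
          unfold affineDAdj; omega),
      Finset.sum_pair (by omega)]
    obtain ⟨m, hm⟩ : ∃ m, (i : ℕ) = m + 3 := ⟨(i : ℕ) - 3, by omega⟩
    rcases (by omega : ((j : ℕ) < l) ∨ (j : ℕ) = l) with hjlt | hjl'
    · rw [vE_chain (by omega) (by omega) hjlt, vE_chain (by omega) (by omega) hjlt,
        vE_chain (by omega) (by omega) hjlt]
      obtain ⟨e, he⟩ : ∃ e, (j : ℕ) = m + 4 + e := ⟨(j : ℕ) - (m + 4), by omega⟩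
      rw [show 2 * ((i : ℕ) - 1) = 2 * m + 4 by omega,
        show (j : ℕ) - (i : ℕ) = e + 1 by omega,
        show 2 * ((i : ℕ) - 1 - 1) = 2 * m + 2 by omega,
        show (j : ℕ) - ((i : ℕ) - 1) = e + 2 by omega,
        show 2 * ((i : ℕ) + 1 - 1) = 2 * m + 6 by omega,
        show (j : ℕ) - ((i : ℕ) + 1) = e by omega]
      ring
    · rw [hjl', vE_l_chain hl (by omega) (by omega), vE_l_chain hl (by omega) (by omega),
        vE_l_chain hl (by omega) (by omega)]
      obtain ⟨e, he⟩ : ∃ e, l = m + 6 + e := ⟨l - (m + 6), by omega⟩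
      rw [show 2 * ((i : ℕ) - 1) = 2 * m + 4 by omega,
        show l - (i : ℕ) = e + 3 by omega,
        show 2 * ((i : ℕ) - 1 - 1) = 2 * m + 2 by omega,
        show l - ((i : ℕ) - 1) = e + 4 by omega,
        show 2 * ((i : ℕ) + 1 - 1) = 2 * m + 6 by omega,
        show l - ((i : ℕ) + 1) = e + 2 by omega]
      ring
  · -- i = l - 2, 5 ≤ l
    rw [mulV_apply l hl i j {l - 3, l - 1, l}
      (by intro k hk; simp only [Finset.mem_insert, Finset.mem_singleton] at hk; omega)
      (by simp only [Finset.mem_insert, Finset.mem_singleton]; omega)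
      (by intro k hk; rw [hm2]; simp only [Finset.mem_insert, Finset.mem_singleton];
          unfold affineDAdj; omega),
      Finset.sum_insert (by simp only [Finset.mem_insert, Finset.mem_singleton]; omega),
      Finset.sum_pair (by omega), hm2]
    obtain ⟨m, hm⟩ : ∃ m, l = m + 5 := ⟨l - 5, by omega⟩
    rcases (by omega : ((j : ℕ) = l - 1) ∨ (j : ℕ) = l) with hj1 | hjl'
    · rw [hj1, vE_chain (by omega) (by omega) (by omega),
        vE_chain (by omega) (by omega) (by omega),
        vE_chain (by omega) (by omega) (by omega),
        vE_zero (by omega) (by omega) (by omega)]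
      rw [show 2 * (l - 2 - 1) = 2 * m + 4 by omega,
        show l - 1 - (l - 2) = 1 by omega,
        show 2 * (l - 3 - 1) = 2 * m + 2 by omega,
        show l - 1 - (l - 3) = 2 by omega,
        show 2 * (l - 1 - 1) = 2 * m + 6 by omega,
        show l - 1 - (l - 1) = 0 by omega]
      ring
    · rw [hjl', vE_l_chain hl (by omega) (by omega),
        vE_l_chain hl (by omega) (by omega), vE_l_1 hl, vE_l_l hl]
      rw [show 2 * (l - 2 - 1) = 2 * m + 4 by omega,
        show l - (l - 2) = 2 by omega,
        show 2 * (l - 3 - 1) = 2 * m + 2 by omega,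
        show l - (l - 3) = 3 by omega,
        show 2 * (l - 3) = 2 * m + 4 by omega,
        show 2 * (l - 1) = 2 * m + 8 by omega]
      ring
  · -- i = l - 1, so j = l
    have hjl' : (j : ℕ) = l := by omega
    rw [mulV_apply l hl i j {l - 2}
      (by intro k hk; simp only [Finset.mem_singleton] at hk; omega)
      (by simp only [Finset.mem_singleton]; omega)
      (by intro k hk; rw [hm1]; simp only [Finset.mem_singleton];
          unfold affineDAdj; omega),
      Finset.sum_singleton, hm1, hjl', vE_l_1 hl, vE_l_chain hl (by omega) (by omega)]
    rw [show 2 * (l - 2 - 1) = 2 * (l - 3) by omega, show l - (l - 2) = 2 by omega]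
    ring

lemma MV_diag (l : ℕ) (hl : 4 ≤ l) (j : Fin (l + 1)) :
    (quantumAffineD l * Vmat l) j j = dN l (j : ℕ) := by
  have hjl : (j : ℕ) < l + 1 := j.isLt
  rcases (by omega : (j : ℕ) = 0 ∨ (j : ℕ) = 1 ∨ ((j : ℕ) = 2 ∧ l = 4) ∨
      ((j : ℕ) = 2 ∧ 5 ≤ l) ∨ (3 ≤ (j : ℕ) ∧ (j : ℕ) ≤ l - 3) ∨
      ((j : ℕ) = l - 2 ∧ 5 ≤ l) ∨ (j : ℕ) = l - 1 ∨ (j : ℕ) = l) with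
    h0 | h1 | ⟨h2, h4⟩ | ⟨h2, h5⟩ | ⟨h3, h3'⟩ | ⟨hm2, h5⟩ | hm1 | hml
  · -- j = 0
    rw [mulV_apply l hl j j {2}
      (by intro k hk; simp only [Finset.mem_singleton] at hk; omega)
      (by simp only [Finset.mem_singleton]; omega)
      (by intro k hk; rw [h0]; simp only [Finset.mem_singleton]; unfold affineDAdj; omega),
      Finset.sum_singleton, h0, vE_01 (by omega), vE_01 (by omega)]
    unfold dN
    rw [if_pos (by omega)]
    norm_num
  · -- j = 1
    rw [mulV_apply l hl j j {2}
      (by intro k hk; simp only [Finset.mem_singleton] at hk; omega)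
      (by simp only [Finset.mem_singleton]; omega)
      (by intro k hk; rw [h1]; simp only [Finset.mem_singleton]; unfold affineDAdj; omega),
      Finset.sum_singleton, h1, vE_01 (by omega), vE_01 (by omega)]
    unfold dN
    rw [if_pos (by omega)]
    norm_num
  · -- j = 2, l = 4
    subst h4
    rw [mulV_apply 4 hl j j {0, 1, 3, 4}
      (by intro k hk; simp only [Finset.mem_insert, Finset.mem_singleton] at hk; omega)
      (by simp only [Finset.mem_insert, Finset.mem_singleton]; omega)
      (by intro k hk; rw [h2]; simp only [Finset.mem_insert, Finset.mem_singleton];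
          unfold affineDAdj; omega),
      Finset.sum_insert (by decide), Finset.sum_insert (by decide),
      Finset.sum_insert (by decide), Finset.sum_singleton, h2,
      vE_chain (by omega) (by omega) (by omega), vE_leaf (by omega) (by omega) (by omega),
      vE_leaf (by omega) (by omega) (by omega), vE_zero (by omega) (by omega) (by omega),
      vE_zero (by omega) (by omega) (by omega)]
    unfold dN
    rw [if_neg (by omega), if_pos (by omega)]
    norm_num
    ring
  · -- j = 2, 5 ≤ l
    rw [mulV_apply l hl j j {0, 1, 3}
      (by intro k hk; simp only [Finset.mem_insert, Finset.mem_singleton] at hk; omega)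
      (by simp only [Finset.mem_insert, Finset.mem_singleton]; omega)
      (by intro k hk; rw [h2]; simp only [Finset.mem_insert, Finset.mem_singleton];
          unfold affineDAdj; omega),
      Finset.sum_insert (by decide), Finset.sum_insert (by decide),
      Finset.sum_singleton, h2,
      vE_chain (by omega) (by omega) (by omega), vE_leaf (by omega) (by omega) (by omega),
      vE_leaf (by omega) (by omega) (by omega), vE_zero (by omega) (by omega) (by omega)]
    unfold dN
    rw [if_neg (by omega), if_pos (by omega)]
    norm_num
    ring
  · -- 3 ≤ j ≤ l - 3
    rw [mulV_apply l hl j j {(j : ℕ) - 1, (j : ℕ) + 1}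
      (by intro k hk; simp only [Finset.mem_insert, Finset.mem_singleton] at hk; omega)
      (by simp only [Finset.mem_insert, Finset.mem_singleton]; omega)
      (by intro k hk; simp only [Finset.mem_insert, Finset.mem_singleton];
          unfold affineDAdj; omega),
      Finset.sum_pair (by omega),
      vE_chain (by omega) (by omega) (by omega),
      vE_chain (by omega) (by omega) (by omega),
      vE_zero (by omega) (by omega) (by omega)]
    unfold dN
    rw [if_neg (by omega), if_pos (by omega)]
    obtain ⟨m, hm⟩ : ∃ m, (j : ℕ) = m + 3 := ⟨(j : ℕ) - 3, by omega⟩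
    rw [show 2 * ((j : ℕ) - 1) = 2 * m + 4 by omega,
      show (j : ℕ) - (j : ℕ) = 0 by omega,
      show 2 * ((j : ℕ) - 1 - 1) = 2 * m + 2 by omega,
      show (j : ℕ) - ((j : ℕ) - 1) = 1 by omega,
      show 2 * (j : ℕ) = 2 * m + 6 by omega]
    ring
  · -- j = l - 2, 5 ≤ l
    rw [mulV_apply l hl j j {l - 3, l - 1, l}
      (by intro k hk; simp only [Finset.mem_insert, Finset.mem_singleton] at hk; omega)
      (by simp only [Finset.mem_insert, Finset.mem_singleton]; omega)
      (by intro k hk; rw [hm2]; simp only [Finset.mem_insert, Finset.mem_singleton];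
          unfold affineDAdj; omega),
      Finset.sum_insert (by simp only [Finset.mem_insert, Finset.mem_singleton]; omega),
      Finset.sum_pair (by omega), hm2,
      vE_chain (by omega) (by omega) (by omega),
      vE_chain (by omega) (by omega) (by omega),
      vE_zero (by omega) (by omega) (by omega),
      vE_zero (by omega) (by omega) (by omega)]
    unfold dN
    rw [if_neg (by omega), if_pos (by omega)]
    obtain ⟨m, hm⟩ : ∃ m, l = m + 5 := ⟨l - 5, by omega⟩
    rw [show 2 * (l - 2 - 1) = 2 * m + 4 by omega,
      show l - 2 - (l - 2) = 0 by omega,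
      show 2 * (l - 3 - 1) = 2 * m + 2 by omega,
      show l - 2 - (l - 3) = 1 by omega,
      show 2 * (l - 2) = 2 * m + 6 by omega]
    ring
  · -- j = l - 1
    rw [mulV_apply l hl j j {l - 2}
      (by intro k hk; simp only [Finset.mem_singleton] at hk; omega)
      (by simp only [Finset.mem_singleton]; omega)
      (by intro k hk; rw [hm1]; simp only [Finset.mem_singleton];
          unfold affineDAdj; omega),
      Finset.sum_singleton, hm1,
      vE_chain (by omega) (by omega) (by omega),
      vE_chain (by omega) (by omega) (by omega)]
    unfold dN
    rw [if_neg (by omega), if_pos (by omega)]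
    obtain ⟨m, hm⟩ : ∃ m, l = m + 4 := ⟨l - 4, by omega⟩
    rw [show 2 * (l - 1 - 1) = 2 * m + 4 by omega,
      show l - 1 - (l - 1) = 0 by omega,
      show 2 * (l - 2 - 1) = 2 * m + 2 by omega,
      show l - 1 - (l - 2) = 1 by omega,
      show 2 * (l - 1) = 2 * m + 6 by omega]
    ring
  · -- j = l
    rw [mulV_apply l hl j j {l - 2}
      (by intro k hk; simp only [Finset.mem_singleton] at hk; omega)
      (by simp only [Finset.mem_singleton]; omega)
      (by intro k hk; rw [hml]; simp only [Finset.mem_singleton];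
          unfold affineDAdj; omega),
      Finset.sum_singleton, hml, vE_l_l hl, vE_l_chain hl (by omega) (by omega)]
    unfold dN
    rw [if_neg (by omega), if_neg (by omega)]
    rw [show 2 * (l - 2 - 1) = 2 * (l - 3) by omega, show l - (l - 2) = 2 by omega]
    ring

lemma one_add_X_pow_ne (n : ℕ) : (1 + X ^ n : Polynomial ℤ) ≠ 0 := by
  intro h
  have h2 := congrArg (fun p : Polynomial ℤ => p.eval 1) h
  simp only [eval_add, eval_one, eval_pow, eval_X, one_pow, eval_zero] at h2
  norm_num at h2


/-- `det C_aff(t) = (1-t^{2(l-2)})(1-t⁴)(1-t⁴)/(1-t²)` for type Dₗ, `l ≥ 4`,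
stated multiplicatively in `ℤ[t]`. -/
theorem det_quantumAffineD (l : ℕ) (hl : 4 ≤ l) :
    (quantumAffineD l).det * (1 - X ^ 2) =
      (1 - X ^ (2 * (l - 2))) * (1 - X ^ 4) * (1 - X ^ 4) := by
  set S : Polynomial ℤ := ∏ k ∈ range (l - 3), (1 + X ^ (2 * (k + 2))) with hS
  -- upper triangularity of V
  have hV : (Vmat l).BlockTriangular id := by
    intro i j h
    have hji : (j : ℕ) < (i : ℕ) := h
    show vE l (i : ℕ) (j : ℕ) = 0
    rcases (by omega : (j : ℕ) ≤ 1 ∨ (2 ≤ (j : ℕ) ∧ (j : ℕ) < l)) with hj1 | ⟨hj2, hjlt⟩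
    · rw [vE_01 hj1, if_neg (by omega)]
    · exact vE_zero hj2 hjlt hji
  -- lower triangularity of M * V
  have hMV : (quantumAffineD l * Vmat l).BlockTriangular OrderDual.toDual := by
    intro i j h
    exact MV_zero l hl i j (by simpa using h)
  -- the determinant identity from triangularity
  have hVdet : (Vmat l).det = ∏ k ∈ range (l + 1), vE l k k := by
    rw [Matrix.det_of_upperTriangular hV,
      ← Fin.prod_univ_eq_prod_range (fun k => vE l k k) (l + 1)]
    rfl
  have hdet : (quantumAffineD l).det * (∏ k ∈ range (l + 1), vE l k k)
      = ∏ k ∈ range (l + 1), dN l k := by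
    rw [← hVdet, ← Matrix.det_mul, Matrix.det_of_lowerTriangular _ hMV,
      Finset.prod_congr rfl (fun k _ => MV_diag l hl k),
      Fin.prod_univ_eq_prod_range (fun k => dN l k) (l + 1)]
  -- compute the product of the V diagonal
  have hPV : ∏ k ∈ range (l + 1), vE l k k
      = (1 + X ^ 2) * S * (X * (1 + X ^ (2 * (l - 1)))) := by
    have e1 : ∏ k ∈ Finset.Ico 2 l, vE l k k
        = ∏ k ∈ Finset.Ico 2 l, (1 + X ^ (2 * (k - 1))) :=
      Finset.prod_congr rfl (fun k hk => by
        rw [Finset.mem_Ico] at hk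
        rw [vE_chain (by omega) (by omega) (by omega), Nat.sub_self, pow_zero, mul_one])
    have e2 : ∏ k ∈ range (l - 2), (1 + X ^ (2 * (2 + k - 1)) : Polynomial ℤ)
        = ∏ k ∈ range (l - 2), (1 + X ^ (2 * (k + 1))) :=
      Finset.prod_congr rfl (fun k _ => by rw [show 2 * (2 + k - 1) = 2 * (k + 1) by omega])
    have e3 := Finset.prod_range_succ' (fun k => (1 + X ^ (2 * (k + 1)) : Polynomial ℤ)) (l - 3)
    have e4 : ∏ k ∈ range (l - 3), (1 + X ^ (2 * (k + 1 + 1)) : Polynomial ℤ)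
        = ∏ k ∈ range (l - 3), (1 + X ^ (2 * (k + 2))) :=
      Finset.prod_congr rfl (fun k _ => by rw [show 2 * (k + 1 + 1) = 2 * (k + 2) by omega])
    rw [Finset.prod_range_succ, vE_l_l hl, Finset.range_eq_Ico,
      Finset.prod_eq_prod_Ico_succ_bot (by omega : 0 < l),
      Finset.prod_eq_prod_Ico_succ_bot (by omega : 1 < l),
      show vE l 0 0 = 1 by rw [vE_01 (by omega)]; norm_num,
      show vE l 1 1 = 1 by rw [vE_01 (by omega)]; norm_num,
      e1, Finset.prod_Ico_eq_prod_range, e2, show l - 2 = (l - 3) + 1 by omega,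
      e3, e4, ← hS]
    ring
  -- compute the product of the N diagonal
  have hPN : ∏ k ∈ range (l + 1), dN l k
      = (1 + X ^ 2) * (1 + X ^ 2) * (S * (1 + X ^ (2 * (l - 1))))
        * ((1 + X ^ 2) * X * ((1 + X ^ (2 * (l - 1))) - X ^ 2 * (1 + X ^ (2 * (l - 3))))) := by
    have e1 : ∏ k ∈ Finset.Ico 2 l, dN l k
        = ∏ k ∈ Finset.Ico 2 l, (1 + X ^ (2 * k)) :=
      Finset.prod_congr rfl (fun k hk => by
        rw [Finset.mem_Ico] at hk
        unfold dN; rw [if_neg (by omega), if_pos (by omega)])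
    have e2 : ∏ k ∈ range (l - 2), (1 + X ^ (2 * (2 + k)) : Polynomial ℤ)
        = ∏ k ∈ range (l - 2), (1 + X ^ (2 * (k + 2))) :=
      Finset.prod_congr rfl (fun k _ => by rw [show 2 * (2 + k) = 2 * (k + 2) by omega])
    have e3 := Finset.prod_range_succ (fun k => (1 + X ^ (2 * (k + 2)) : Polynomial ℤ)) (l - 3)
    rw [Finset.prod_range_succ,
      show dN l l = (1 + X ^ 2) * X
          * ((1 + X ^ (2 * (l - 1))) - X ^ 2 * (1 + X ^ (2 * (l - 3)))) by
        unfold dN; rw [if_neg (by omega), if_neg (by omega)],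
      Finset.range_eq_Ico, Finset.prod_eq_prod_Ico_succ_bot (by omega : 0 < l),
      Finset.prod_eq_prod_Ico_succ_bot (by omega : 1 < l),
      show dN l 0 = 1 + X ^ 2 by unfold dN; rw [if_pos (by omega)],
      show dN l 1 = 1 + X ^ 2 by unfold dN; rw [if_pos (by omega)],
      e1, Finset.prod_Ico_eq_prod_range, e2, show l - 2 = (l - 3) + 1 by omega,
      e3, show 2 * ((l - 3) + 2) = 2 * (l - 1) by omega, ← hS]
    ring
  have hSne : S ≠ 0 :=
    Finset.prod_ne_zero_iff.mpr (fun k _ => one_add_X_pow_ne _)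
  have hCne : (1 + X ^ 2 : Polynomial ℤ) * S * (X * (1 + X ^ (2 * (l - 1)))) ≠ 0 :=
    mul_ne_zero (mul_ne_zero (one_add_X_pow_ne 2) hSne)
      (mul_ne_zero X_ne_zero (one_add_X_pow_ne _))
  apply mul_left_cancel₀ hCne
  have key : (quantumAffineD l).det * ((1 + X ^ 2) * S * (X * (1 + X ^ (2 * (l - 1)))))
      = (1 + X ^ 2) * (1 + X ^ 2) * (S * (1 + X ^ (2 * (l - 1))))
        * ((1 + X ^ 2) * X * ((1 + X ^ (2 * (l - 1))) - X ^ 2 * (1 + X ^ (2 * (l - 3))))) := by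
    rw [← hPV, hdet, hPN]
  calc (1 + X ^ 2) * S * (X * (1 + X ^ (2 * (l - 1))))
      * ((quantumAffineD l).det * (1 - X ^ 2))
      = ((quantumAffineD l).det * ((1 + X ^ 2) * S * (X * (1 + X ^ (2 * (l - 1))))))
        * (1 - X ^ 2) := by ring
    _ = (1 + X ^ 2) * (1 + X ^ 2) * (S * (1 + X ^ (2 * (l - 1))))
        * ((1 + X ^ 2) * X * ((1 + X ^ (2 * (l - 1))) - X ^ 2 * (1 + X ^ (2 * (l - 3)))))
        * (1 - X ^ 2) := by rw [key]
    _ = (1 + X ^ 2) * S * (X * (1 + X ^ (2 * (l - 1))))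
        * ((1 - X ^ (2 * (l - 2))) * (1 - X ^ 4) * (1 - X ^ 4)) := by
        rw [show 2 * (l - 1) = 2 * (l - 3) + 4 by omega,
          show 2 * (l - 2) = 2 * (l - 3) + 2 by omega]
        ring
end

section
/- The binary icosahedral group ⟨α,β,γ | α⁵ = β³ = γ² = αβγ⟩ is isomorphic to SL₂(F₅), via α ↦ [[-1,-1],[0,-1]], β ↦ [[1,1],[-1,0]], γ ↦ [[0,-1],[1,0]]. -/
set_option maxRecDepth 10000

/-- The relators of the binary polyhedral presentation
`⟨α,β,γ ∣ αᵖ = β^q = γʳ = αβγ⟩`. -/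
def binaryPolyhedralRels (p q r : ℕ) : Set (FreeGroup (Fin 3)) :=
  { FreeGroup.of 0 ^ p * (FreeGroup.of 0 * FreeGroup.of 1 * FreeGroup.of 2)⁻¹,
    FreeGroup.of 1 ^ q * (FreeGroup.of 0 * FreeGroup.of 1 * FreeGroup.of 2)⁻¹,
    FreeGroup.of 2 ^ r * (FreeGroup.of 0 * FreeGroup.of 1 * FreeGroup.of 2)⁻¹ }

/-- The binary icosahedral group `⟨α,β,γ ∣ α⁵ = β³ = γ² = αβγ⟩`. -/
def BinaryIcosahedralGroup : Type := PresentedGroup (binaryPolyhedralRels 5 3 2)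

instance : Group BinaryIcosahedralGroup :=
  inferInstanceAs (Group (PresentedGroup (binaryPolyhedralRels 5 3 2)))

namespace BinIcoProof
abbrev P := PresentedGroup (binaryPolyhedralRels 5 3 2)
local notation "a" => (PresentedGroup.of (0 : Fin 3) : P)
local notation "b" => (PresentedGroup.of (1 : Fin 3) : P)
local notation "c" => (PresentedGroup.of (2 : Fin 3) : P)

theorem relmk (r : FreeGroup (Fin 3)) (hr : r ∈ binaryPolyhedralRels 5 3 2) :
    PresentedGroup.mk (binaryPolyhedralRels 5 3 2) r = 1 :=
  (QuotientGroup.eq_one_iff r).mpr (Subgroup.subset_normalClosure hr)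

theorem hra : a ^ 5 = a * b * c := by
  have h := relmk _ (Set.mem_insert _ _)
  simp only [map_mul, map_pow, map_inv, mul_inv_eq_one] at h
  exact h

theorem hrb : b ^ 3 = a * b * c := by
  have h := relmk _ (Set.mem_insert_of_mem _ (Set.mem_insert _ _))
  simp only [map_mul, map_pow, map_inv, mul_inv_eq_one] at h
  exact h

theorem hrc : c ^ 2 = a * b * c := by
  have h := relmk _ (Set.mem_insert_of_mem _ (Set.mem_insert_of_mem _ rfl))
  simp only [map_mul, map_pow, map_inv, mul_inv_eq_one] at h
  exact h

theorem ha' : a * (a * (a * (a * a))) = a * (b * c) := by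
  have h := hra
  rw [pow_succ, pow_succ, pow_succ, pow_succ, pow_one] at h
  simpa only [mul_assoc] using h

theorem hb' : b * (b * b) = a * (b * c) := by
  have h := hrb
  rw [pow_succ, pow_succ, pow_one] at h
  simpa only [mul_assoc] using h

theorem hc' : c * c = a * (b * c) := by
  have h := hrc
  rw [pow_succ, pow_one] at h
  simpa only [mul_assoc] using h

theorem EQA (x : P) : x * (a * (a * (a * (a * a)))) = x * (a * (b * c)) := by rw [ha']
theorem EQB (x : P) : x * (b * (b * b)) = x * (a * (b * c)) := by rw [hb']
theorem EQC (x : P) : x * (c * c) = x * (a * (b * c)) := by rw [hc']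

theorem estep {x y : P} (s w : P) (h : x * s = y) : x * (s * w) = y * w := by
  rw [← mul_assoc, h]

theorem hD : (c : P) = a * b :=
  mul_right_cancel (hc'.trans (mul_assoc a b c).symm)

theorem EQD (x : P) : x * c = x * (a * b) := by rw [hD]

theorem hE : (a : P) * (a * (a * a)) = b * c := mul_left_cancel ha'

theorem EQE (x : P) : x * (a * (a * (a * a))) = x * (b * c) := by rw [hE]

theorem hF : (b : P) * (b * b) = c * c := hb'.trans hc'.symm
theorem hG : (a : P) * (a * (a * (a * a))) = c * c := ha'.trans hc'.symm
theorem hH : (a : P) * (a * (a * (a * a))) = b * (b * b) := ha'.trans hb'.symm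

theorem EQF (x : P) : x * (b * (b * b)) = x * (c * c) := by rw [hF]
theorem EQG (x : P) : x * (a * (a * (a * (a * a)))) = x * (c * c) := by rw [hG]
theorem EQH (x : P) : x * (a * (a * (a * (a * a)))) = x * (b * (b * b)) := by rw [hH]

theorem comm_ca : (c : P) * (c * a) = a * (c * c) := by
  rw [show (c : P) * (c * a) = (c * c) * a from by simp only [mul_assoc]]
  rw [← hG]
  simp only [mul_assoc]

theorem EQCA (x : P) : x * (c * (c * a)) = x * (a * (c * c)) := by rw [comm_ca]

theorem comm_cb : (c : P) * (c * b) = b * (c * c) := by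
  rw [show (c : P) * (c * b) = (c * c) * b from by simp only [mul_assoc]]
  rw [← hF]
  simp only [mul_assoc]

theorem EQCB (x : P) : x * (c * (c * b)) = x * (b * (c * c)) := by rw [comm_cb]

def p0 : P := 1
def p1 : P := a
def p2 : P := b
def p3 : P := c
def p4 : P := a * a
def p5 : P := a * c
def p6 : P := b * a
def p7 : P := b * b
def p8 : P := b * c
def p9 : P := c * b
def p10 : P := c * c
def p11 : P := a * a * a
def p12 : P := a * a * c
def p13 : P := a * c * b
def p14 : P := a * c * c
def p15 : P := b * a * a
def p16 : P := b * a * c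
def p17 : P := b * b * a
def p18 : P := b * b * c
def p19 : P := b * c * b
def p20 : P := b * c * c
def p21 : P := c * b * a
def p22 : P := c * b * c
def p23 : P := c * c * c
def p24 : P := a * a * c * b
def p25 : P := a * a * c * c
def p26 : P := a * c * b * a
def p27 : P := a * c * b * c
def p28 : P := a * c * c * c
def p29 : P := b * a * a * a
def p30 : P := b * a * a * c
def p31 : P := b * a * c * b
def p32 : P := b * a * c * c
def p33 : P := b * b * a * a
def p34 : P := b * b * a * c
def p35 : P := b * b * c * b
def p36 : P := b * b * c * c
def p37 : P := b * c * b * c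
def p38 : P := b * c * c * c
def p39 : P := c * b * a * a
def p40 : P := c * b * a * c
def p41 : P := c * b * c * b
def p42 : P := c * b * c * c
def p43 : P := a * a * c * b * a
def p44 : P := a * a * c * b * c
def p45 : P := a * a * c * c * c
def p46 : P := a * c * b * a * a
def p47 : P := a * c * b * a * c
def p48 : P := a * c * b * c * b
def p49 : P := a * c * b * c * c
def p50 : P := b * a * a * c * b
def p51 : P := b * a * a * c * c
def p52 : P := b * a * c * b * a
def p53 : P := b * a * c * b * c
def p54 : P := b * a * c * c * c
def p55 : P := b * b * a * c * b
def p56 : P := b * b * a * c * c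
def p57 : P := b * b * c * b * c
def p58 : P := b * b * c * c * c
def p59 : P := b * c * b * c * c
def p60 : P := c * b * a * c * b
def p61 : P := c * b * a * c * c
def p62 : P := c * b * c * b * c
def p63 : P := c * b * c * c * c
def p64 : P := a * a * c * b * a * c
def p65 : P := a * a * c * b * c * b
def p66 : P := a * a * c * b * c * c
def p67 : P := a * c * b * a * c * b
def p68 : P := a * c * b * a * c * c
def p69 : P := a * c * b * c * b * c
def p70 : P := a * c * b * c * c * c
def p71 : P := b * a * a * c * b * a
def p72 : P := b * a * a * c * b * c
def p73 : P := b * a * a * c * c * c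
def p74 : P := b * a * c * b * a * a
def p75 : P := b * a * c * b * a * c
def p76 : P := b * a * c * b * c * c
def p77 : P := b * b * a * c * b * a
def p78 : P := b * b * a * c * b * c
def p79 : P := b * b * a * c * c * c
def p80 : P := b * b * c * b * c * c
def p81 : P := c * b * a * c * b * a
def p82 : P := c * b * a * c * b * c
def p83 : P := c * b * a * c * c * c
def p84 : P := c * b * c * b * c * c
def p85 : P := a * a * c * b * a * c * b
def p86 : P := a * a * c * b * a * c * c
def p87 : P := a * a * c * b * c * b * c
def p88 : P := a * a * c * b * c * c * c
def p89 : P := a * c * b * a * c * b * a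
def p90 : P := a * c * b * a * c * b * c
def p91 : P := a * c * b * a * c * c * c
def p92 : P := a * c * b * c * b * c * c
def p93 : P := b * a * a * c * b * a * c
def p94 : P := b * a * a * c * b * c * b
def p95 : P := b * a * a * c * b * c * c
def p96 : P := b * a * c * b * a * c * b
def p97 : P := b * a * c * b * c * c * c
def p98 : P := b * b * a * c * b * a * c
def p99 : P := b * b * a * c * b * c * c
def p100 : P := c * b * a * c * b * a * c
def p101 : P := c * b * a * c * b * c * c
def p102 : P := a * a * c * b * a * c * b * a
def p103 : P := a * a * c * b * a * c * b * c
def p104 : P := a * a * c * b * a * c * c * c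
def p105 : P := a * a * c * b * c * b * c * c
def p106 : P := a * c * b * a * c * b * a * c
def p107 : P := a * c * b * a * c * b * c * c
def p108 : P := b * a * a * c * b * a * c * b
def p109 : P := b * a * a * c * b * a * c * c
def p110 : P := b * a * a * c * b * c * c * c
def p111 : P := b * a * c * b * a * c * b * a
def p112 : P := b * b * a * c * b * a * c * b
def p113 : P := b * b * a * c * b * c * c * c
def p114 : P := c * b * a * c * b * a * c * b
def p115 : P := c * b * a * c * b * c * c * c
def p116 : P := a * a * c * b * a * c * b * a * c
def p117 : P := a * c * b * a * c * b * c * c * c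
def p118 : P := b * a * a * c * b * a * c * b * c
def p119 : P := b * a * a * c * b * a * c * c * c

theorem E_55_2 : p55 * c = p78 := rfl
theorem E_4_0 : p4 * a = p11 := rfl
theorem E_34_1 : p34 * b = p55 := rfl
theorem E_5_1 : p5 * b = p13 := rfl
theorem E_42_2 : p42 * c = p63 := rfl
theorem E_85_0 : p85 * a = p102 := rfl
theorem E_108_2 : p108 * c = p118 := rfl
theorem E_2_2 : p2 * c = p8 := rfl
theorem E_57_2 : p57 * c = p80 := rfl
theorem E_68_2 : p68 * c = p91 := rfl
theorem E_6_2 : p6 * c = p16 := rfl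
theorem E_18_1 : p18 * b = p35 := rfl
theorem E_21_0 : p21 * a = p39 := rfl
theorem E_72_2 : p72 * c = p95 := rfl
theorem E_4_2 : p4 * c = p12 := rfl
theorem E_8_2 : p8 * c = p20 := rfl
theorem E_19_2 : p19 * c = p37 := rfl
theorem E_30_2 : p30 * c = p51 := rfl
theorem E_85_2 : p85 * c = p103 := rfl
theorem E_75_1 : p75 * b = p96 := rfl
theorem E_21_2 : p21 * c = p40 := rfl
theorem E_87_2 : p87 * c = p105 := rfl
theorem E_36_2 : p36 * c = p58 := rfl
theorem E_47_2 : p47 * c = p68 := rfl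
theorem E_102_2 : p102 * c = p116 := rfl
theorem E_51_2 : p51 * c = p73 := rfl
theorem E_0_0 : p0 * a = p1 := rfl
theorem E_15_0 : p15 * a = p29 := rfl
theorem E_26_0 : p26 * a = p46 := rfl
theorem E_49_2 : p49 * c = p70 := rfl
theorem E_53_2 : p53 * c = p76 := rfl
theorem E_64_2 : p64 * c = p86 := rfl
theorem E_27_1 : p27 * b = p48 := rfl
theorem E_3_1 : p3 * b = p9 := rfl
theorem E_17_0 : p17 * a = p33 := rfl
theorem E_93_1 : p93 * b = p108 := rfl
theorem E_0_2 : p0 * c = p3 := rfl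
theorem E_66_2 : p66 * c = p88 := rfl
theorem E_15_2 : p15 * c = p30 := rfl
theorem E_26_2 : p26 * c = p47 := rfl
theorem E_16_1 : p16 * b = p31 := rfl
theorem E_81_2 : p81 * c = p100 := rfl
theorem E_17_2 : p17 * c = p34 := rfl
theorem E_60_0 : p60 * a = p81 := rfl
theorem E_32_2 : p32 * c = p54 := rfl
theorem E_43_2 : p43 * c = p64 := rfl
theorem E_44_1 : p44 * b = p65 := rfl
theorem E_7_0 : p7 * a = p17 := rfl
theorem E_72_1 : p72 * b = p94 := rfl
theorem E_34_2 : p34 * c = p56 := rfl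
theorem E_56_2 : p56 * c = p79 := rfl
theorem E_5_2 : p5 * c = p14 := rfl
theorem E_60_2 : p60 * c = p82 := rfl
theorem E_9_0 : p9 * a = p21 := rfl
theorem E_13_0 : p13 * a = p26 := rfl
theorem E_24_0 : p24 * a = p43 := rfl
theorem E_7_2 : p7 * c = p18 := rfl
theorem E_18_2 : p18 * c = p36 := rfl
theorem E_62_2 : p62 * c = p84 := rfl
theorem E_22_2 : p22 * c = p42 := rfl
theorem E_47_1 : p47 * b = p67 := rfl
theorem E_12_1 : p12 * b = p24 := rfl
theorem E_77_2 : p77 * c = p98 := rfl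
theorem E_9_2 : p9 * c = p22 := rfl
theorem E_52_0 : p52 * a = p74 := rfl
theorem E_96_0 : p96 * a = p111 := rfl
theorem E_1_0 : p1 * a = p4 := rfl
theorem E_13_2 : p13 * c = p27 := rfl
theorem E_24_2 : p24 * c = p44 := rfl
theorem E_35_2 : p35 * c = p57 := rfl
theorem E_90_2 : p90 * c = p107 := rfl
theorem E_101_2 : p101 * c = p115 := rfl
theorem E_64_1 : p64 * b = p85 := rfl
theorem E_40_1 : p40 * b = p60 := rfl
theorem E_37_2 : p37 * c = p59 := rfl
theorem E_41_2 : p41 * c = p62 := rfl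
theorem E_52_2 : p52 * c = p75 := rfl
theorem E_107_2 : p107 * c = p117 := rfl
theorem E_1_2 : p1 * c = p5 := rfl
theorem E_2_1 : p2 * b = p7 := rfl
theorem E_31_0 : p31 * a = p52 := rfl
theorem E_109_2 : p109 * c = p119 := rfl
theorem E_3_2 : p3 * c = p10 := rfl
theorem E_14_2 : p14 * c = p28 := rfl
theorem E_69_2 : p69 * c = p92 := rfl
theorem E_6_0 : p6 * a = p15 := rfl
theorem E_8_1 : p8 * b = p19 := rfl
theorem E_30_1 : p30 * b = p50 := rfl
theorem E_98_1 : p98 * b = p112 := rfl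
theorem E_16_2 : p16 * c = p32 := rfl
theorem E_71_2 : p71 * c = p93 := rfl
theorem E_82_2 : p82 * c = p101 := rfl
theorem E_31_2 : p31 * c = p53 := rfl
theorem E_20_2 : p20 * c = p38 := rfl
theorem E_86_2 : p86 * c = p104 := rfl
theorem E_100_1 : p100 * b = p114 := rfl
theorem E_50_0 : p50 * a = p71 := rfl
theorem E_44_2 : p44 * c = p66 := rfl
theorem E_99_2 : p99 * c = p113 := rfl
theorem E_48_2 : p48 * c = p69 := rfl
theorem E_22_1 : p22 * b = p41 := rfl
theorem E_67_0 : p67 * a = p89 := rfl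
theorem E_50_2 : p50 * c = p72 := rfl
theorem E_61_2 : p61 * c = p83 := rfl
theorem E_10_2 : p10 * c = p23 := rfl
theorem E_0_1 : p0 * b = p2 := rfl
theorem E_65_2 : p65 * c = p87 := rfl
theorem E_76_2 : p76 * c = p97 := rfl
theorem E_12_2 : p12 * c = p25 := rfl
theorem E_55_0 : p55 * a = p77 := rfl
theorem E_67_2 : p67 * c = p90 := rfl
theorem E_78_2 : p78 * c = p99 := rfl
theorem E_89_2 : p89 * c = p106 := rfl
theorem E_27_2 : p27 * c = p49 := rfl
theorem E_93_2 : p93 * c = p109 := rfl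
theorem E_2_0 : p2 * a = p6 := rfl
theorem E_25_2 : p25 * c = p45 := rfl
theorem E_40_2 : p40 * c = p61 := rfl
theorem E_95_2 : p95 * c = p110 := rfl
theorem E_1_1 : p1 * b = p3 := by
  have hmid : p1 * (b * (c)) = p10 := ((estep a (b * (c)) E_0_0).symm.trans (((EQC p0).symm).trans ((estep c (c) E_0_2).trans (E_3_2))))
  have hsuf : p3 * (c) = p10 := E_3_2
  rw [← mul_assoc] at hmid
  exact mul_right_cancel (hmid.trans hsuf.symm)
theorem E_11_0 : p11 * a = p8 := ((estep a (a) E_4_0).symm.trans ((estep a (a * (a)) E_1_0).symm.trans ((estep a (a * (a * (a))) E_0_0).symm.trans ((EQE p0).trans ((estep b (c) E_0_1).trans (E_2_2))))))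
theorem E_7_1 : p7 * b = p10 := ((estep b (b) E_2_1).symm.trans ((estep b (b * (b)) E_0_1).symm.trans ((EQF p0).trans ((estep c (c) E_0_2).trans (E_3_2)))))
theorem E_8_0 : p8 * a = p10 := ((estep a (a) E_11_0).symm.trans ((estep a (a * (a)) E_4_0).symm.trans ((estep a (a * (a * (a))) E_1_0).symm.trans ((estep a (a * (a * (a * (a)))) E_0_0).symm.trans ((EQG p0).trans ((estep c (c) E_0_2).trans (E_3_2)))))))
theorem E_10_0 : p10 * a = p14 := ((estep c (a) E_3_2).symm.trans ((estep c (c * (a)) E_0_2).symm.trans ((EQCA p0).trans ((estep a (c * (c)) E_0_0).trans ((estep c (c) E_1_2).trans (E_5_2))))))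
theorem E_10_1 : p10 * b = p20 := ((estep c (b) E_3_2).symm.trans ((estep c (c * (b)) E_0_2).symm.trans ((EQCB p0).trans ((estep b (c * (c)) E_0_1).trans ((estep c (c) E_2_2).trans (E_8_2))))))
theorem E_4_1 : p4 * b = p5 := by
  have hmid : p4 * (b * (c)) = p14 := ((estep a (b * (c)) E_1_0).symm.trans (((EQA p1).symm).trans ((estep a (a * (a * (a * (a)))) E_1_0).trans ((estep a (a * (a * (a))) E_4_0).trans ((estep a (a * (a)) E_11_0).trans ((estep a (a) E_8_0).trans (E_10_0)))))))
  have hsuf : p5 * (c) = p14 := E_5_2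
  rw [← mul_assoc] at hmid
  exact mul_right_cancel (hmid.trans hsuf.symm)
theorem E_9_1 : p9 * b = p14 := ((estep b (b) E_3_1).symm.trans ((estep b (b * (b)) E_1_1).symm.trans ((EQB p1).trans ((estep a (b * (c)) E_1_0).trans ((estep b (c) E_4_1).trans (E_5_2))))))
theorem E_14_0 : p14 * a = p25 := ((estep c (a) E_5_2).symm.trans ((estep c (c * (a)) E_1_2).symm.trans ((EQCA p1).trans ((estep a (c * (c)) E_1_0).trans ((estep c (c) E_4_2).trans (E_12_2))))))
theorem E_14_1 : p14 * b = p23 := ((estep c (b) E_5_2).symm.trans ((estep c (c * (b)) E_1_2).symm.trans ((EQCB p1).trans ((estep b (c * (c)) E_1_1).trans ((estep c (c) E_3_2).trans (E_10_2))))))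
theorem E_6_1 : p6 * b = p8 := by
  have hmid : p6 * (b * (c)) = p20 := ((estep a (b * (c)) E_2_0).symm.trans (((EQB p2).symm).trans ((estep b (b * (b)) E_2_1).trans ((estep b (b) E_7_1).trans (E_10_1)))))
  have hsuf : p8 * (c) = p20 := E_8_2
  rw [← mul_assoc] at hmid
  exact mul_right_cancel (hmid.trans hsuf.symm)
theorem E_29_0 : p29 * a = p18 := ((estep a (a) E_15_0).symm.trans ((estep a (a * (a)) E_6_0).symm.trans ((estep a (a * (a * (a))) E_2_0).symm.trans ((EQE p2).trans ((estep b (c) E_2_1).trans (E_7_2))))))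
theorem E_18_0 : p18 * a = p20 := ((estep a (a) E_29_0).symm.trans ((estep a (a * (a)) E_15_0).symm.trans ((estep a (a * (a * (a))) E_6_0).symm.trans ((estep a (a * (a * (a * (a)))) E_2_0).symm.trans ((EQG p2).trans ((estep c (c) E_2_2).trans (E_8_2)))))))
theorem E_20_0 : p20 * a = p32 := ((estep c (a) E_8_2).symm.trans ((estep c (c * (a)) E_2_2).symm.trans ((EQCA p2).trans ((estep a (c * (c)) E_2_0).trans ((estep c (c) E_6_2).trans (E_16_2))))))
theorem E_20_1 : p20 * b = p36 := ((estep c (b) E_8_2).symm.trans ((estep c (c * (b)) E_2_2).symm.trans ((EQCB p2).trans ((estep b (c * (c)) E_2_1).trans ((estep c (c) E_7_2).trans (E_18_2))))))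
theorem E_3_0 : p3 * a = p7 := by
  have hmid : p3 * (a * (b * (c))) = p23 := (((EQB p3).symm).trans ((estep b (b * (b)) E_3_1).trans ((estep b (b) E_9_1).trans (E_14_1))))
  have hsuf : p7 * (b * (c)) = p23 := (estep b (c) E_7_1).trans (E_10_2)
  rw [← mul_assoc] at hmid
  exact mul_right_cancel (hmid.trans hsuf.symm)
theorem E_33_0 : p33 * a = p22 := ((estep a (a) E_17_0).symm.trans ((estep a (a * (a)) E_7_0).symm.trans ((estep a (a * (a * (a))) E_3_0).symm.trans ((EQE p3).trans ((estep b (c) E_3_1).trans (E_9_2))))))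
theorem E_22_0 : p22 * a = p23 := ((estep a (a) E_33_0).symm.trans ((estep a (a * (a)) E_17_0).symm.trans ((estep a (a * (a * (a))) E_7_0).symm.trans ((estep a (a * (a * (a * (a)))) E_3_0).symm.trans ((EQG p3).trans ((estep c (c) E_3_2).trans (E_10_2)))))))
theorem E_23_0 : p23 * a = p36 := ((estep c (a) E_10_2).symm.trans ((estep c (c * (a)) E_3_2).symm.trans ((EQCA p3).trans ((estep a (c * (c)) E_3_0).trans ((estep c (c) E_7_2).trans (E_18_2))))))
theorem E_23_1 : p23 * b = p42 := ((estep c (b) E_10_2).symm.trans ((estep c (c * (b)) E_3_2).symm.trans ((EQCB p3).trans ((estep b (c * (c)) E_3_1).trans ((estep c (c) E_9_2).trans (E_22_2))))))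
theorem E_11_1 : p11 * b = p12 := by
  have hmid : p11 * (b * (c)) = p25 := ((estep a (b * (c)) E_4_0).symm.trans (((EQA p4).symm).trans ((estep a (a * (a * (a * (a)))) E_4_0).trans ((estep a (a * (a * (a))) E_11_0).trans ((estep a (a * (a)) E_8_0).trans ((estep a (a) E_10_0).trans (E_14_0)))))))
  have hsuf : p12 * (c) = p25 := E_12_2
  rw [← mul_assoc] at hmid
  exact mul_right_cancel (hmid.trans hsuf.symm)
theorem E_13_1 : p13 * b = p25 := ((estep b (b) E_5_1).symm.trans ((estep b (b * (b)) E_4_1).symm.trans ((EQB p4).trans ((estep a (b * (c)) E_4_0).trans ((estep b (c) E_11_1).trans (E_12_2))))))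
theorem E_25_1 : p25 * b = p28 := ((estep c (b) E_12_2).symm.trans ((estep c (c * (b)) E_4_2).symm.trans ((EQCB p4).trans ((estep b (c * (c)) E_4_1).trans ((estep c (c) E_5_2).trans (E_14_2))))))
theorem E_5_0 : p5 * a = p9 := by
  have hmid : p5 * (a * (b * (c))) = p28 := (((EQB p5).symm).trans ((estep b (b * (b)) E_5_1).trans ((estep b (b) E_13_1).trans (E_25_1))))
  have hsuf : p9 * (b * (c)) = p28 := (estep b (c) E_9_1).trans (E_14_2)
  rw [← mul_assoc] at hmid
  exact mul_right_cancel (hmid.trans hsuf.symm)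
theorem E_39_0 : p39 * a = p27 := ((estep a (a) E_21_0).symm.trans ((estep a (a * (a)) E_9_0).symm.trans ((estep a (a * (a * (a))) E_5_0).symm.trans ((EQE p5).trans ((estep b (c) E_5_1).trans (E_13_2))))))
theorem E_27_0 : p27 * a = p28 := ((estep a (a) E_39_0).symm.trans ((estep a (a * (a)) E_21_0).symm.trans ((estep a (a * (a * (a))) E_9_0).symm.trans ((estep a (a * (a * (a * (a)))) E_5_0).symm.trans ((EQG p5).trans ((estep c (c) E_5_2).trans (E_14_2)))))))
theorem E_28_0 : p28 * a = p42 := ((estep c (a) E_14_2).symm.trans ((estep c (c * (a)) E_5_2).symm.trans ((EQCA p5).trans ((estep a (c * (c)) E_5_0).trans ((estep c (c) E_9_2).trans (E_22_2))))))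
theorem E_28_1 : p28 * b = p49 := ((estep c (b) E_14_2).symm.trans ((estep c (c * (b)) E_5_2).symm.trans ((EQCB p5).trans ((estep b (c * (c)) E_5_1).trans ((estep c (c) E_13_2).trans (E_27_2))))))
theorem E_15_1 : p15 * b = p16 := by
  have hmid : p15 * (b * (c)) = p32 := ((estep a (b * (c)) E_6_0).symm.trans (((EQA p6).symm).trans ((estep a (a * (a * (a * (a)))) E_6_0).trans ((estep a (a * (a * (a))) E_15_0).trans ((estep a (a * (a)) E_29_0).trans ((estep a (a) E_18_0).trans (E_20_0)))))))
  have hsuf : p16 * (c) = p32 := E_16_2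
  rw [← mul_assoc] at hmid
  exact mul_right_cancel (hmid.trans hsuf.symm)
theorem E_19_1 : p19 * b = p32 := ((estep b (b) E_8_1).symm.trans ((estep b (b * (b)) E_6_1).symm.trans ((EQB p6).trans ((estep a (b * (c)) E_6_0).trans ((estep b (c) E_15_1).trans (E_16_2))))))
theorem E_32_0 : p32 * a = p51 := ((estep c (a) E_16_2).symm.trans ((estep c (c * (a)) E_6_2).symm.trans ((EQCA p6).trans ((estep a (c * (c)) E_6_0).trans ((estep c (c) E_15_2).trans (E_30_2))))))
theorem E_32_1 : p32 * b = p38 := ((estep c (b) E_16_2).symm.trans ((estep c (c * (b)) E_6_2).symm.trans ((EQCB p6).trans ((estep b (c * (c)) E_6_1).trans ((estep c (c) E_8_2).trans (E_20_2))))))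
theorem E_17_1 : p17 * b = p18 := by
  have hmid : p17 * (b * (c)) = p36 := ((estep a (b * (c)) E_7_0).symm.trans (((EQA p7).symm).trans ((estep a (a * (a * (a * (a)))) E_7_0).trans ((estep a (a * (a * (a))) E_17_0).trans ((estep a (a * (a)) E_33_0).trans ((estep a (a) E_22_0).trans (E_23_0)))))))
  have hsuf : p18 * (c) = p36 := E_18_2
  rw [← mul_assoc] at hmid
  exact mul_right_cancel (hmid.trans hsuf.symm)
theorem E_36_0 : p36 * a = p56 := ((estep c (a) E_18_2).symm.trans ((estep c (c * (a)) E_7_2).symm.trans ((EQCA p7).trans ((estep a (c * (c)) E_7_0).trans ((estep c (c) E_17_2).trans (E_34_2))))))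
theorem E_25_0 : p25 * a = p37 := ((estep a (a) E_14_0).symm.trans ((estep a (a * (a)) E_10_0).symm.trans ((estep a (a * (a * (a))) E_8_0).symm.trans ((EQE p8).trans ((estep b (c) E_8_1).trans (E_19_2))))))
theorem E_37_0 : p37 * a = p38 := ((estep a (a) E_25_0).symm.trans ((estep a (a * (a)) E_14_0).symm.trans ((estep a (a * (a * (a))) E_10_0).symm.trans ((estep a (a * (a * (a * (a)))) E_8_0).symm.trans ((EQG p8).trans ((estep c (c) E_8_2).trans (E_20_2)))))))
theorem E_38_1 : p38 * b = p59 := ((estep c (b) E_20_2).symm.trans ((estep c (c * (b)) E_8_2).symm.trans ((EQCB p8).trans ((estep b (c * (c)) E_8_1).trans ((estep c (c) E_19_2).trans (E_37_2))))))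
theorem E_21_1 : p21 * b = p22 := by
  have hmid : p21 * (b * (c)) = p42 := ((estep a (b * (c)) E_9_0).symm.trans (((EQA p9).symm).trans ((estep a (a * (a * (a * (a)))) E_9_0).trans ((estep a (a * (a * (a))) E_21_0).trans ((estep a (a * (a)) E_39_0).trans ((estep a (a) E_27_0).trans (E_28_0)))))))
  have hsuf : p22 * (c) = p42 := E_22_2
  rw [← mul_assoc] at hmid
  exact mul_right_cancel (hmid.trans hsuf.symm)
theorem E_42_0 : p42 * a = p61 := ((estep c (a) E_22_2).symm.trans ((estep c (c * (a)) E_9_2).symm.trans ((EQCA p9).trans ((estep a (c * (c)) E_9_0).trans ((estep c (c) E_21_2).trans (E_40_2))))))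
theorem E_24_1 : p24 * b = p37 := ((estep b (b) E_12_1).symm.trans ((estep b (b * (b)) E_11_1).symm.trans ((EQB p11).trans ((estep a (b * (c)) E_11_0).trans ((estep b (c) E_8_1).trans (E_19_2))))))
theorem E_11_2 : p11 * c = p19 := by
  have hmid : p11 * (c * (c)) = p37 := ((EQC p11).trans ((estep a (b * (c)) E_11_0).trans ((estep b (c) E_8_1).trans (E_19_2))))
  have hsuf : p19 * (c) = p37 := E_19_2
  rw [← mul_assoc] at hmid
  exact mul_right_cancel (hmid.trans hsuf.symm)
theorem E_37_1 : p37 * b = p45 := ((estep c (b) E_19_2).symm.trans ((estep c (c * (b)) E_11_2).symm.trans ((EQCB p11).trans ((estep b (c * (c)) E_11_1).trans ((estep c (c) E_12_2).trans (E_25_2))))))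
theorem E_12_0 : p12 * a = p13 := by
  have hmid : p12 * (a * (b * (c))) = p45 := (((EQB p12).symm).trans ((estep b (b * (b)) E_12_1).trans ((estep b (b) E_24_1).trans (E_37_1))))
  have hsuf : p13 * (b * (c)) = p45 := (estep b (c) E_13_1).trans (E_25_2)
  rw [← mul_assoc] at hmid
  exact mul_right_cancel (hmid.trans hsuf.symm)
theorem E_46_0 : p46 * a = p44 := ((estep a (a) E_26_0).symm.trans ((estep a (a * (a)) E_13_0).symm.trans ((estep a (a * (a * (a))) E_12_0).symm.trans ((EQE p12).trans ((estep b (c) E_12_1).trans (E_24_2))))))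
theorem E_44_0 : p44 * a = p45 := ((estep a (a) E_46_0).symm.trans ((estep a (a * (a)) E_26_0).symm.trans ((estep a (a * (a * (a))) E_13_0).symm.trans ((estep a (a * (a * (a * (a)))) E_12_0).symm.trans ((EQG p12).trans ((estep c (c) E_12_2).trans (E_25_2)))))))
theorem E_45_0 : p45 * a = p49 := ((estep c (a) E_25_2).symm.trans ((estep c (c * (a)) E_12_2).symm.trans ((EQCA p12).trans ((estep a (c * (c)) E_12_0).trans ((estep c (c) E_13_2).trans (E_27_2))))))
theorem E_45_1 : p45 * b = p66 := ((estep c (b) E_25_2).symm.trans ((estep c (c * (b)) E_12_2).symm.trans ((EQCB p12).trans ((estep b (c * (c)) E_12_1).trans ((estep c (c) E_24_2).trans (E_44_2))))))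
theorem E_26_1 : p26 * b = p27 := by
  have hmid : p26 * (b * (c)) = p49 := ((estep a (b * (c)) E_13_0).symm.trans (((EQA p13).symm).trans ((estep a (a * (a * (a * (a)))) E_13_0).trans ((estep a (a * (a * (a))) E_26_0).trans ((estep a (a * (a)) E_46_0).trans ((estep a (a) E_44_0).trans (E_45_0)))))))
  have hsuf : p27 * (c) = p49 := E_27_2
  rw [← mul_assoc] at hmid
  exact mul_right_cancel (hmid.trans hsuf.symm)
theorem E_49_0 : p49 * a = p68 := ((estep c (a) E_27_2).symm.trans ((estep c (c * (a)) E_13_2).symm.trans ((EQCA p13).trans ((estep a (c * (c)) E_13_0).trans ((estep c (c) E_26_2).trans (E_47_2))))))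
theorem E_29_1 : p29 * b = p30 := by
  have hmid : p29 * (b * (c)) = p51 := ((estep a (b * (c)) E_15_0).symm.trans (((EQA p15).symm).trans ((estep a (a * (a * (a * (a)))) E_15_0).trans ((estep a (a * (a * (a))) E_29_0).trans ((estep a (a * (a)) E_18_0).trans ((estep a (a) E_20_0).trans (E_32_0)))))))
  have hsuf : p30 * (c) = p51 := E_30_2
  rw [← mul_assoc] at hmid
  exact mul_right_cancel (hmid.trans hsuf.symm)
theorem E_31_1 : p31 * b = p51 := ((estep b (b) E_16_1).symm.trans ((estep b (b * (b)) E_15_1).symm.trans ((EQB p15).trans ((estep a (b * (c)) E_15_0).trans ((estep b (c) E_29_1).trans (E_30_2))))))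
theorem E_51_1 : p51 * b = p54 := ((estep c (b) E_30_2).symm.trans ((estep c (c * (b)) E_15_2).symm.trans ((EQCB p15).trans ((estep b (c * (c)) E_15_1).trans ((estep c (c) E_16_2).trans (E_32_2))))))
theorem E_16_0 : p16 * a = p19 := by
  have hmid : p16 * (a * (b * (c))) = p54 := (((EQB p16).symm).trans ((estep b (b * (b)) E_16_1).trans ((estep b (b) E_31_1).trans (E_51_1))))
  have hsuf : p19 * (b * (c)) = p54 := (estep b (c) E_19_1).trans (E_32_2)
  rw [← mul_assoc] at hmid
  exact mul_right_cancel (hmid.trans hsuf.symm)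
theorem E_54_0 : p54 * a = p59 := ((estep c (a) E_32_2).symm.trans ((estep c (c * (a)) E_16_2).symm.trans ((EQCA p16).trans ((estep a (c * (c)) E_16_0).trans ((estep c (c) E_19_2).trans (E_37_2))))))
theorem E_54_1 : p54 * b = p76 := ((estep c (b) E_32_2).symm.trans ((estep c (c * (b)) E_16_2).symm.trans ((EQCB p16).trans ((estep b (c * (c)) E_16_1).trans ((estep c (c) E_31_2).trans (E_53_2))))))
theorem E_33_1 : p33 * b = p34 := by
  have hmid : p33 * (b * (c)) = p56 := ((estep a (b * (c)) E_17_0).symm.trans (((EQA p17).symm).trans ((estep a (a * (a * (a * (a)))) E_17_0).trans ((estep a (a * (a * (a))) E_33_0).trans ((estep a (a * (a)) E_22_0).trans ((estep a (a) E_23_0).trans (E_36_0)))))))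
  have hsuf : p34 * (c) = p56 := E_34_2
  rw [← mul_assoc] at hmid
  exact mul_right_cancel (hmid.trans hsuf.symm)
theorem E_35_1 : p35 * b = p56 := ((estep b (b) E_18_1).symm.trans ((estep b (b * (b)) E_17_1).symm.trans ((EQB p17).trans ((estep a (b * (c)) E_17_0).trans ((estep b (c) E_33_1).trans (E_34_2))))))
theorem E_56_1 : p56 * b = p58 := ((estep c (b) E_34_2).symm.trans ((estep c (c * (b)) E_17_2).symm.trans ((EQCB p17).trans ((estep b (c * (c)) E_17_1).trans ((estep c (c) E_18_2).trans (E_36_2))))))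
theorem E_51_0 : p51 * a = p57 := ((estep a (a) E_32_0).symm.trans ((estep a (a * (a)) E_20_0).symm.trans ((estep a (a * (a * (a))) E_18_0).symm.trans ((EQE p18).trans ((estep b (c) E_18_1).trans (E_35_2))))))
theorem E_57_0 : p57 * a = p58 := ((estep a (a) E_51_0).symm.trans ((estep a (a * (a)) E_32_0).symm.trans ((estep a (a * (a * (a))) E_20_0).symm.trans ((estep a (a * (a * (a * (a)))) E_18_0).symm.trans ((EQG p18).trans ((estep c (c) E_18_2).trans (E_36_2)))))))
theorem E_58_1 : p58 * b = p80 := ((estep c (b) E_36_2).symm.trans ((estep c (c * (b)) E_18_2).symm.trans ((EQCB p18).trans ((estep b (c * (c)) E_18_1).trans ((estep c (c) E_35_2).trans (E_57_2))))))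
theorem E_19_0 : p19 * a = p24 := by
  have hmid : p19 * (a * (b * (c))) = p59 := (((EQB p19).symm).trans ((estep b (b * (b)) E_19_1).trans ((estep b (b) E_32_1).trans (E_38_1))))
  have hsuf : p24 * (b * (c)) = p59 := (estep b (c) E_24_1).trans (E_37_2)
  rw [← mul_assoc] at hmid
  exact mul_right_cancel (hmid.trans hsuf.symm)
theorem E_59_0 : p59 * a = p66 := ((estep c (a) E_37_2).symm.trans ((estep c (c * (a)) E_19_2).symm.trans ((EQCA p19).trans ((estep a (c * (c)) E_19_0).trans ((estep c (c) E_24_2).trans (E_44_2))))))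
theorem E_39_1 : p39 * b = p40 := by
  have hmid : p39 * (b * (c)) = p61 := ((estep a (b * (c)) E_21_0).symm.trans (((EQA p21).symm).trans ((estep a (a * (a * (a * (a)))) E_21_0).trans ((estep a (a * (a * (a))) E_39_0).trans ((estep a (a * (a)) E_27_0).trans ((estep a (a) E_28_0).trans (E_42_0)))))))
  have hsuf : p40 * (c) = p61 := E_40_2
  rw [← mul_assoc] at hmid
  exact mul_right_cancel (hmid.trans hsuf.symm)
theorem E_41_1 : p41 * b = p61 := ((estep b (b) E_22_1).symm.trans ((estep b (b * (b)) E_21_1).symm.trans ((EQB p21).trans ((estep a (b * (c)) E_21_0).trans ((estep b (c) E_39_1).trans (E_40_2))))))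
theorem E_61_1 : p61 * b = p63 := ((estep c (b) E_40_2).symm.trans ((estep c (c * (b)) E_21_2).symm.trans ((EQCB p21).trans ((estep b (c * (c)) E_21_1).trans ((estep c (c) E_22_2).trans (E_42_2))))))
theorem E_56_0 : p56 * a = p62 := ((estep a (a) E_36_0).symm.trans ((estep a (a * (a)) E_23_0).symm.trans ((estep a (a * (a * (a))) E_22_0).symm.trans ((EQE p22).trans ((estep b (c) E_22_1).trans (E_41_2))))))
theorem E_62_0 : p62 * a = p63 := ((estep a (a) E_56_0).symm.trans ((estep a (a * (a)) E_36_0).symm.trans ((estep a (a * (a * (a))) E_23_0).symm.trans ((estep a (a * (a * (a * (a)))) E_22_0).symm.trans ((EQG p22).trans ((estep c (c) E_22_2).trans (E_42_2)))))))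
theorem E_63_1 : p63 * b = p84 := ((estep c (b) E_42_2).symm.trans ((estep c (c * (b)) E_22_2).symm.trans ((EQCB p22).trans ((estep b (c * (c)) E_22_1).trans ((estep c (c) E_41_2).trans (E_62_2))))))
theorem E_43_1 : p43 * b = p44 := by
  have hmid : p43 * (b * (c)) = p66 := ((estep a (b * (c)) E_24_0).symm.trans (((EQB p24).symm).trans ((estep b (b * (b)) E_24_1).trans ((estep b (b) E_37_1).trans (E_45_1)))))
  have hsuf : p44 * (c) = p66 := E_44_2
  rw [← mul_assoc] at hmid
  exact mul_right_cancel (hmid.trans hsuf.symm)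
theorem E_66_0 : p66 * a = p86 := ((estep c (a) E_44_2).symm.trans ((estep c (c * (a)) E_24_2).symm.trans ((EQCA p24).trans ((estep a (c * (c)) E_24_0).trans ((estep c (c) E_43_2).trans (E_64_2))))))
theorem E_46_1 : p46 * b = p47 := by
  have hmid : p46 * (b * (c)) = p68 := ((estep a (b * (c)) E_26_0).symm.trans (((EQA p26).symm).trans ((estep a (a * (a * (a * (a)))) E_26_0).trans ((estep a (a * (a * (a))) E_46_0).trans ((estep a (a * (a)) E_44_0).trans ((estep a (a) E_45_0).trans (E_49_0)))))))
  have hsuf : p47 * (c) = p68 := E_47_2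
  rw [← mul_assoc] at hmid
  exact mul_right_cancel (hmid.trans hsuf.symm)
theorem E_48_1 : p48 * b = p68 := ((estep b (b) E_27_1).symm.trans ((estep b (b * (b)) E_26_1).symm.trans ((EQB p26).trans ((estep a (b * (c)) E_26_0).trans ((estep b (c) E_46_1).trans (E_47_2))))))
theorem E_68_1 : p68 * b = p70 := ((estep c (b) E_47_2).symm.trans ((estep c (c * (b)) E_26_2).symm.trans ((EQCB p26).trans ((estep b (c * (c)) E_26_1).trans ((estep c (c) E_27_2).trans (E_49_2))))))
theorem E_61_0 : p61 * a = p69 := ((estep a (a) E_42_0).symm.trans ((estep a (a * (a)) E_28_0).symm.trans ((estep a (a * (a * (a))) E_27_0).symm.trans ((EQE p27).trans ((estep b (c) E_27_1).trans (E_48_2))))))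
theorem E_69_0 : p69 * a = p70 := ((estep a (a) E_61_0).symm.trans ((estep a (a * (a)) E_42_0).symm.trans ((estep a (a * (a * (a))) E_28_0).symm.trans ((estep a (a * (a * (a * (a)))) E_27_0).symm.trans ((EQG p27).trans ((estep c (c) E_27_2).trans (E_49_2)))))))
theorem E_70_1 : p70 * b = p92 := ((estep c (b) E_49_2).symm.trans ((estep c (c * (b)) E_27_2).symm.trans ((EQCB p27).trans ((estep b (c * (c)) E_27_1).trans ((estep c (c) E_48_2).trans (E_69_2))))))
theorem E_50_1 : p50 * b = p57 := ((estep b (b) E_30_1).symm.trans ((estep b (b * (b)) E_29_1).symm.trans ((EQB p29).trans ((estep a (b * (c)) E_29_0).trans ((estep b (c) E_18_1).trans (E_35_2))))))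
theorem E_29_2 : p29 * c = p35 := by
  have hmid : p29 * (c * (c)) = p57 := ((EQC p29).trans ((estep a (b * (c)) E_29_0).trans ((estep b (c) E_18_1).trans (E_35_2))))
  have hsuf : p35 * (c) = p57 := E_35_2
  rw [← mul_assoc] at hmid
  exact mul_right_cancel (hmid.trans hsuf.symm)
theorem E_57_1 : p57 * b = p73 := ((estep c (b) E_35_2).symm.trans ((estep c (c * (b)) E_29_2).symm.trans ((EQCB p29).trans ((estep b (c * (c)) E_29_1).trans ((estep c (c) E_30_2).trans (E_51_2))))))
theorem E_30_0 : p30 * a = p31 := by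
  have hmid : p30 * (a * (b * (c))) = p73 := (((EQB p30).symm).trans ((estep b (b * (b)) E_30_1).trans ((estep b (b) E_50_1).trans (E_57_1))))
  have hsuf : p31 * (b * (c)) = p73 := (estep b (c) E_31_1).trans (E_51_2)
  rw [← mul_assoc] at hmid
  exact mul_right_cancel (hmid.trans hsuf.symm)
theorem E_74_0 : p74 * a = p72 := ((estep a (a) E_52_0).symm.trans ((estep a (a * (a)) E_31_0).symm.trans ((estep a (a * (a * (a))) E_30_0).symm.trans ((EQE p30).trans ((estep b (c) E_30_1).trans (E_50_2))))))
theorem E_72_0 : p72 * a = p73 := ((estep a (a) E_74_0).symm.trans ((estep a (a * (a)) E_52_0).symm.trans ((estep a (a * (a * (a))) E_31_0).symm.trans ((estep a (a * (a * (a * (a)))) E_30_0).symm.trans ((EQG p30).trans ((estep c (c) E_30_2).trans (E_51_2)))))))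
theorem E_73_0 : p73 * a = p76 := ((estep c (a) E_51_2).symm.trans ((estep c (c * (a)) E_30_2).symm.trans ((EQCA p30).trans ((estep a (c * (c)) E_30_0).trans ((estep c (c) E_31_2).trans (E_53_2))))))
theorem E_73_1 : p73 * b = p95 := ((estep c (b) E_51_2).symm.trans ((estep c (c * (b)) E_30_2).symm.trans ((EQCB p30).trans ((estep b (c * (c)) E_30_1).trans ((estep c (c) E_50_2).trans (E_72_2))))))
theorem E_52_1 : p52 * b = p53 := by
  have hmid : p52 * (b * (c)) = p76 := ((estep a (b * (c)) E_31_0).symm.trans (((EQA p31).symm).trans ((estep a (a * (a * (a * (a)))) E_31_0).trans ((estep a (a * (a * (a))) E_52_0).trans ((estep a (a * (a)) E_74_0).trans ((estep a (a) E_72_0).trans (E_73_0)))))))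
  have hsuf : p53 * (c) = p76 := E_53_2
  rw [← mul_assoc] at hmid
  exact mul_right_cancel (hmid.trans hsuf.symm)
theorem E_55_1 : p55 * b = p62 := ((estep b (b) E_34_1).symm.trans ((estep b (b * (b)) E_33_1).symm.trans ((EQB p33).trans ((estep a (b * (c)) E_33_0).trans ((estep b (c) E_22_1).trans (E_41_2))))))
theorem E_33_2 : p33 * c = p41 := by
  have hmid : p33 * (c * (c)) = p62 := ((EQC p33).trans ((estep a (b * (c)) E_33_0).trans ((estep b (c) E_22_1).trans (E_41_2))))
  have hsuf : p41 * (c) = p62 := E_41_2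
  rw [← mul_assoc] at hmid
  exact mul_right_cancel (hmid.trans hsuf.symm)
theorem E_62_1 : p62 * b = p79 := ((estep c (b) E_41_2).symm.trans ((estep c (c * (b)) E_33_2).symm.trans ((EQCB p33).trans ((estep b (c * (c)) E_33_1).trans ((estep c (c) E_34_2).trans (E_56_2))))))
theorem E_34_0 : p34 * a = p35 := by
  have hmid : p34 * (a * (b * (c))) = p79 := (((EQB p34).symm).trans ((estep b (b * (b)) E_34_1).trans ((estep b (b) E_55_1).trans (E_62_1))))
  have hsuf : p35 * (b * (c)) = p79 := (estep b (c) E_35_1).trans (E_56_2)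
  rw [← mul_assoc] at hmid
  exact mul_right_cancel (hmid.trans hsuf.symm)
theorem E_79_0 : p79 * a = p80 := ((estep c (a) E_56_2).symm.trans ((estep c (c * (a)) E_34_2).symm.trans ((EQCA p34).trans ((estep a (c * (c)) E_34_0).trans ((estep c (c) E_35_2).trans (E_57_2))))))
theorem E_79_1 : p79 * b = p99 := ((estep c (b) E_56_2).symm.trans ((estep c (c * (b)) E_34_2).symm.trans ((EQCB p34).trans ((estep b (c * (c)) E_34_1).trans ((estep c (c) E_55_2).trans (E_78_2))))))
theorem E_35_0 : p35 * a = p50 := by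
  have hmid : p35 * (a * (b * (c))) = p80 := (((EQB p35).symm).trans ((estep b (b * (b)) E_35_1).trans ((estep b (b) E_56_1).trans (E_58_1))))
  have hsuf : p50 * (b * (c)) = p80 := (estep b (c) E_50_1).trans (E_57_2)
  rw [← mul_assoc] at hmid
  exact mul_right_cancel (hmid.trans hsuf.symm)
theorem E_80_0 : p80 * a = p95 := ((estep c (a) E_57_2).symm.trans ((estep c (c * (a)) E_35_2).symm.trans ((EQCA p35).trans ((estep a (c * (c)) E_35_0).trans ((estep c (c) E_50_2).trans (E_72_2))))))
theorem E_60_1 : p60 * b = p69 := ((estep b (b) E_40_1).symm.trans ((estep b (b * (b)) E_39_1).symm.trans ((EQB p39).trans ((estep a (b * (c)) E_39_0).trans ((estep b (c) E_27_1).trans (E_48_2))))))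
theorem E_39_2 : p39 * c = p48 := by
  have hmid : p39 * (c * (c)) = p69 := ((EQC p39).trans ((estep a (b * (c)) E_39_0).trans ((estep b (c) E_27_1).trans (E_48_2))))
  have hsuf : p48 * (c) = p69 := E_48_2
  rw [← mul_assoc] at hmid
  exact mul_right_cancel (hmid.trans hsuf.symm)
theorem E_69_1 : p69 * b = p83 := ((estep c (b) E_48_2).symm.trans ((estep c (c * (b)) E_39_2).symm.trans ((EQCB p39).trans ((estep b (c * (c)) E_39_1).trans ((estep c (c) E_40_2).trans (E_61_2))))))
theorem E_40_0 : p40 * a = p41 := by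
  have hmid : p40 * (a * (b * (c))) = p83 := (((EQB p40).symm).trans ((estep b (b * (b)) E_40_1).trans ((estep b (b) E_60_1).trans (E_69_1))))
  have hsuf : p41 * (b * (c)) = p83 := (estep b (c) E_41_1).trans (E_61_2)
  rw [← mul_assoc] at hmid
  exact mul_right_cancel (hmid.trans hsuf.symm)
theorem E_83_0 : p83 * a = p84 := ((estep c (a) E_61_2).symm.trans ((estep c (c * (a)) E_40_2).symm.trans ((EQCA p40).trans ((estep a (c * (c)) E_40_0).trans ((estep c (c) E_41_2).trans (E_62_2))))))
theorem E_83_1 : p83 * b = p101 := ((estep c (b) E_61_2).symm.trans ((estep c (c * (b)) E_40_2).symm.trans ((EQCB p40).trans ((estep b (c * (c)) E_40_1).trans ((estep c (c) E_60_2).trans (E_82_2))))))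
theorem E_41_0 : p41 * a = p55 := by
  have hmid : p41 * (a * (b * (c))) = p84 := (((EQB p41).symm).trans ((estep b (b * (b)) E_41_1).trans ((estep b (b) E_61_1).trans (E_63_1))))
  have hsuf : p55 * (b * (c)) = p84 := (estep b (c) E_55_1).trans (E_62_2)
  rw [← mul_assoc] at hmid
  exact mul_right_cancel (hmid.trans hsuf.symm)
theorem E_84_0 : p84 * a = p99 := ((estep c (a) E_62_2).symm.trans ((estep c (c * (a)) E_41_2).symm.trans ((EQCA p41).trans ((estep a (c * (c)) E_41_0).trans ((estep c (c) E_55_2).trans (E_78_2))))))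
theorem E_65_1 : p65 * b = p86 := ((estep b (b) E_44_1).symm.trans ((estep b (b * (b)) E_43_1).symm.trans ((EQF p43).trans ((estep c (c) E_43_2).trans (E_64_2)))))
theorem E_86_1 : p86 * b = p88 := ((estep c (b) E_64_2).symm.trans ((estep c (c * (b)) E_43_2).symm.trans ((EQCB p43).trans ((estep b (c * (c)) E_43_1).trans ((estep c (c) E_44_2).trans (E_66_2))))))
theorem E_68_0 : p68 * a = p87 := ((estep a (a) E_49_0).symm.trans ((estep a (a * (a)) E_45_0).symm.trans ((estep a (a * (a * (a))) E_44_0).symm.trans ((EQE p44).trans ((estep b (c) E_44_1).trans (E_65_2))))))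
theorem E_87_0 : p87 * a = p88 := ((estep a (a) E_68_0).symm.trans ((estep a (a * (a)) E_49_0).symm.trans ((estep a (a * (a * (a))) E_45_0).symm.trans ((estep a (a * (a * (a * (a)))) E_44_0).symm.trans ((EQG p44).trans ((estep c (c) E_44_2).trans (E_66_2)))))))
theorem E_88_1 : p88 * b = p105 := ((estep c (b) E_66_2).symm.trans ((estep c (c * (b)) E_44_2).symm.trans ((EQCB p44).trans ((estep b (c * (c)) E_44_1).trans ((estep c (c) E_65_2).trans (E_87_2))))))
theorem E_67_1 : p67 * b = p87 := ((estep b (b) E_47_1).symm.trans ((estep b (b * (b)) E_46_1).symm.trans ((EQB p46).trans ((estep a (b * (c)) E_46_0).trans ((estep b (c) E_44_1).trans (E_65_2))))))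
theorem E_46_2 : p46 * c = p65 := by
  have hmid : p46 * (c * (c)) = p87 := ((EQC p46).trans ((estep a (b * (c)) E_46_0).trans ((estep b (c) E_44_1).trans (E_65_2))))
  have hsuf : p65 * (c) = p87 := E_65_2
  rw [← mul_assoc] at hmid
  exact mul_right_cancel (hmid.trans hsuf.symm)
theorem E_87_1 : p87 * b = p91 := ((estep c (b) E_65_2).symm.trans ((estep c (c * (b)) E_46_2).symm.trans ((EQCB p46).trans ((estep b (c * (c)) E_46_1).trans ((estep c (c) E_47_2).trans (E_68_2))))))
theorem E_47_0 : p47 * a = p48 := by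
  have hmid : p47 * (a * (b * (c))) = p91 := (((EQB p47).symm).trans ((estep b (b * (b)) E_47_1).trans ((estep b (b) E_67_1).trans (E_87_1))))
  have hsuf : p48 * (b * (c)) = p91 := (estep b (c) E_48_1).trans (E_68_2)
  rw [← mul_assoc] at hmid
  exact mul_right_cancel (hmid.trans hsuf.symm)
theorem E_91_0 : p91 * a = p92 := ((estep c (a) E_68_2).symm.trans ((estep c (c * (a)) E_47_2).symm.trans ((EQCA p47).trans ((estep a (c * (c)) E_47_0).trans ((estep c (c) E_48_2).trans (E_69_2))))))
theorem E_91_1 : p91 * b = p107 := ((estep c (b) E_68_2).symm.trans ((estep c (c * (b)) E_47_2).symm.trans ((EQCB p47).trans ((estep b (c * (c)) E_47_1).trans ((estep c (c) E_67_2).trans (E_90_2))))))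
theorem E_48_0 : p48 * a = p60 := by
  have hmid : p48 * (a * (b * (c))) = p92 := (((EQB p48).symm).trans ((estep b (b * (b)) E_48_1).trans ((estep b (b) E_68_1).trans (E_70_1))))
  have hsuf : p60 * (b * (c)) = p92 := (estep b (c) E_60_1).trans (E_69_2)
  rw [← mul_assoc] at hmid
  exact mul_right_cancel (hmid.trans hsuf.symm)
theorem E_92_0 : p92 * a = p101 := ((estep c (a) E_69_2).symm.trans ((estep c (c * (a)) E_48_2).symm.trans ((EQCA p48).trans ((estep a (c * (c)) E_48_0).trans ((estep c (c) E_60_2).trans (E_82_2))))))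
theorem E_71_1 : p71 * b = p72 := by
  have hmid : p71 * (b * (c)) = p95 := ((estep a (b * (c)) E_50_0).symm.trans (((EQB p50).symm).trans ((estep b (b * (b)) E_50_1).trans ((estep b (b) E_57_1).trans (E_73_1)))))
  have hsuf : p72 * (c) = p95 := E_72_2
  rw [← mul_assoc] at hmid
  exact mul_right_cancel (hmid.trans hsuf.symm)
theorem E_95_0 : p95 * a = p109 := ((estep c (a) E_72_2).symm.trans ((estep c (c * (a)) E_50_2).symm.trans ((EQCA p50).trans ((estep a (c * (c)) E_50_0).trans ((estep c (c) E_71_2).trans (E_93_2))))))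
theorem E_74_1 : p74 * b = p75 := ((estep a (b) E_52_0).symm.trans (((EQD p52).symm).trans (E_52_2)))
theorem E_53_0 : p53 * a = p54 := by
  have hmid : p53 * (a * (b * (c))) = p97 := (((EQC p53).symm).trans ((estep c (c) E_53_2).trans (E_76_2)))
  have hsuf : p54 * (b * (c)) = p97 := (estep b (c) E_54_1).trans (E_76_2)
  rw [← mul_assoc] at hmid
  exact mul_right_cancel (hmid.trans hsuf.symm)
theorem E_53_1 : p53 * b = p64 := by
  have hmid : p53 * (b * (c)) = p86 := (((EQE p53).symm).trans ((estep a (a * (a * (a))) E_53_0).trans ((estep a (a * (a)) E_54_0).trans ((estep a (a) E_59_0).trans (E_66_0)))))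
  have hsuf : p64 * (c) = p86 := E_64_2
  rw [← mul_assoc] at hmid
  exact mul_right_cancel (hmid.trans hsuf.symm)
theorem E_85_1 : p85 * b = p97 := ((estep b (b) E_64_1).symm.trans ((estep b (b * (b)) E_53_1).symm.trans ((EQF p53).trans ((estep c (c) E_53_2).trans (E_76_2)))))
theorem E_86_0 : p86 * a = p97 := ((estep a (a) E_66_0).symm.trans ((estep a (a * (a)) E_59_0).symm.trans ((estep a (a * (a * (a))) E_54_0).symm.trans ((estep a (a * (a * (a * (a)))) E_53_0).symm.trans ((EQG p53).trans ((estep c (c) E_53_2).trans (E_76_2)))))))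
theorem E_97_1 : p97 * b = p104 := ((estep c (b) E_76_2).symm.trans ((estep c (c * (b)) E_53_2).symm.trans ((EQCB p53).trans ((estep b (c * (c)) E_53_1).trans ((estep c (c) E_64_2).trans (E_86_2))))))
theorem E_77_1 : p77 * b = p78 := by
  have hmid : p77 * (b * (c)) = p99 := ((estep a (b * (c)) E_55_0).symm.trans (((EQB p55).symm).trans ((estep b (b * (b)) E_55_1).trans ((estep b (b) E_62_1).trans (E_79_1)))))
  have hsuf : p78 * (c) = p99 := E_78_2
  rw [← mul_assoc] at hmid
  exact mul_right_cancel (hmid.trans hsuf.symm)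
theorem E_81_1 : p81 * b = p82 := by
  have hmid : p81 * (b * (c)) = p101 := ((estep a (b * (c)) E_60_0).symm.trans (((EQB p60).symm).trans ((estep b (b * (b)) E_60_1).trans ((estep b (b) E_69_1).trans (E_83_1)))))
  have hsuf : p82 * (c) = p101 := E_82_2
  rw [← mul_assoc] at hmid
  exact mul_right_cancel (hmid.trans hsuf.symm)
theorem E_64_0 : p64 * a = p65 := by
  have hmid : p64 * (a * (b * (c))) = p104 := (((EQB p64).symm).trans ((estep b (b * (b)) E_64_1).trans ((estep b (b) E_85_1).trans (E_97_1))))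
  have hsuf : p65 * (b * (c)) = p104 := (estep b (c) E_65_1).trans (E_86_2)
  rw [← mul_assoc] at hmid
  exact mul_right_cancel (hmid.trans hsuf.symm)
theorem E_104_0 : p104 * a = p105 := ((estep c (a) E_86_2).symm.trans ((estep c (c * (a)) E_64_2).symm.trans ((EQCA p64).trans ((estep a (c * (c)) E_64_0).trans ((estep c (c) E_65_2).trans (E_87_2))))))
theorem E_65_0 : p65 * a = p67 := by
  have hmid : p65 * (a * (b * (c))) = p105 := (((EQB p65).symm).trans ((estep b (b * (b)) E_65_1).trans ((estep b (b) E_86_1).trans (E_88_1))))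
  have hsuf : p67 * (b * (c)) = p105 := (estep b (c) E_67_1).trans (E_87_2)
  rw [← mul_assoc] at hmid
  exact mul_right_cancel (hmid.trans hsuf.symm)
theorem E_105_0 : p105 * a = p107 := ((estep c (a) E_87_2).symm.trans ((estep c (c * (a)) E_65_2).symm.trans ((EQCA p65).trans ((estep a (c * (c)) E_65_0).trans ((estep c (c) E_67_2).trans (E_90_2))))))
theorem E_89_1 : p89 * b = p90 := by
  have hmid : p89 * (b * (c)) = p107 := ((estep a (b * (c)) E_67_0).symm.trans (((EQB p67).symm).trans ((estep b (b * (b)) E_67_1).trans ((estep b (b) E_87_1).trans (E_91_1)))))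
  have hsuf : p90 * (c) = p107 := E_90_2
  rw [← mul_assoc] at hmid
  exact mul_right_cancel (hmid.trans hsuf.symm)
theorem E_94_1 : p94 * b = p109 := ((estep b (b) E_72_1).symm.trans ((estep b (b * (b)) E_71_1).symm.trans ((EQF p71).trans ((estep c (c) E_71_2).trans (E_93_2)))))
theorem E_109_1 : p109 * b = p110 := ((estep c (b) E_93_2).symm.trans ((estep c (c * (b)) E_71_2).symm.trans ((EQCB p71).trans ((estep b (c * (c)) E_71_1).trans ((estep c (c) E_72_2).trans (E_95_2))))))
theorem E_74_2 : p74 * c = p94 := ((EQD p74).trans ((estep a (b) E_74_0).trans (E_72_1)))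
theorem E_76_0 : p76 * a = p85 := by
  have hmid : p76 * (a * (b)) = p97 := (((EQD p76).symm).trans (E_76_2))
  have hsuf : p85 * (b) = p97 := E_85_1
  rw [← mul_assoc] at hmid
  exact mul_right_cancel (hmid.trans hsuf.symm)
theorem E_78_0 : p78 * a = p79 := by
  have hmid : p78 * (a * (b * (c))) = p113 := (((EQC p78).symm).trans ((estep c (c) E_78_2).trans (E_99_2)))
  have hsuf : p79 * (b * (c)) = p113 := (estep b (c) E_79_1).trans (E_99_2)
  rw [← mul_assoc] at hmid
  exact mul_right_cancel (hmid.trans hsuf.symm)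
theorem E_78_1 : p78 * b = p93 := by
  have hmid : p78 * (b * (c)) = p109 := (((EQE p78).symm).trans ((estep a (a * (a * (a))) E_78_0).trans ((estep a (a * (a)) E_79_0).trans ((estep a (a) E_80_0).trans (E_95_0)))))
  have hsuf : p93 * (c) = p109 := E_93_2
  rw [← mul_assoc] at hmid
  exact mul_right_cancel (hmid.trans hsuf.symm)
theorem E_108_1 : p108 * b = p113 := ((estep b (b) E_93_1).symm.trans ((estep b (b * (b)) E_78_1).symm.trans ((EQF p78).trans ((estep c (c) E_78_2).trans (E_99_2)))))
theorem E_109_0 : p109 * a = p113 := ((estep a (a) E_95_0).symm.trans ((estep a (a * (a)) E_80_0).symm.trans ((estep a (a * (a * (a))) E_79_0).symm.trans ((estep a (a * (a * (a * (a)))) E_78_0).symm.trans ((EQG p78).trans ((estep c (c) E_78_2).trans (E_99_2)))))))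
theorem E_113_1 : p113 * b = p119 := ((estep c (b) E_99_2).symm.trans ((estep c (c * (b)) E_78_2).symm.trans ((EQCB p78).trans ((estep b (c * (c)) E_78_1).trans ((estep c (c) E_93_2).trans (E_109_2))))))
theorem E_82_0 : p82 * a = p83 := by
  have hmid : p82 * (a * (b * (c))) = p115 := (((EQC p82).symm).trans ((estep c (c) E_82_2).trans (E_101_2)))
  have hsuf : p83 * (b * (c)) = p115 := (estep b (c) E_83_1).trans (E_101_2)
  rw [← mul_assoc] at hmid
  exact mul_right_cancel (hmid.trans hsuf.symm)
theorem E_102_1 : p102 * b = p103 := ((estep a (b) E_85_0).symm.trans (((EQD p85).symm).trans (E_85_2)))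
theorem E_90_0 : p90 * a = p91 := by
  have hmid : p90 * (a * (b * (c))) = p117 := (((EQC p90).symm).trans ((estep c (c) E_90_2).trans (E_107_2)))
  have hsuf : p91 * (b * (c)) = p117 := (estep b (c) E_91_1).trans (E_107_2)
  rw [← mul_assoc] at hmid
  exact mul_right_cancel (hmid.trans hsuf.symm)
theorem E_93_0 : p93 * a = p94 := by
  have hmid : p93 * (a * (b * (c))) = p119 := (((EQB p93).symm).trans ((estep b (b * (b)) E_93_1).trans ((estep b (b) E_108_1).trans (E_113_1))))
  have hsuf : p94 * (b * (c)) = p119 := (estep b (c) E_94_1).trans (E_109_2)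
  rw [← mul_assoc] at hmid
  exact mul_right_cancel (hmid.trans hsuf.symm)
theorem E_99_0 : p99 * a = p108 := by
  have hmid : p99 * (a * (b)) = p113 := (((EQD p99).symm).trans (E_99_2))
  have hsuf : p108 * (b) = p113 := E_108_1
  rw [← mul_assoc] at hmid
  exact mul_right_cancel (hmid.trans hsuf.symm)
theorem E_43_0 : p43 * a = p53 := by
  have hmid : p43 * (a * (a)) = p54 := ((estep a (a * (a)) E_24_0).symm.trans ((estep a (a * (a * (a))) E_19_0).symm.trans ((estep a (a * (a * (a * (a)))) E_16_0).symm.trans ((EQA p16).trans ((estep a (b * (c)) E_16_0).trans ((estep b (c) E_19_1).trans (E_32_2)))))))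
  have hsuf : p53 * (a) = p54 := E_53_0
  rw [← mul_assoc] at hmid
  exact mul_right_cancel (hmid.trans hsuf.symm)
theorem E_75_2 : p75 * c = p85 := ((estep c (c) E_52_2).symm.trans ((estep a (c * (c)) E_31_0).symm.trans (((EQCA p31).symm).trans ((estep c (c * (a)) E_31_2).trans ((estep c (a) E_53_2).trans (E_76_0))))))
theorem E_71_0 : p71 * a = p78 := by
  have hmid : p71 * (a * (a)) = p79 := ((estep a (a * (a)) E_50_0).symm.trans ((estep a (a * (a * (a))) E_35_0).symm.trans ((estep a (a * (a * (a * (a)))) E_34_0).symm.trans ((EQA p34).trans ((estep a (b * (c)) E_34_0).trans ((estep b (c) E_35_1).trans (E_56_2)))))))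
  have hsuf : p78 * (a) = p79 := E_78_0
  rw [← mul_assoc] at hmid
  exact mul_right_cancel (hmid.trans hsuf.symm)
theorem E_77_0 : p77 * a = p82 := by
  have hmid : p77 * (a * (a)) = p83 := ((estep a (a * (a)) E_55_0).symm.trans ((estep a (a * (a * (a))) E_41_0).symm.trans ((estep a (a * (a * (a * (a)))) E_40_0).symm.trans ((EQA p40).trans ((estep a (b * (c)) E_40_0).trans ((estep b (c) E_41_1).trans (E_61_2)))))))
  have hsuf : p82 * (a) = p83 := E_82_0
  rw [← mul_assoc] at hmid
  exact mul_right_cancel (hmid.trans hsuf.symm)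
theorem E_81_0 : p81 * a = p90 := by
  have hmid : p81 * (a * (a)) = p91 := ((estep a (a * (a)) E_60_0).symm.trans ((estep a (a * (a * (a))) E_48_0).symm.trans ((estep a (a * (a * (a * (a)))) E_47_0).symm.trans ((EQA p47).trans ((estep a (b * (c)) E_47_0).trans ((estep b (c) E_48_1).trans (E_68_2)))))))
  have hsuf : p90 * (a) = p91 := E_90_0
  rw [← mul_assoc] at hmid
  exact mul_right_cancel (hmid.trans hsuf.symm)
theorem E_94_2 : p94 * c = p102 := ((estep c (c) E_74_2).symm.trans ((estep a (c * (c)) E_52_0).symm.trans (((EQCA p52).symm).trans ((estep c (c * (a)) E_52_2).trans ((estep c (a) E_75_2).trans (E_85_0))))))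
theorem E_98_2 : p98 * c = p108 := ((estep c (c) E_77_2).symm.trans ((estep a (c * (c)) E_55_0).symm.trans (((EQCA p55).symm).trans ((estep c (c * (a)) E_55_2).trans ((estep c (a) E_78_2).trans (E_99_0))))))
theorem E_89_0 : p89 * a = p103 := ((estep a (a) E_67_0).symm.trans ((estep a (a * (a)) E_65_0).symm.trans ((estep a (a * (a * (a))) E_64_0).symm.trans ((EQE p64).trans ((estep b (c) E_64_1).trans (E_85_2))))))
theorem E_103_0 : p103 * a = p104 := ((estep a (a) E_89_0).symm.trans ((estep a (a * (a)) E_67_0).symm.trans ((estep a (a * (a * (a))) E_65_0).symm.trans ((estep a (a * (a * (a * (a)))) E_64_0).symm.trans ((EQG p64).trans ((estep c (c) E_64_2).trans (E_86_2)))))))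
theorem E_102_0 : p102 * a = p110 := ((estep a (a) E_85_0).symm.trans ((estep a (a * (a)) E_76_0).symm.trans ((estep a (a * (a * (a))) E_73_0).symm.trans ((estep a (a * (a * (a * (a)))) E_72_0).symm.trans ((EQA p72).trans ((estep a (b * (c)) E_72_0).trans ((estep b (c) E_73_1).trans (E_95_2))))))))
theorem E_110_1 : p110 * b = p116 := ((estep c (b) E_95_2).symm.trans ((estep c (c * (b)) E_72_2).symm.trans ((EQCB p72).trans ((estep b (c * (c)) E_72_1).trans ((estep c (c) E_94_2).trans (E_102_2))))))
theorem E_96_1 : p96 * b = p102 := ((estep b (b) E_75_1).symm.trans ((estep b (b * (b)) E_74_1).symm.trans ((EQB p74).trans ((estep a (b * (c)) E_74_0).trans ((estep b (c) E_72_1).trans (E_94_2))))))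
theorem E_75_0 : p75 * a = p64 := by
  have hmid : p75 * (a * (b * (c))) = p103 := (((EQB p75).symm).trans ((estep b (b * (b)) E_75_1).trans ((estep b (b) E_96_1).trans (E_102_1))))
  have hsuf : p64 * (b * (c)) = p103 := (estep b (c) E_64_1).trans (E_85_2)
  rw [← mul_assoc] at hmid
  exact mul_right_cancel (hmid.trans hsuf.symm)
theorem E_96_2 : p96 * c = p89 := ((estep b (c) E_75_1).symm.trans (((EQE p75).symm).trans ((estep a (a * (a * (a))) E_75_0).trans ((estep a (a * (a)) E_64_0).trans ((estep a (a) E_65_0).trans (E_67_0))))))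
theorem E_103_1 : p103 * b = p106 := ((estep c (b) E_85_2).symm.trans ((estep c (c * (b)) E_75_2).symm.trans ((EQCB p75).trans ((estep b (c * (c)) E_75_1).trans ((estep c (c) E_96_2).trans (E_89_2))))))
theorem E_82_1 : p82 * b = p98 := by
  have hmid : p82 * (b * (c)) = p108 := ((estep a (b * (c)) E_77_0).symm.trans (((EQA p77).symm).trans ((estep a (a * (a * (a * (a)))) E_77_0).trans ((estep a (a * (a * (a))) E_82_0).trans ((estep a (a * (a)) E_83_0).trans ((estep a (a) E_84_0).trans (E_99_0)))))))
  have hsuf : p98 * (c) = p108 := E_98_2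
  rw [← mul_assoc] at hmid
  exact mul_right_cancel (hmid.trans hsuf.symm)
theorem E_108_0 : p108 * a = p115 := ((estep c (a) E_98_2).symm.trans ((estep c (c * (a)) E_77_2).symm.trans ((EQCA p77).trans ((estep a (c * (c)) E_77_0).trans ((estep c (c) E_82_2).trans (E_101_2))))))
theorem E_90_1 : p90 * b = p100 := ((estep a (b) E_81_0).symm.trans (((EQD p81).symm).trans (E_81_2)))
theorem E_100_2 : p100 * c = p112 := ((estep c (c) E_81_2).symm.trans (((EQF p81).symm).trans ((estep b (b * (b)) E_81_1).trans ((estep b (b) E_82_1).trans (E_98_1)))))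
theorem E_101_0 : p101 * a = p112 := ((estep a (a) E_92_0).symm.trans ((estep a (a * (a)) E_91_0).symm.trans ((estep a (a * (a * (a))) E_90_0).symm.trans ((estep a (a * (a * (a * (a)))) E_81_0).symm.trans ((EQG p81).trans ((estep c (c) E_81_2).trans (E_100_2)))))))
theorem E_112_0 : p112 * a = p117 := ((estep c (a) E_100_2).symm.trans ((estep c (c * (a)) E_81_2).symm.trans ((EQCA p81).trans ((estep a (c * (c)) E_81_0).trans ((estep c (c) E_90_2).trans (E_107_2))))))
theorem E_112_1 : p112 * b = p115 := ((estep c (b) E_100_2).symm.trans ((estep c (c * (b)) E_81_2).symm.trans ((EQCB p81).trans ((estep b (c * (c)) E_81_1).trans ((estep c (c) E_82_2).trans (E_101_2))))))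
theorem E_115_1 : p115 * b = p118 := ((estep c (b) E_101_2).symm.trans ((estep c (c * (b)) E_82_2).symm.trans ((EQCB p82).trans ((estep b (c * (c)) E_82_1).trans ((estep c (c) E_98_2).trans (E_108_2))))))
theorem E_106_2 : p106 * c = p114 := ((estep b (c) E_103_1).symm.trans ((estep a (b * (c)) E_89_0).symm.trans (((EQB p89).symm).trans ((estep b (b * (b)) E_89_1).trans ((estep b (b) E_90_1).trans (E_100_1))))))
theorem E_107_0 : p107 * a = p114 := ((estep a (a) E_105_0).symm.trans ((estep a (a * (a)) E_104_0).symm.trans ((estep a (a * (a * (a))) E_103_0).symm.trans ((estep a (a * (a * (a * (a)))) E_89_0).symm.trans ((EQG p89).trans ((estep c (c) E_89_2).trans (E_106_2)))))))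
theorem E_114_1 : p114 * b = p117 := ((estep c (b) E_106_2).symm.trans ((estep c (c * (b)) E_89_2).symm.trans ((EQCB p89).trans ((estep b (c * (c)) E_89_1).trans ((estep c (c) E_90_2).trans (E_107_2))))))
theorem E_119_0 : p119 * a = p116 := ((estep c (a) E_109_2).symm.trans ((estep c (c * (a)) E_93_2).symm.trans ((EQCA p93).trans ((estep a (c * (c)) E_93_0).trans ((estep c (c) E_94_2).trans (E_102_2))))))
theorem E_94_0 : p94 * a = p96 := by
  have hmid : p94 * (a * (b * (c))) = p116 := (((EQB p94).symm).trans ((estep b (b * (b)) E_94_1).trans ((estep b (b) E_109_1).trans (E_110_1))))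
  have hsuf : p96 * (b * (c)) = p116 := (estep b (c) E_96_1).trans (E_102_2)
  rw [← mul_assoc] at hmid
  exact mul_right_cancel (hmid.trans hsuf.symm)
theorem E_116_0 : p116 * a = p106 := ((estep c (a) E_102_2).symm.trans ((estep c (c * (a)) E_94_2).symm.trans ((EQCA p94).trans ((estep a (c * (c)) E_94_0).trans ((estep c (c) E_96_2).trans (E_89_2))))))
theorem E_111_1 : p111 * b = p89 := by
  have hmid : p111 * (b * (c)) = p106 := ((estep a (b * (c)) E_96_0).symm.trans (((EQB p96).symm).trans ((estep b (b * (b)) E_96_1).trans ((estep b (b) E_102_1).trans (E_103_1)))))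
  have hsuf : p89 * (c) = p106 := E_89_2
  rw [← mul_assoc] at hmid
  exact mul_right_cancel (hmid.trans hsuf.symm)
theorem E_98_0 : p98 * a = p93 := by
  have hmid : p98 * (a * (b * (c))) = p118 := (((EQB p98).symm).trans ((estep b (b * (b)) E_98_1).trans ((estep b (b) E_112_1).trans (E_115_1))))
  have hsuf : p93 * (b * (c)) = p118 := (estep b (c) E_93_1).trans (E_108_2)
  rw [← mul_assoc] at hmid
  exact mul_right_cancel (hmid.trans hsuf.symm)
theorem E_112_2 : p112 * c = p111 := ((estep b (c) E_98_1).symm.trans (((EQE p98).symm).trans ((estep a (a * (a * (a))) E_98_0).trans ((estep a (a * (a)) E_93_0).trans ((estep a (a) E_94_0).trans (E_96_0))))))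
theorem E_111_0 : p111 * a = p118 := ((estep a (a) E_96_0).symm.trans ((estep a (a * (a)) E_94_0).symm.trans ((estep a (a * (a * (a))) E_93_0).symm.trans ((estep a (a * (a * (a * (a)))) E_98_0).symm.trans ((EQG p98).trans ((estep c (c) E_98_2).trans (E_108_2)))))))
theorem E_118_0 : p118 * a = p119 := ((estep c (a) E_108_2).symm.trans ((estep c (c * (a)) E_98_2).symm.trans ((EQCA p98).trans ((estep a (c * (c)) E_98_0).trans ((estep c (c) E_93_2).trans (E_109_2))))))
theorem E_100_0 : p100 * a = p98 := by
  have hmid : p100 * (a * (b * (c))) = p111 := (((EQC p100).symm).trans ((estep c (c) E_100_2).trans (E_112_2)))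
  have hsuf : p98 * (b * (c)) = p111 := (estep b (c) E_98_1).trans (E_112_2)
  rw [← mul_assoc] at hmid
  exact mul_right_cancel (hmid.trans hsuf.symm)
theorem E_114_2 : p114 * c = p96 := ((estep b (c) E_100_1).symm.trans (((EQE p100).symm).trans ((estep a (a * (a * (a))) E_100_0).trans ((estep a (a * (a)) E_98_0).trans ((estep a (a) E_93_0).trans (E_94_0))))))
theorem E_117_1 : p117 * b = p111 := ((estep b (b) E_114_1).symm.trans ((estep b (b * (b)) E_100_1).symm.trans ((EQF p100).trans ((estep c (c) E_100_2).trans (E_112_2)))))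
theorem E_103_2 : p103 * c = p52 := by
  have hmid : p103 * (c * (c * (b))) = p96 := ((EQCB p103).trans ((estep b (c * (c)) E_103_1).trans ((estep c (c) E_106_2).trans (E_114_2))))
  have hsuf : p52 * (c * (b)) = p96 := (estep c (b) E_52_2).trans (E_75_1)
  rw [← mul_assoc] at hmid
  exact mul_right_cancel (hmid.trans hsuf.symm)
theorem E_106_0 : p106 * a = p100 := by
  have hmid : p106 * (a * (b * (c))) = p96 := (((EQC p106).symm).trans ((estep c (c) E_106_2).trans (E_114_2)))
  have hsuf : p100 * (b * (c)) = p96 := (estep b (c) E_100_1).trans (E_114_2)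
  rw [← mul_assoc] at hmid
  exact mul_right_cancel (hmid.trans hsuf.symm)
theorem E_106_1 : p106 * b = p74 := by
  have hmid : p106 * (b * (c)) = p94 := (((EQE p106).symm).trans ((estep a (a * (a * (a))) E_106_0).trans ((estep a (a * (a)) E_100_0).trans ((estep a (a) E_98_0).trans (E_93_0)))))
  have hsuf : p74 * (c) = p94 := E_74_2
  rw [← mul_assoc] at hmid
  exact mul_right_cancel (hmid.trans hsuf.symm)
theorem E_117_2 : p117 * c = p67 := by
  have hmid : p117 * (c * (a)) = p89 := ((estep c (c * (a)) E_107_2).symm.trans ((EQCA p107).trans ((estep a (c * (c)) E_107_0).trans ((estep c (c) E_114_2).trans (E_96_2)))))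
  have hsuf : p67 * (a) = p89 := E_67_0
  rw [← mul_assoc] at hmid
  exact mul_right_cancel (hmid.trans hsuf.symm)
theorem E_107_1 : p107 * b = p46 := by
  have hmid : p107 * (b * (c * (c))) = p87 := (((EQCB p107).symm).trans ((estep c (c * (b)) E_107_2).trans ((estep c (b) E_117_2).trans (E_67_1))))
  have hsuf : p46 * (c * (c)) = p87 := (estep c (c) E_46_2).trans (E_65_2)
  rw [← mul_assoc] at hmid
  exact mul_right_cancel (hmid.trans hsuf.symm)
theorem E_118_1 : p118 * b = p81 := by
  have hmid : p118 * (b * (c)) = p100 := ((estep a (b * (c)) E_111_0).symm.trans (((EQA p111).symm).trans ((estep a (a * (a * (a * (a)))) E_111_0).trans ((estep a (a * (a * (a))) E_118_0).trans ((estep a (a * (a)) E_119_0).trans ((estep a (a) E_116_0).trans (E_106_0)))))))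
  have hsuf : p81 * (c) = p100 := E_81_2
  rw [← mul_assoc] at hmid
  exact mul_right_cancel (hmid.trans hsuf.symm)
theorem E_111_2 : p111 * c = p81 := by
  have hmid : p111 * (c * (c)) = p100 := ((EQC p111).trans ((estep a (b * (c)) E_111_0).trans ((estep b (c) E_118_1).trans (E_81_2))))
  have hsuf : p81 * (c) = p100 := E_81_2
  rw [← mul_assoc] at hmid
  exact mul_right_cancel (hmid.trans hsuf.symm)
theorem E_118_2 : p118 * c = p77 := by
  have hmid : p118 * (c * (c)) = p98 := ((estep a (c * (c)) E_111_0).symm.trans (((EQCA p111).symm).trans ((estep c (c * (a)) E_111_2).trans ((estep c (a) E_81_2).trans (E_100_0)))))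
  have hsuf : p77 * (c) = p98 := E_77_2
  rw [← mul_assoc] at hmid
  exact mul_right_cancel (hmid.trans hsuf.symm)
theorem E_117_0 : p117 * a = p47 := by
  have hmid : p117 * (a * (a * (a * (a)))) = p81 := ((estep a (a * (a * (a * (a)))) E_112_0).symm.trans ((EQA p112).trans ((estep a (b * (c)) E_112_0).trans ((estep b (c) E_117_1).trans (E_111_2)))))
  have hsuf : p47 * (a * (a * (a))) = p81 := (estep a (a * (a)) E_47_0).trans ((estep a (a) E_48_0).trans (E_60_0))
  rw [← mul_assoc] at hmid
  exact mul_right_cancel (hmid.trans hsuf.symm)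
theorem E_115_2 : p115 * c = p60 := ((estep b (c) E_112_1).symm.trans (((EQE p112).symm).trans ((estep a (a * (a * (a))) E_112_0).trans ((estep a (a * (a)) E_117_0).trans ((estep a (a) E_47_0).trans (E_48_0))))))
theorem E_114_0 : p114 * a = p75 := by
  have hmid : p114 * (a * (b * (c))) = p89 := (((EQB p114).symm).trans ((estep b (b * (b)) E_114_1).trans ((estep b (b) E_117_1).trans (E_111_1))))
  have hsuf : p75 * (b * (c)) = p89 := (estep b (c) E_75_1).trans (E_96_2)
  rw [← mul_assoc] at hmid
  exact mul_right_cancel (hmid.trans hsuf.symm)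
theorem E_115_0 : p115 * a = p40 := by
  have hmid : p115 * (a * (b * (c))) = p82 := (((EQB p115).symm).trans ((estep b (b * (b)) E_115_1).trans ((estep b (b) E_118_1).trans (E_81_1))))
  have hsuf : p40 * (b * (c)) = p82 := (estep b (c) E_40_1).trans (E_60_2)
  rw [← mul_assoc] at hmid
  exact mul_right_cancel (hmid.trans hsuf.symm)
theorem E_116_1 : p116 * b = p71 := by
  have hmid : p116 * (b * (b * (b))) = p94 := ((EQB p116).trans ((estep a (b * (c)) E_116_0).trans ((estep b (c) E_106_1).trans (E_74_2))))
  have hsuf : p71 * (b * (b)) = p94 := (estep b (b) E_71_1).trans (E_72_1)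
  rw [← mul_assoc] at hmid
  exact mul_right_cancel (hmid.trans hsuf.symm)
theorem E_116_2 : p116 * c = p74 := by
  have hmid : p116 * (c * (c)) = p94 := ((EQC p116).trans ((estep a (b * (c)) E_116_0).trans ((estep b (c) E_106_1).trans (E_74_2))))
  have hsuf : p74 * (c) = p94 := E_74_2
  rw [← mul_assoc] at hmid
  exact mul_right_cancel (hmid.trans hsuf.symm)
theorem E_119_1 : p119 * b = p77 := by
  have hmid : p119 * (b * (c)) = p98 := ((estep a (b * (c)) E_118_0).symm.trans (((EQA p118).symm).trans ((estep a (a * (a * (a * (a)))) E_118_0).trans ((estep a (a * (a * (a))) E_119_0).trans ((estep a (a * (a)) E_116_0).trans ((estep a (a) E_106_0).trans (E_100_0)))))))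
  have hsuf : p77 * (c) = p98 := E_77_2
  rw [← mul_assoc] at hmid
  exact mul_right_cancel (hmid.trans hsuf.symm)
theorem E_119_2 : p119 * c = p71 := by
  have hmid : p119 * (c * (c)) = p93 := ((estep a (c * (c)) E_118_0).symm.trans (((EQCA p118).symm).trans ((estep c (c * (a)) E_118_2).trans ((estep c (a) E_77_2).trans (E_98_0)))))
  have hsuf : p71 * (c) = p93 := E_71_2
  rw [← mul_assoc] at hmid
  exact mul_right_cancel (hmid.trans hsuf.symm)
theorem E_104_1 : p104 * b = p52 := ((estep c (b) E_86_2).symm.trans ((estep c (c * (b)) E_64_2).symm.trans ((EQCB p64).trans ((estep b (c * (c)) E_64_1).trans ((estep c (c) E_85_2).trans (E_103_2))))))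
theorem E_105_2 : p105 * c = p46 := ((estep c (c) E_87_2).symm.trans ((estep b (c * (c)) E_67_1).symm.trans (((EQCB p67).symm).trans ((estep c (c * (b)) E_67_2).trans ((estep c (b) E_90_2).trans (E_107_1))))))
theorem E_91_2 : p91 * c = p26 := by
  have hmid : p91 * (c * (a)) = p46 := ((estep c (c * (a)) E_68_2).symm.trans ((EQCA p68).trans ((estep a (c * (c)) E_68_0).trans ((estep c (c) E_87_2).trans (E_105_2)))))
  have hsuf : p26 * (a) = p46 := E_26_0
  rw [← mul_assoc] at hmid
  exact mul_right_cancel (hmid.trans hsuf.symm)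
theorem E_70_2 : p70 * c = p13 := by
  have hmid : p70 * (c * (c)) = p27 := ((estep b (c * (c)) E_68_1).symm.trans (((EQCB p68).symm).trans ((estep c (c * (b)) E_68_2).trans ((estep c (b) E_91_2).trans (E_26_1)))))
  have hsuf : p13 * (c) = p27 := E_13_2
  rw [← mul_assoc] at hmid
  exact mul_right_cancel (hmid.trans hsuf.symm)
theorem E_92_2 : p92 * c = p39 := by
  have hmid : p92 * (c * (a)) = p27 := ((estep c (c * (a)) E_69_2).symm.trans ((EQCA p69).trans ((estep a (c * (c)) E_69_0).trans ((estep c (c) E_70_2).trans (E_13_2)))))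
  have hsuf : p39 * (a) = p27 := E_39_0
  rw [← mul_assoc] at hmid
  exact mul_right_cancel (hmid.trans hsuf.symm)
theorem E_83_2 : p83 * c = p21 := by
  have hmid : p83 * (c * (c)) = p40 := ((estep b (c * (c)) E_69_1).symm.trans (((EQCB p69).symm).trans ((estep c (c * (b)) E_69_2).trans ((estep c (b) E_92_2).trans (E_39_1)))))
  have hsuf : p21 * (c) = p40 := E_21_2
  rw [← mul_assoc] at hmid
  exact mul_right_cancel (hmid.trans hsuf.symm)
theorem E_70_0 : p70 * a = p5 := by
  have hmid : p70 * (a * (b * (c))) = p27 := (((EQC p70).symm).trans ((estep c (c) E_70_2).trans (E_13_2)))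
  have hsuf : p5 * (b * (c)) = p27 := (estep b (c) E_5_1).trans (E_13_2)
  rw [← mul_assoc] at hmid
  exact mul_right_cancel (hmid.trans hsuf.symm)
theorem E_92_1 : p92 * b = p26 := by
  have hmid : p92 * (b * (b)) = p27 := ((estep b (b * (b)) E_70_1).symm.trans ((EQF p70).trans ((estep c (c) E_70_2).trans (E_13_2))))
  have hsuf : p26 * (b) = p27 := E_26_1
  rw [← mul_assoc] at hmid
  exact mul_right_cancel (hmid.trans hsuf.symm)
theorem E_97_2 : p97 * c = p31 := by
  have hmid : p97 * (c * (a)) = p52 := ((estep c (c * (a)) E_76_2).symm.trans ((EQCA p76).trans ((estep a (c * (c)) E_76_0).trans ((estep c (c) E_85_2).trans (E_103_2)))))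
  have hsuf : p31 * (a) = p52 := E_31_0
  rw [← mul_assoc] at hmid
  exact mul_right_cancel (hmid.trans hsuf.symm)
theorem E_76_1 : p76 * b = p15 := by
  have hmid : p76 * (b * (c * (c))) = p51 := (((EQCB p76).symm).trans ((estep c (c * (b)) E_76_2).trans ((estep c (b) E_97_2).trans (E_31_1))))
  have hsuf : p15 * (c * (c)) = p51 := (estep c (c) E_15_2).trans (E_30_2)
  rw [← mul_assoc] at hmid
  exact mul_right_cancel (hmid.trans hsuf.symm)
theorem E_84_1 : p84 * b = p21 := by
  have hmid : p84 * (b * (c)) = p40 := ((estep a (b * (c)) E_83_0).symm.trans (((EQA p83).symm).trans ((estep a (a * (a * (a * (a)))) E_83_0).trans ((estep a (a * (a * (a))) E_84_0).trans ((estep a (a * (a)) E_99_0).trans ((estep a (a) E_108_0).trans (E_115_0)))))))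
  have hsuf : p21 * (c) = p40 := E_21_2
  rw [← mul_assoc] at hmid
  exact mul_right_cancel (hmid.trans hsuf.symm)
theorem E_101_1 : p101 * b = p39 := by
  have hmid : p101 * (b * (b)) = p40 := ((estep b (b * (b)) E_83_1).symm.trans ((EQB p83).trans ((estep a (b * (c)) E_83_0).trans ((estep b (c) E_84_1).trans (E_21_2)))))
  have hsuf : p39 * (b) = p40 := E_39_1
  rw [← mul_assoc] at hmid
  exact mul_right_cancel (hmid.trans hsuf.symm)
theorem E_84_2 : p84 * c = p33 := by
  have hmid : p84 * (c * (c)) = p41 := ((estep a (c * (c)) E_83_0).symm.trans (((EQCA p83).symm).trans ((estep c (c * (a)) E_83_2).trans ((estep c (a) E_21_2).trans (E_40_0)))))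
  have hsuf : p33 * (c) = p41 := E_33_2
  rw [← mul_assoc] at hmid
  exact mul_right_cancel (hmid.trans hsuf.symm)
theorem E_99_1 : p99 * b = p33 := by
  have hmid : p99 * (b * (c)) = p41 := ((estep a (b * (c)) E_84_0).symm.trans (((EQA p84).symm).trans ((estep a (a * (a * (a * (a)))) E_84_0).trans ((estep a (a * (a * (a))) E_99_0).trans ((estep a (a * (a)) E_108_0).trans ((estep a (a) E_115_0).trans (E_40_0)))))))
  have hsuf : p33 * (c) = p41 := E_33_2
  rw [← mul_assoc] at hmid
  exact mul_right_cancel (hmid.trans hsuf.symm)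
theorem E_113_2 : p113 * c = p55 := ((estep c (c) E_99_2).symm.trans ((estep a (c * (c)) E_84_0).symm.trans (((EQCA p84).symm).trans ((estep c (c * (a)) E_84_2).trans ((estep c (a) E_33_2).trans (E_41_0))))))
theorem E_110_0 : p110 * a = p30 := by
  have hmid : p110 * (a * (a * (a))) = p52 := ((estep a (a * (a * (a))) E_102_0).symm.trans ((estep a (a * (a * (a * (a)))) E_85_0).symm.trans ((EQA p85).trans ((estep a (b * (c)) E_85_0).trans ((estep b (c) E_102_1).trans (E_103_2))))))
  have hsuf : p30 * (a * (a)) = p52 := (estep a (a) E_30_0).trans (E_31_0)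
  rw [← mul_assoc] at hmid
  exact mul_right_cancel (hmid.trans hsuf.symm)
theorem E_104_2 : p104 * c = p43 := by
  have hmid : p104 * (c * (a)) = p53 := ((estep c (c * (a)) E_86_2).symm.trans ((EQCA p86).trans ((estep a (c * (c)) E_86_0).trans ((estep c (c) E_97_2).trans (E_31_2)))))
  have hsuf : p43 * (a) = p53 := E_43_0
  rw [← mul_assoc] at hmid
  exact mul_right_cancel (hmid.trans hsuf.symm)
theorem E_88_2 : p88 * c = p24 := by
  have hmid : p88 * (c * (c)) = p44 := ((estep b (c * (c)) E_86_1).symm.trans (((EQCB p86).symm).trans ((estep c (c * (b)) E_86_2).trans ((estep c (b) E_104_2).trans (E_43_1)))))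
  have hsuf : p24 * (c) = p44 := E_24_2
  rw [← mul_assoc] at hmid
  exact mul_right_cancel (hmid.trans hsuf.symm)
theorem E_88_0 : p88 * a = p12 := by
  have hmid : p88 * (a * (a * (a * (a)))) = p46 := ((estep a (a * (a * (a * (a)))) E_87_0).symm.trans ((EQA p87).trans ((estep a (b * (c)) E_87_0).trans ((estep b (c) E_88_1).trans (E_105_2)))))
  have hsuf : p12 * (a * (a * (a))) = p46 := (estep a (a * (a)) E_12_0).trans ((estep a (a) E_13_0).trans (E_26_0))
  rw [← mul_assoc] at hmid
  exact mul_right_cancel (hmid.trans hsuf.symm)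
theorem E_105_1 : p105 * b = p43 := by
  have hmid : p105 * (b * (b)) = p44 := ((estep b (b * (b)) E_88_1).symm.trans ((EQB p88).trans ((estep a (b * (c)) E_88_0).trans ((estep b (c) E_12_1).trans (E_24_2)))))
  have hsuf : p43 * (b) = p44 := E_43_1
  rw [← mul_assoc] at hmid
  exact mul_right_cancel (hmid.trans hsuf.symm)
theorem E_110_2 : p110 * c = p50 := by
  have hmid : p110 * (c * (a)) = p71 := ((estep c (c * (a)) E_95_2).symm.trans ((EQCA p95).trans ((estep a (c * (c)) E_95_0).trans ((estep c (c) E_109_2).trans (E_119_2)))))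
  have hsuf : p50 * (a) = p71 := E_50_0
  rw [← mul_assoc] at hmid
  exact mul_right_cancel (hmid.trans hsuf.symm)
theorem E_95_1 : p95 * b = p29 := by
  have hmid : p95 * (b * (c * (c))) = p57 := (((EQCB p95).symm).trans ((estep c (c * (b)) E_95_2).trans ((estep c (b) E_110_2).trans (E_50_1))))
  have hsuf : p29 * (c * (c)) = p57 := (estep c (c) E_29_2).trans (E_35_2)
  rw [← mul_assoc] at hmid
  exact mul_right_cancel (hmid.trans hsuf.symm)
theorem E_97_0 : p97 * a = p16 := by
  have hmid : p97 * (a * (b * (c))) = p53 := (((EQB p97).symm).trans ((estep b (b * (b)) E_97_1).trans ((estep b (b) E_104_1).trans (E_52_1))))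
  have hsuf : p16 * (b * (c)) = p53 := (estep b (c) E_16_1).trans (E_31_2)
  rw [← mul_assoc] at hmid
  exact mul_right_cancel (hmid.trans hsuf.symm)
theorem E_113_0 : p113 * a = p34 := by
  have hmid : p113 * (a * (a * (a * (a)))) = p71 := ((estep a (a * (a * (a * (a)))) E_109_0).symm.trans ((EQA p109).trans ((estep a (b * (c)) E_109_0).trans ((estep b (c) E_113_1).trans (E_119_2)))))
  have hsuf : p34 * (a * (a * (a))) = p71 := (estep a (a * (a)) E_34_0).trans ((estep a (a) E_35_0).trans (E_50_0))
  rw [← mul_assoc] at hmid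
  exact mul_right_cancel (hmid.trans hsuf.symm)
theorem E_28_2 : p28 * c = p1 := by
  have hmid : p28 * (c * (c)) = p5 := ((estep a (c * (c)) E_27_0).symm.trans (((EQCA p27).symm).trans ((estep c (c * (a)) E_27_2).trans ((estep c (a) E_49_2).trans (E_70_0)))))
  have hsuf : p1 * (c) = p5 := E_1_2
  rw [← mul_assoc] at hmid
  exact mul_right_cancel (hmid.trans hsuf.symm)
theorem E_42_1 : p42 * b = p1 := by
  have hmid : p42 * (b * (c)) = p5 := ((estep a (b * (c)) E_28_0).symm.trans (((EQA p28).symm).trans ((estep a (a * (a * (a * (a)))) E_28_0).trans ((estep a (a * (a * (a))) E_42_0).trans ((estep a (a * (a)) E_61_0).trans ((estep a (a) E_69_0).trans (E_70_0)))))))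
  have hsuf : p1 * (c) = p5 := E_1_2
  rw [← mul_assoc] at hmid
  exact mul_right_cancel (hmid.trans hsuf.symm)
theorem E_49_1 : p49 * b = p4 := by
  have hmid : p49 * (b * (b)) = p5 := ((estep b (b * (b)) E_28_1).symm.trans ((EQB p28).trans ((estep a (b * (c)) E_28_0).trans ((estep b (c) E_42_1).trans (E_1_2)))))
  have hsuf : p4 * (b) = p5 := E_4_1
  rw [← mul_assoc] at hmid
  exact mul_right_cancel (hmid.trans hsuf.symm)
theorem E_63_2 : p63 * c = p9 := ((estep c (c) E_42_2).symm.trans ((estep a (c * (c)) E_28_0).symm.trans (((EQCA p28).symm).trans ((estep c (c * (a)) E_28_2).trans ((estep c (a) E_1_2).trans (E_5_0))))))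
theorem E_73_2 : p73 * c = p15 := ((estep c (c) E_51_2).symm.trans ((estep b (c * (c)) E_31_1).symm.trans (((EQCB p31).symm).trans ((estep c (c * (b)) E_31_2).trans ((estep c (b) E_53_2).trans (E_76_1))))))
theorem E_54_2 : p54 * c = p6 := by
  have hmid : p54 * (c * (a)) = p15 := ((estep c (c * (a)) E_32_2).symm.trans ((EQCA p32).trans ((estep a (c * (c)) E_32_0).trans ((estep c (c) E_51_2).trans (E_73_2)))))
  have hsuf : p6 * (a) = p15 := E_6_0
  rw [← mul_assoc] at hmid
  exact mul_right_cancel (hmid.trans hsuf.symm)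
theorem E_38_2 : p38 * c = p2 := by
  have hmid : p38 * (c * (c)) = p8 := ((estep b (c * (c)) E_32_1).symm.trans (((EQCB p32).symm).trans ((estep c (c * (b)) E_32_2).trans ((estep c (b) E_54_2).trans (E_6_1)))))
  have hsuf : p2 * (c) = p8 := E_2_2
  rw [← mul_assoc] at hmid
  exact mul_right_cancel (hmid.trans hsuf.symm)
theorem E_59_2 : p59 * c = p11 := by
  have hmid : p59 * (c * (a)) = p8 := ((estep c (c * (a)) E_37_2).symm.trans ((EQCA p37).trans ((estep a (c * (c)) E_37_0).trans ((estep c (c) E_38_2).trans (E_2_2)))))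
  have hsuf : p11 * (a) = p8 := E_11_0
  rw [← mul_assoc] at hmid
  exact mul_right_cancel (hmid.trans hsuf.symm)
theorem E_45_2 : p45 * c = p4 := by
  have hmid : p45 * (c * (c)) = p12 := ((estep b (c * (c)) E_37_1).symm.trans (((EQCB p37).symm).trans ((estep c (c * (b)) E_37_2).trans ((estep c (b) E_59_2).trans (E_11_1)))))
  have hsuf : p4 * (c) = p12 := E_4_2
  rw [← mul_assoc] at hmid
  exact mul_right_cancel (hmid.trans hsuf.symm)
theorem E_38_0 : p38 * a = p0 := by
  have hmid : p38 * (a * (b * (c))) = p8 := (((EQC p38).symm).trans ((estep c (c) E_38_2).trans (E_2_2)))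
  have hsuf : p0 * (b * (c)) = p8 := (estep b (c) E_0_1).trans (E_2_2)
  rw [← mul_assoc] at hmid
  exact mul_right_cancel (hmid.trans hsuf.symm)
theorem E_59_1 : p59 * b = p6 := by
  have hmid : p59 * (b * (b)) = p8 := ((estep b (b * (b)) E_38_1).symm.trans ((EQF p38).trans ((estep c (c) E_38_2).trans (E_2_2))))
  have hsuf : p6 * (b) = p8 := E_6_1
  rw [← mul_assoc] at hmid
  exact mul_right_cancel (hmid.trans hsuf.symm)
theorem E_66_1 : p66 * b = p11 := by
  have hmid : p66 * (b * (b)) = p12 := ((estep b (b * (b)) E_45_1).symm.trans ((EQB p45).trans ((estep a (b * (c)) E_45_0).trans ((estep b (c) E_49_1).trans (E_4_2)))))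
  have hsuf : p11 * (b) = p12 := E_11_1
  rw [← mul_assoc] at hmid
  exact mul_right_cancel (hmid.trans hsuf.symm)
theorem E_80_2 : p80 * c = p29 := ((estep c (c) E_57_2).symm.trans ((estep b (c * (c)) E_50_1).symm.trans (((EQCB p50).symm).trans ((estep c (c * (b)) E_50_2).trans ((estep c (b) E_72_2).trans (E_95_1))))))
theorem E_58_0 : p58 * a = p2 := by
  have hmid : p58 * (a * (a * (a))) = p15 := ((estep a (a * (a * (a))) E_57_0).symm.trans ((estep a (a * (a * (a * (a)))) E_51_0).symm.trans ((EQA p51).trans ((estep a (b * (c)) E_51_0).trans ((estep b (c) E_57_1).trans (E_73_2))))))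
  have hsuf : p2 * (a * (a)) = p15 := (estep a (a) E_2_0).trans (E_6_0)
  rw [← mul_assoc] at hmid
  exact mul_right_cancel (hmid.trans hsuf.symm)
theorem E_79_2 : p79 * c = p17 := by
  have hmid : p79 * (c * (a)) = p33 := ((estep c (c * (a)) E_56_2).symm.trans ((EQCA p56).trans ((estep a (c * (c)) E_56_0).trans ((estep c (c) E_62_2).trans (E_84_2)))))
  have hsuf : p17 * (a) = p33 := E_17_0
  rw [← mul_assoc] at hmid
  exact mul_right_cancel (hmid.trans hsuf.symm)
theorem E_58_2 : p58 * c = p7 := by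
  have hmid : p58 * (c * (c)) = p18 := ((estep b (c * (c)) E_56_1).symm.trans (((EQCB p56).symm).trans ((estep c (c * (b)) E_56_2).trans ((estep c (b) E_79_2).trans (E_17_1)))))
  have hsuf : p7 * (c) = p18 := E_7_2
  rw [← mul_assoc] at hmid
  exact mul_right_cancel (hmid.trans hsuf.symm)
theorem E_80_1 : p80 * b = p17 := by
  have hmid : p80 * (b * (b)) = p18 := ((estep b (b * (b)) E_58_1).symm.trans ((EQB p58).trans ((estep a (b * (c)) E_58_0).trans ((estep b (c) E_2_1).trans (E_7_2)))))
  have hsuf : p17 * (b) = p18 := E_17_1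
  rw [← mul_assoc] at hmid
  exact mul_right_cancel (hmid.trans hsuf.symm)
theorem E_63_0 : p63 * a = p3 := by
  have hmid : p63 * (a * (a * (a * (a)))) = p33 := ((estep a (a * (a * (a * (a)))) E_62_0).symm.trans ((EQA p62).trans ((estep a (b * (c)) E_62_0).trans ((estep b (c) E_63_1).trans (E_84_2)))))
  have hsuf : p3 * (a * (a * (a))) = p33 := (estep a (a * (a)) E_3_0).trans ((estep a (a) E_7_0).trans (E_17_0))
  rw [← mul_assoc] at hmid
  exact mul_right_cancel (hmid.trans hsuf.symm)
theorem E_23_2 : p23 * c = p0 := ((estep c (c) E_10_2).symm.trans ((estep a (c * (c)) E_8_0).symm.trans (((EQCA p8).symm).trans ((estep c (c * (a)) E_8_2).trans ((estep c (a) E_20_2).trans (E_38_0))))))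
theorem E_36_1 : p36 * b = p0 := ((estep b (b) E_20_1).symm.trans ((estep b (b * (b)) E_10_1).symm.trans ((EQB p10).trans ((estep a (b * (c)) E_10_0).trans ((estep b (c) E_14_1).trans (E_23_2))))))

def pf : Fin 120 → P := ![p0, p1, p2, p3, p4, p5, p6, p7, p8, p9, p10, p11, p12, p13, p14, p15, p16, p17, p18, p19, p20, p21, p22, p23, p24, p25, p26, p27, p28, p29, p30, p31, p32, p33, p34, p35, p36, p37, p38, p39, p40, p41, p42, p43, p44, p45, p46, p47, p48, p49, p50, p51, p52, p53, p54, p55, p56, p57, p58, p59, p60, p61, p62, p63, p64, p65, p66, p67, p68, p69, p70, p71, p72, p73, p74, p75, p76, p77, p78, p79, p80, p81, p82, p83, p84, p85, p86, p87, p88, p89, p90, p91, p92, p93, p94, p95, p96, p97, p98, p99, p100, p101, p102, p103, p104, p105, p106, p107, p108, p109, p110, p111, p112, p113, p114, p115, p116, p117, p118, p119]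
def nA : Fin 120 → Fin 120 := ![1, 4, 6, 7, 11, 9, 15, 17, 10, 21, 14, 8, 13, 26, 25, 29, 19, 33, 20, 24, 32, 39, 23, 36, 43, 37, 46, 28, 42, 18, 31, 52, 51, 22, 35, 50, 56, 38, 0, 27, 41, 55, 61, 53, 45, 49, 44, 48, 60, 68, 71, 57, 74, 54, 59, 77, 62, 58, 2, 66, 81, 69, 63, 3, 65, 67, 86, 89, 87, 70, 5, 78, 73, 76, 72, 64, 85, 82, 79, 80, 95, 90, 83, 84, 99, 102, 97, 88, 12, 103, 91, 92, 101, 94, 96, 109, 111, 16, 93, 108, 98, 112, 110, 104, 105, 107, 100, 114, 115, 113, 30, 118, 117, 34, 75, 40, 106, 47, 119, 116]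
def nB : Fin 120 → Fin 120 := ![2, 3, 7, 9, 5, 13, 8, 10, 19, 14, 20, 12, 24, 25, 23, 16, 31, 18, 35, 32, 36, 22, 41, 42, 37, 28, 27, 48, 49, 30, 50, 51, 38, 34, 55, 56, 0, 45, 59, 40, 60, 61, 1, 44, 65, 66, 47, 67, 68, 4, 57, 54, 53, 64, 76, 62, 58, 73, 80, 6, 69, 63, 79, 84, 85, 86, 11, 87, 70, 83, 92, 72, 94, 95, 75, 96, 15, 78, 93, 99, 17, 82, 98, 101, 21, 97, 88, 91, 105, 90, 100, 107, 26, 108, 109, 29, 102, 104, 112, 33, 114, 39, 103, 106, 52, 43, 74, 46, 113, 110, 116, 89, 115, 119, 117, 118, 71, 111, 81, 77]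
def nC : Fin 120 → Fin 120 := ![3, 5, 8, 10, 12, 14, 16, 18, 20, 22, 23, 19, 25, 27, 28, 30, 32, 34, 36, 37, 38, 40, 42, 0, 44, 45, 47, 49, 1, 35, 51, 53, 54, 41, 56, 57, 58, 59, 2, 48, 61, 62, 63, 64, 66, 4, 65, 68, 69, 70, 72, 73, 75, 76, 6, 78, 79, 80, 7, 11, 82, 83, 84, 9, 86, 87, 88, 90, 91, 92, 13, 93, 95, 15, 94, 85, 97, 98, 99, 17, 29, 100, 101, 21, 33, 103, 104, 105, 24, 106, 107, 26, 39, 109, 102, 110, 89, 31, 108, 113, 112, 115, 116, 52, 43, 46, 114, 117, 118, 119, 50, 81, 111, 55, 96, 60, 74, 67, 77, 71]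
def qA : Fin 120 → Fin 120 := ![38, 0, 58, 63, 1, 70, 2, 3, 11, 5, 8, 4, 88, 12, 10, 6, 97, 7, 29, 16, 18, 9, 33, 22, 19, 14, 13, 39, 27, 15, 110, 30, 20, 17, 113, 34, 23, 25, 37, 21, 115, 40, 28, 24, 46, 44, 26, 117, 47, 45, 35, 32, 31, 43, 53, 41, 36, 51, 57, 54, 48, 42, 56, 62, 75, 64, 59, 65, 49, 61, 69, 50, 74, 72, 52, 114, 73, 55, 71, 78, 79, 60, 77, 82, 83, 76, 66, 68, 87, 67, 81, 90, 91, 98, 93, 80, 94, 86, 100, 84, 106, 92, 85, 89, 103, 104, 116, 105, 99, 95, 102, 96, 101, 109, 107, 108, 119, 112, 111, 118]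
def qB : Fin 120 → Fin 120 := ![36, 42, 0, 1, 49, 4, 59, 2, 6, 3, 7, 66, 11, 5, 9, 76, 15, 80, 17, 8, 10, 84, 21, 14, 12, 13, 92, 26, 25, 95, 29, 16, 19, 99, 33, 18, 20, 24, 32, 101, 39, 22, 23, 105, 43, 37, 107, 46, 27, 28, 30, 31, 104, 52, 51, 34, 35, 50, 56, 38, 40, 41, 55, 61, 53, 44, 45, 47, 48, 60, 68, 116, 71, 57, 106, 74, 54, 119, 77, 62, 58, 118, 81, 69, 63, 64, 65, 67, 86, 111, 89, 87, 70, 78, 72, 73, 75, 85, 82, 79, 90, 83, 96, 102, 97, 88, 103, 91, 93, 94, 109, 117, 98, 108, 100, 112, 110, 114, 115, 113]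
def qC : Fin 120 → Fin 120 := ![23, 28, 38, 0, 45, 1, 54, 58, 2, 63, 3, 59, 4, 70, 5, 73, 6, 79, 7, 11, 8, 83, 9, 10, 88, 12, 91, 13, 14, 80, 15, 97, 16, 84, 17, 29, 18, 19, 20, 92, 21, 33, 22, 104, 24, 25, 105, 26, 39, 27, 110, 30, 103, 31, 32, 113, 34, 35, 36, 37, 115, 40, 41, 42, 43, 46, 44, 117, 47, 48, 49, 119, 50, 51, 116, 52, 53, 118, 55, 56, 57, 111, 60, 61, 62, 75, 64, 65, 66, 96, 67, 68, 69, 71, 74, 72, 114, 76, 77, 78, 81, 82, 94, 85, 86, 87, 89, 90, 98, 93, 95, 112, 100, 99, 106, 101, 102, 107, 108, 109]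

theorem hqA : ∀ i, nA (qA i) = i := by decide
theorem hqB : ∀ i, nB (qB i) = i := by decide
theorem hqC : ∀ i, nC (qC i) = i := by decide

theorem eA : ∀ i : Fin 120, pf i * a = pf (nA i) := by
  intro i; fin_cases i
  · exact E_0_0
  · exact E_1_0
  · exact E_2_0
  · exact E_3_0
  · exact E_4_0
  · exact E_5_0
  · exact E_6_0
  · exact E_7_0
  · exact E_8_0
  · exact E_9_0
  · exact E_10_0
  · exact E_11_0
  · exact E_12_0
  · exact E_13_0
  · exact E_14_0
  · exact E_15_0
  · exact E_16_0
  · exact E_17_0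
  · exact E_18_0
  · exact E_19_0
  · exact E_20_0
  · exact E_21_0
  · exact E_22_0
  · exact E_23_0
  · exact E_24_0
  · exact E_25_0
  · exact E_26_0
  · exact E_27_0
  · exact E_28_0
  · exact E_29_0
  · exact E_30_0
  · exact E_31_0
  · exact E_32_0
  · exact E_33_0
  · exact E_34_0
  · exact E_35_0
  · exact E_36_0
  · exact E_37_0
  · exact E_38_0
  · exact E_39_0
  · exact E_40_0
  · exact E_41_0
  · exact E_42_0
  · exact E_43_0
  · exact E_44_0
  · exact E_45_0
  · exact E_46_0
  · exact E_47_0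
  · exact E_48_0
  · exact E_49_0
  · exact E_50_0
  · exact E_51_0
  · exact E_52_0
  · exact E_53_0
  · exact E_54_0
  · exact E_55_0
  · exact E_56_0
  · exact E_57_0
  · exact E_58_0
  · exact E_59_0
  · exact E_60_0
  · exact E_61_0
  · exact E_62_0
  · exact E_63_0
  · exact E_64_0
  · exact E_65_0
  · exact E_66_0
  · exact E_67_0
  · exact E_68_0
  · exact E_69_0
  · exact E_70_0
  · exact E_71_0
  · exact E_72_0
  · exact E_73_0
  · exact E_74_0
  · exact E_75_0
  · exact E_76_0
  · exact E_77_0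
  · exact E_78_0
  · exact E_79_0
  · exact E_80_0
  · exact E_81_0
  · exact E_82_0
  · exact E_83_0
  · exact E_84_0
  · exact E_85_0
  · exact E_86_0
  · exact E_87_0
  · exact E_88_0
  · exact E_89_0
  · exact E_90_0
  · exact E_91_0
  · exact E_92_0
  · exact E_93_0
  · exact E_94_0
  · exact E_95_0
  · exact E_96_0
  · exact E_97_0
  · exact E_98_0
  · exact E_99_0
  · exact E_100_0
  · exact E_101_0
  · exact E_102_0
  · exact E_103_0
  · exact E_104_0
  · exact E_105_0
  · exact E_106_0
  · exact E_107_0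
  · exact E_108_0
  · exact E_109_0
  · exact E_110_0
  · exact E_111_0
  · exact E_112_0
  · exact E_113_0
  · exact E_114_0
  · exact E_115_0
  · exact E_116_0
  · exact E_117_0
  · exact E_118_0
  · exact E_119_0
theorem eB : ∀ i : Fin 120, pf i * b = pf (nB i) := by
  intro i; fin_cases i
  · exact E_0_1
  · exact E_1_1
  · exact E_2_1
  · exact E_3_1
  · exact E_4_1
  · exact E_5_1
  · exact E_6_1
  · exact E_7_1
  · exact E_8_1
  · exact E_9_1
  · exact E_10_1
  · exact E_11_1
  · exact E_12_1
  · exact E_13_1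
  · exact E_14_1
  · exact E_15_1
  · exact E_16_1
  · exact E_17_1
  · exact E_18_1
  · exact E_19_1
  · exact E_20_1
  · exact E_21_1
  · exact E_22_1
  · exact E_23_1
  · exact E_24_1
  · exact E_25_1
  · exact E_26_1
  · exact E_27_1
  · exact E_28_1
  · exact E_29_1
  · exact E_30_1
  · exact E_31_1
  · exact E_32_1
  · exact E_33_1
  · exact E_34_1
  · exact E_35_1
  · exact E_36_1
  · exact E_37_1
  · exact E_38_1
  · exact E_39_1
  · exact E_40_1
  · exact E_41_1
  · exact E_42_1
  · exact E_43_1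
  · exact E_44_1
  · exact E_45_1
  · exact E_46_1
  · exact E_47_1
  · exact E_48_1
  · exact E_49_1
  · exact E_50_1
  · exact E_51_1
  · exact E_52_1
  · exact E_53_1
  · exact E_54_1
  · exact E_55_1
  · exact E_56_1
  · exact E_57_1
  · exact E_58_1
  · exact E_59_1
  · exact E_60_1
  · exact E_61_1
  · exact E_62_1
  · exact E_63_1
  · exact E_64_1
  · exact E_65_1
  · exact E_66_1
  · exact E_67_1
  · exact E_68_1
  · exact E_69_1
  · exact E_70_1
  · exact E_71_1
  · exact E_72_1
  · exact E_73_1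
  · exact E_74_1
  · exact E_75_1
  · exact E_76_1
  · exact E_77_1
  · exact E_78_1
  · exact E_79_1
  · exact E_80_1
  · exact E_81_1
  · exact E_82_1
  · exact E_83_1
  · exact E_84_1
  · exact E_85_1
  · exact E_86_1
  · exact E_87_1
  · exact E_88_1
  · exact E_89_1
  · exact E_90_1
  · exact E_91_1
  · exact E_92_1
  · exact E_93_1
  · exact E_94_1
  · exact E_95_1
  · exact E_96_1
  · exact E_97_1
  · exact E_98_1
  · exact E_99_1
  · exact E_100_1
  · exact E_101_1
  · exact E_102_1
  · exact E_103_1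
  · exact E_104_1
  · exact E_105_1
  · exact E_106_1
  · exact E_107_1
  · exact E_108_1
  · exact E_109_1
  · exact E_110_1
  · exact E_111_1
  · exact E_112_1
  · exact E_113_1
  · exact E_114_1
  · exact E_115_1
  · exact E_116_1
  · exact E_117_1
  · exact E_118_1
  · exact E_119_1
theorem eC : ∀ i : Fin 120, pf i * c = pf (nC i) := by
  intro i; fin_cases i
  · exact E_0_2
  · exact E_1_2
  · exact E_2_2
  · exact E_3_2
  · exact E_4_2
  · exact E_5_2
  · exact E_6_2
  · exact E_7_2
  · exact E_8_2
  · exact E_9_2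
  · exact E_10_2
  · exact E_11_2
  · exact E_12_2
  · exact E_13_2
  · exact E_14_2
  · exact E_15_2
  · exact E_16_2
  · exact E_17_2
  · exact E_18_2
  · exact E_19_2
  · exact E_20_2
  · exact E_21_2
  · exact E_22_2
  · exact E_23_2
  · exact E_24_2
  · exact E_25_2
  · exact E_26_2
  · exact E_27_2
  · exact E_28_2
  · exact E_29_2
  · exact E_30_2
  · exact E_31_2
  · exact E_32_2
  · exact E_33_2
  · exact E_34_2
  · exact E_35_2
  · exact E_36_2
  · exact E_37_2
  · exact E_38_2
  · exact E_39_2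
  · exact E_40_2
  · exact E_41_2
  · exact E_42_2
  · exact E_43_2
  · exact E_44_2
  · exact E_45_2
  · exact E_46_2
  · exact E_47_2
  · exact E_48_2
  · exact E_49_2
  · exact E_50_2
  · exact E_51_2
  · exact E_52_2
  · exact E_53_2
  · exact E_54_2
  · exact E_55_2
  · exact E_56_2
  · exact E_57_2
  · exact E_58_2
  · exact E_59_2
  · exact E_60_2
  · exact E_61_2
  · exact E_62_2
  · exact E_63_2
  · exact E_64_2
  · exact E_65_2
  · exact E_66_2
  · exact E_67_2
  · exact E_68_2
  · exact E_69_2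
  · exact E_70_2
  · exact E_71_2
  · exact E_72_2
  · exact E_73_2
  · exact E_74_2
  · exact E_75_2
  · exact E_76_2
  · exact E_77_2
  · exact E_78_2
  · exact E_79_2
  · exact E_80_2
  · exact E_81_2
  · exact E_82_2
  · exact E_83_2
  · exact E_84_2
  · exact E_85_2
  · exact E_86_2
  · exact E_87_2
  · exact E_88_2
  · exact E_89_2
  · exact E_90_2
  · exact E_91_2
  · exact E_92_2
  · exact E_93_2
  · exact E_94_2
  · exact E_95_2
  · exact E_96_2
  · exact E_97_2
  · exact E_98_2
  · exact E_99_2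
  · exact E_100_2
  · exact E_101_2
  · exact E_102_2
  · exact E_103_2
  · exact E_104_2
  · exact E_105_2
  · exact E_106_2
  · exact E_107_2
  · exact E_108_2
  · exact E_109_2
  · exact E_110_2
  · exact E_111_2
  · exact E_112_2
  · exact E_113_2
  · exact E_114_2
  · exact E_115_2
  · exact E_116_2
  · exact E_117_2
  · exact E_118_2
  · exact E_119_2

instance : DecidableEq (Matrix.SpecialLinearGroup (Fin 2) (ZMod 5)) :=
  inferInstanceAs (DecidableEq {A : Matrix (Fin 2) (Fin 2) (ZMod 5) // A.det = 1})

def mf : Fin 120 → Matrix.SpecialLinearGroup (Fin 2) (ZMod 5) := ![(⟨!![1, 0; 0, 1], by decide⟩ : Matrix.SpecialLinearGroup (Fin 2) (ZMod 5)), (⟨!![4, 4; 0, 4], by decide⟩ : Matrix.SpecialLinearGroup (Fin 2) (ZMod 5)), (⟨!![1, 1; 4, 0], by decide⟩ : Matrix.SpecialLinearGroup (Fin 2) (ZMod 5)), (⟨!![0, 4; 1, 0], by decide⟩ : Matrix.SpecialLinearGroup (Fin 2) (ZMod 5)), (⟨!![1, 2; 0, 1], by decide⟩ : Matrix.SpecialLinearGroup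 (Fin 2) (ZMod 5)), (⟨!![4, 1; 4, 0], by decide⟩ : Matrix.SpecialLinearGroup (Fin 2) (ZMod 5)), (⟨!![4, 3; 1, 1], by decide⟩ : Matrix.SpecialLinearGroup (Fin 2) (ZMod 5)), (⟨!![0, 1; 4, 4], by decide⟩ : Matrix.SpecialLinearGroup (Fin 2) (ZMod 5)), (⟨!![1, 4; 0, 1], by decide⟩ : Matrix.SpecialLinearGroup (Fin 2) (ZMod 5)), (⟨!![1, 0; 1, 1], by decide⟩ : Matrix.SpecialLinearGroup (Fin 2) (ZMod 5)), (⟨!![4, 0; 0, 4], by decide⟩ : Matrix.SpecialLinearGroup (Fin 2) (ZMod 5)), (⟨!![4, 2; 0, 4], by decide⟩ : Matrix.SpecialLinearGroup (Fin 2) (ZMod 5)), (⟨!![2, 4; 1, 0], by decide⟩ : Matrix.SpecialLinearGroup (Fin 2) (ZMod 5)), (⟨!![3, 4; 4, 4], by decide⟩ : Matrix.SpecialLinearGroup (Fin 2) (ZMod 5)), (⟨!![1, 1; 0, 1], by decide⟩ : Matrix.SpecialLinearGroup (Fin 2) (ZMod 5)), (⟨!![1, 3; 4, 3], by decide⟩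 : Matrix.SpecialLinearGroup (Fin 2) (ZMod 5)), (⟨!![3, 1; 1, 4], by decide⟩ : Matrix.SpecialLinearGroup (Fin 2) (ZMod 5)), (⟨!![0, 4; 1, 2], by decide⟩ : Matrix.SpecialLinearGroup (Fin 2) (ZMod 5)), (⟨!![1, 0; 4, 1], by decide⟩ : Matrix.SpecialLinearGroup (Fin 2) (ZMod 5)), (⟨!![2, 1; 4, 0], by decide⟩ : Matrix.SpecialLinearGroup (Fin 2) (ZMod 5)), (⟨!![4, 4; 1, 0], by decide⟩ : Matrix.SpecialLinearGroup (Fin 2) (ZMod 5)), (⟨!![4, 4; 4, 3], by decide⟩ : Matrix.SpecialLinearGroup (Fin 2) (ZMod 5)), (⟨!![0, 4; 1, 4], by decide⟩ : Matrix.SpecialLinearGroup (Fin 2) (ZMod 5)), (⟨!![0, 1; 4, 0], by decide⟩ : Matrix.SpecialLinearGroup (Fin 2) (ZMod 5)), (⟨!![3, 2; 1, 1], by decide⟩ : Matrix.SpecialLinearGroup (Fin 2) (ZMod 5)), (⟨!![4, 3; 0, 4], by decide⟩ : Matrix.SpecialLinearGroup (Fin 2) (ZMod 5)), (⟨!![2,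 3; 1, 2], by decide⟩ : Matrix.SpecialLinearGroup (Fin 2) (ZMod 5)), (⟨!![4, 2; 4, 1], by decide⟩ : Matrix.SpecialLinearGroup (Fin 2) (ZMod 5)), (⟨!![1, 4; 1, 0], by decide⟩ : Matrix.SpecialLinearGroup (Fin 2) (ZMod 5)), (⟨!![4, 1; 1, 3], by decide⟩ : Matrix.SpecialLinearGroup (Fin 2) (ZMod 5)), (⟨!![3, 4; 3, 1], by decide⟩ : Matrix.SpecialLinearGroup (Fin 2) (ZMod 5)), (⟨!![2, 3; 2, 1], by decide⟩ : Matrix.SpecialLinearGroup (Fin 2) (ZMod 5)), (⟨!![1, 2; 4, 4], by decide⟩ : Matrix.SpecialLinearGroup (Fin 2) (ZMod 5)), (⟨!![0, 1; 4, 2], by decide⟩ : Matrix.SpecialLinearGroup (Fin 2) (ZMod 5)), (⟨!![4, 0; 2, 4], by decide⟩ : Matrix.SpecialLinearGroup (Fin 2) (ZMod 5)), (⟨!![1, 1; 3, 4], by decide⟩ : Matrix.SpecialLinearGroup (Fin 2) (ZMod 5)), (⟨!![0, 4; 1, 1], by decide⟩ : Matrix.SpecialLinearGroup (Fin 2) (ZMod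 5)), (⟨!![1, 3; 0, 1], by decide⟩ : Matrix.SpecialLinearGroup (Fin 2) (ZMod 5)), (⟨!![4, 1; 0, 4], by decide⟩ : Matrix.SpecialLinearGroup (Fin 2) (ZMod 5)), (⟨!![1, 2; 1, 3], by decide⟩ : Matrix.SpecialLinearGroup (Fin 2) (ZMod 5)), (⟨!![4, 1; 3, 1], by decide⟩ : Matrix.SpecialLinearGroup (Fin 2) (ZMod 5)), (⟨!![1, 0; 2, 1], by decide⟩ : Matrix.SpecialLinearGroup (Fin 2) (ZMod 5)), (⟨!![4, 0; 4, 4], by decide⟩ : Matrix.SpecialLinearGroup (Fin 2) (ZMod 5)), (⟨!![2, 0; 4, 3], by decide⟩ : Matrix.SpecialLinearGroup (Fin 2) (ZMod 5)), (⟨!![2, 2; 1, 4], by decide⟩ : Matrix.SpecialLinearGroup (Fin 2) (ZMod 5)), (⟨!![3, 1; 4, 0], by decide⟩ : Matrix.SpecialLinearGroup (Fin 2) (ZMod 5)), (⟨!![3, 0; 4, 2], by decide⟩ : Matrix.SpecialLinearGroup (Fin 2) (ZMod 5)), (⟨!![3, 3; 2, 4], by decide⟩ : Matrix.SpecialLinearGroup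 (Fin 2) (ZMod 5)), (⟨!![2, 4; 3, 4], by decide⟩ : Matrix.SpecialLinearGroup (Fin 2) (ZMod 5)), (⟨!![2, 1; 1, 1], by decide⟩ : Matrix.SpecialLinearGroup (Fin 2) (ZMod 5)), (⟨!![4, 3; 2, 3], by decide⟩ : Matrix.SpecialLinearGroup (Fin 2) (ZMod 5)), (⟨!![4, 2; 1, 2], by decide⟩ : Matrix.SpecialLinearGroup (Fin 2) (ZMod 5)), (⟨!![3, 0; 3, 2], by decide⟩ : Matrix.SpecialLinearGroup (Fin 2) (ZMod 5)), (⟨!![3, 3; 1, 3], by decide⟩ : Matrix.SpecialLinearGroup (Fin 2) (ZMod 5)), (⟨!![2, 4; 4, 1], by decide⟩ : Matrix.SpecialLinearGroup (Fin 2) (ZMod 5)), (⟨!![4, 4; 3, 2], by decide⟩ : Matrix.SpecialLinearGroup (Fin 2) (ZMod 5)), (⟨!![0, 1; 4, 3], by decide⟩ : Matrix.SpecialLinearGroup (Fin 2) (ZMod 5)), (⟨!![1, 4; 4, 2], by decide⟩ : Matrix.SpecialLinearGroup (Fin 2) (ZMod 5)), (⟨!![4, 0; 1, 4], by decide⟩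 : Matrix.SpecialLinearGroup (Fin 2) (ZMod 5)), (⟨!![3, 4; 1, 0], by decide⟩ : Matrix.SpecialLinearGroup (Fin 2) (ZMod 5)), (⟨!![3, 4; 2, 3], by decide⟩ : Matrix.SpecialLinearGroup (Fin 2) (ZMod 5)), (⟨!![1, 1; 1, 2], by decide⟩ : Matrix.SpecialLinearGroup (Fin 2) (ZMod 5)), (⟨!![0, 4; 1, 3], by decide⟩ : Matrix.SpecialLinearGroup (Fin 2) (ZMod 5)), (⟨!![0, 1; 4, 1], by decide⟩ : Matrix.SpecialLinearGroup (Fin 2) (ZMod 5)), (⟨!![0, 3; 3, 1], by decide⟩ : Matrix.SpecialLinearGroup (Fin 2) (ZMod 5)), (⟨!![0, 2; 2, 1], by decide⟩ : Matrix.SpecialLinearGroup (Fin 2) (ZMod 5)), (⟨!![2, 3; 4, 4], by decide⟩ : Matrix.SpecialLinearGroup (Fin 2) (ZMod 5)), (⟨!![0, 3; 3, 2], by decide⟩ : Matrix.SpecialLinearGroup (Fin 2) (ZMod 5)), (⟨!![3, 2; 4, 3], by decide⟩ : Matrix.SpecialLinearGroup (Fin 2) (ZMod 5)), (⟨!![4,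 3; 4, 2], by decide⟩ : Matrix.SpecialLinearGroup (Fin 2) (ZMod 5)), (⟨!![1, 3; 1, 4], by decide⟩ : Matrix.SpecialLinearGroup (Fin 2) (ZMod 5)), (⟨!![1, 3; 3, 0], by decide⟩ : Matrix.SpecialLinearGroup (Fin 2) (ZMod 5)), (⟨!![3, 1; 3, 3], by decide⟩ : Matrix.SpecialLinearGroup (Fin 2) (ZMod 5)), (⟨!![2, 1; 2, 4], by decide⟩ : Matrix.SpecialLinearGroup (Fin 2) (ZMod 5)), (⟨!![2, 2; 2, 0], by decide⟩ : Matrix.SpecialLinearGroup (Fin 2) (ZMod 5)), (⟨!![0, 2; 2, 2], by decide⟩ : Matrix.SpecialLinearGroup (Fin 2) (ZMod 5)), (⟨!![3, 2; 3, 4], by decide⟩ : Matrix.SpecialLinearGroup (Fin 2) (ZMod 5)), (⟨!![1, 2; 2, 0], by decide⟩ : Matrix.SpecialLinearGroup (Fin 2) (ZMod 5)), (⟨!![4, 1; 2, 2], by decide⟩ : Matrix.SpecialLinearGroup (Fin 2) (ZMod 5)), (⟨!![1, 0; 3, 1], by decide⟩ : Matrix.SpecialLinearGroup (Fin 2) (ZMod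 5)), (⟨!![4, 4; 2, 1], by decide⟩ : Matrix.SpecialLinearGroup (Fin 2) (ZMod 5)), (⟨!![2, 3; 3, 0], by decide⟩ : Matrix.SpecialLinearGroup (Fin 2) (ZMod 5)), (⟨!![4, 2; 3, 3], by decide⟩ : Matrix.SpecialLinearGroup (Fin 2) (ZMod 5)), (⟨!![1, 4; 2, 4], by decide⟩ : Matrix.SpecialLinearGroup (Fin 2) (ZMod 5)), (⟨!![4, 0; 3, 4], by decide⟩ : Matrix.SpecialLinearGroup (Fin 2) (ZMod 5)), (⟨!![2, 0; 2, 3], by decide⟩ : Matrix.SpecialLinearGroup (Fin 2) (ZMod 5)), (⟨!![3, 0; 1, 2], by decide⟩ : Matrix.SpecialLinearGroup (Fin 2) (ZMod 5)), (⟨!![2, 0; 1, 3], by decide⟩ : Matrix.SpecialLinearGroup (Fin 2) (ZMod 5)), (⟨!![3, 3; 4, 1], by decide⟩ : Matrix.SpecialLinearGroup (Fin 2) (ZMod 5)), (⟨!![0, 2; 2, 0], by decide⟩ : Matrix.SpecialLinearGroup (Fin 2) (ZMod 5)), (⟨!![3, 0; 2, 2], by decide⟩ : Matrix.SpecialLinearGroup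 (Fin 2) (ZMod 5)), (⟨!![2, 2; 3, 1], by decide⟩ : Matrix.SpecialLinearGroup (Fin 2) (ZMod 5)), (⟨!![3, 1; 2, 1], by decide⟩ : Matrix.SpecialLinearGroup (Fin 2) (ZMod 5)), (⟨!![3, 4; 0, 2], by decide⟩ : Matrix.SpecialLinearGroup (Fin 2) (ZMod 5)), (⟨!![2, 3; 0, 3], by decide⟩ : Matrix.SpecialLinearGroup (Fin 2) (ZMod 5)), (⟨!![1, 2; 3, 2], by decide⟩ : Matrix.SpecialLinearGroup (Fin 2) (ZMod 5)), (⟨!![3, 0; 0, 2], by decide⟩ : Matrix.SpecialLinearGroup (Fin 2) (ZMod 5)), (⟨!![2, 2; 4, 2], by decide⟩ : Matrix.SpecialLinearGroup (Fin 2) (ZMod 5)), (⟨!![2, 4; 0, 3], by decide⟩ : Matrix.SpecialLinearGroup (Fin 2) (ZMod 5)), (⟨!![1, 1; 2, 3], by decide⟩ : Matrix.SpecialLinearGroup (Fin 2) (ZMod 5)), (⟨!![3, 3; 0, 2], by decide⟩ : Matrix.SpecialLinearGroup (Fin 2) (ZMod 5)), (⟨!![2, 1; 3, 2], by decide⟩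 : Matrix.SpecialLinearGroup (Fin 2) (ZMod 5)), (⟨!![3, 3; 3, 0], by decide⟩ : Matrix.SpecialLinearGroup (Fin 2) (ZMod 5)), (⟨!![0, 3; 3, 3], by decide⟩ : Matrix.SpecialLinearGroup (Fin 2) (ZMod 5)), (⟨!![0, 2; 2, 4], by decide⟩ : Matrix.SpecialLinearGroup (Fin 2) (ZMod 5)), (⟨!![0, 3; 3, 4], by decide⟩ : Matrix.SpecialLinearGroup (Fin 2) (ZMod 5)), (⟨!![2, 0; 0, 3], by decide⟩ : Matrix.SpecialLinearGroup (Fin 2) (ZMod 5)), (⟨!![0, 2; 2, 3], by decide⟩ : Matrix.SpecialLinearGroup (Fin 2) (ZMod 5)), (⟨!![4, 3; 3, 0], by decide⟩ : Matrix.SpecialLinearGroup (Fin 2) (ZMod 5)), (⟨!![4, 2; 2, 0], by decide⟩ : Matrix.SpecialLinearGroup (Fin 2) (ZMod 5)), (⟨!![2, 4; 2, 2], by decide⟩ : Matrix.SpecialLinearGroup (Fin 2) (ZMod 5)), (⟨!![2, 2; 0, 3], by decide⟩ : Matrix.SpecialLinearGroup (Fin 2) (ZMod 5)), (⟨!![3,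 2; 2, 0], by decide⟩ : Matrix.SpecialLinearGroup (Fin 2) (ZMod 5)), (⟨!![1, 4; 3, 3], by decide⟩ : Matrix.SpecialLinearGroup (Fin 2) (ZMod 5)), (⟨!![0, 3; 3, 0], by decide⟩ : Matrix.SpecialLinearGroup (Fin 2) (ZMod 5)), (⟨!![1, 3; 2, 2], by decide⟩ : Matrix.SpecialLinearGroup (Fin 2) (ZMod 5)), (⟨!![3, 2; 0, 2], by decide⟩ : Matrix.SpecialLinearGroup (Fin 2) (ZMod 5)), (⟨!![2, 0; 3, 3], by decide⟩ : Matrix.SpecialLinearGroup (Fin 2) (ZMod 5)), (⟨!![3, 1; 0, 2], by decide⟩ : Matrix.SpecialLinearGroup (Fin 2) (ZMod 5)), (⟨!![2, 1; 0, 3], by decide⟩ : Matrix.SpecialLinearGroup (Fin 2) (ZMod 5))]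

def fgen : Fin 3 → Matrix.SpecialLinearGroup (Fin 2) (ZMod 5) :=
  ![⟨!![-1, -1; 0, -1], by decide⟩, ⟨!![1, 1; -1, 0], by decide⟩, ⟨!![0, -1; 1, 0], by decide⟩]

theorem hrel : ∀ r ∈ binaryPolyhedralRels 5 3 2, FreeGroup.lift fgen r = 1 := by
  intro r hr
  rcases hr with h | h | h <;> subst h <;>
    · simp only [map_mul, map_pow, map_inv, FreeGroup.lift_apply_of]
      decide

def phi : P →* Matrix.SpecialLinearGroup (Fin 2) (ZMod 5) := PresentedGroup.toGroup hrel

theorem phi_of (x : Fin 3) : phi (PresentedGroup.of x) = fgen x := PresentedGroup.toGroup.of hrel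

theorem hphi_0 : phi p0 = mf 0 := by
  show phi (1) = mf 0
  simp only [map_one, map_mul, phi_of]
  decide
theorem hphi_1 : phi p1 = mf 1 := by
  show phi (a) = mf 1
  simp only [map_one, map_mul, phi_of]
  decide
theorem hphi_2 : phi p2 = mf 2 := by
  show phi (b) = mf 2
  simp only [map_one, map_mul, phi_of]
  decide
theorem hphi_3 : phi p3 = mf 3 := by
  show phi (c) = mf 3
  simp only [map_one, map_mul, phi_of]
  decide
theorem hphi_4 : phi p4 = mf 4 := by
  show phi (a * a) = mf 4
  simp only [map_one, map_mul, phi_of]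
  decide
theorem hphi_5 : phi p5 = mf 5 := by
  show phi (a * c) = mf 5
  simp only [map_one, map_mul, phi_of]
  decide
theorem hphi_6 : phi p6 = mf 6 := by
  show phi (b * a) = mf 6
  simp only [map_one, map_mul, phi_of]
  decide
theorem hphi_7 : phi p7 = mf 7 := by
  show phi (b * b) = mf 7
  simp only [map_one, map_mul, phi_of]
  decide
theorem hphi_8 : phi p8 = mf 8 := by
  show phi (b * c) = mf 8
  simp only [map_one, map_mul, phi_of]
  decide
theorem hphi_9 : phi p9 = mf 9 := by
  show phi (c * b) = mf 9
  simp only [map_one, map_mul, phi_of]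
  decide
theorem hphi_10 : phi p10 = mf 10 := by
  show phi (c * c) = mf 10
  simp only [map_one, map_mul, phi_of]
  decide
theorem hphi_11 : phi p11 = mf 11 := by
  show phi (a * a * a) = mf 11
  simp only [map_one, map_mul, phi_of]
  decide
theorem hphi_12 : phi p12 = mf 12 := by
  show phi (a * a * c) = mf 12
  simp only [map_one, map_mul, phi_of]
  decide
theorem hphi_13 : phi p13 = mf 13 := by
  show phi (a * c * b) = mf 13
  simp only [map_one, map_mul, phi_of]
  decide
theorem hphi_14 : phi p14 = mf 14 := by
  show phi (a * c * c) = mf 14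
  simp only [map_one, map_mul, phi_of]
  decide
theorem hphi_15 : phi p15 = mf 15 := by
  show phi (b * a * a) = mf 15
  simp only [map_one, map_mul, phi_of]
  decide
theorem hphi_16 : phi p16 = mf 16 := by
  show phi (b * a * c) = mf 16
  simp only [map_one, map_mul, phi_of]
  decide
theorem hphi_17 : phi p17 = mf 17 := by
  show phi (b * b * a) = mf 17
  simp only [map_one, map_mul, phi_of]
  decide
theorem hphi_18 : phi p18 = mf 18 := by
  show phi (b * b * c) = mf 18
  simp only [map_one, map_mul, phi_of]
  decide
theorem hphi_19 : phi p19 = mf 19 := by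
  show phi (b * c * b) = mf 19
  simp only [map_one, map_mul, phi_of]
  decide
theorem hphi_20 : phi p20 = mf 20 := by
  show phi (b * c * c) = mf 20
  simp only [map_one, map_mul, phi_of]
  decide
theorem hphi_21 : phi p21 = mf 21 := by
  show phi (c * b * a) = mf 21
  simp only [map_one, map_mul, phi_of]
  decide
theorem hphi_22 : phi p22 = mf 22 := by
  show phi (c * b * c) = mf 22
  simp only [map_one, map_mul, phi_of]
  decide
theorem hphi_23 : phi p23 = mf 23 := by
  show phi (c * c * c) = mf 23
  simp only [map_one, map_mul, phi_of]
  decide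
theorem hphi_24 : phi p24 = mf 24 := by
  show phi (a * a * c * b) = mf 24
  simp only [map_one, map_mul, phi_of]
  decide
theorem hphi_25 : phi p25 = mf 25 := by
  show phi (a * a * c * c) = mf 25
  simp only [map_one, map_mul, phi_of]
  decide
theorem hphi_26 : phi p26 = mf 26 := by
  show phi (a * c * b * a) = mf 26
  simp only [map_one, map_mul, phi_of]
  decide
theorem hphi_27 : phi p27 = mf 27 := by
  show phi (a * c * b * c) = mf 27
  simp only [map_one, map_mul, phi_of]
  decide
theorem hphi_28 : phi p28 = mf 28 := by
  show phi (a * c * c * c) = mf 28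
  simp only [map_one, map_mul, phi_of]
  decide
theorem hphi_29 : phi p29 = mf 29 := by
  show phi (b * a * a * a) = mf 29
  simp only [map_one, map_mul, phi_of]
  decide
theorem hphi_30 : phi p30 = mf 30 := by
  show phi (b * a * a * c) = mf 30
  simp only [map_one, map_mul, phi_of]
  decide
theorem hphi_31 : phi p31 = mf 31 := by
  show phi (b * a * c * b) = mf 31
  simp only [map_one, map_mul, phi_of]
  decide
theorem hphi_32 : phi p32 = mf 32 := by
  show phi (b * a * c * c) = mf 32
  simp only [map_one, map_mul, phi_of]
  decide
theorem hphi_33 : phi p33 = mf 33 := by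
  show phi (b * b * a * a) = mf 33
  simp only [map_one, map_mul, phi_of]
  decide
theorem hphi_34 : phi p34 = mf 34 := by
  show phi (b * b * a * c) = mf 34
  simp only [map_one, map_mul, phi_of]
  decide
theorem hphi_35 : phi p35 = mf 35 := by
  show phi (b * b * c * b) = mf 35
  simp only [map_one, map_mul, phi_of]
  decide
theorem hphi_36 : phi p36 = mf 36 := by
  show phi (b * b * c * c) = mf 36
  simp only [map_one, map_mul, phi_of]
  decide
theorem hphi_37 : phi p37 = mf 37 := by
  show phi (b * c * b * c) = mf 37
  simp only [map_one, map_mul, phi_of]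
  decide
theorem hphi_38 : phi p38 = mf 38 := by
  show phi (b * c * c * c) = mf 38
  simp only [map_one, map_mul, phi_of]
  decide
theorem hphi_39 : phi p39 = mf 39 := by
  show phi (c * b * a * a) = mf 39
  simp only [map_one, map_mul, phi_of]
  decide
theorem hphi_40 : phi p40 = mf 40 := by
  show phi (c * b * a * c) = mf 40
  simp only [map_one, map_mul, phi_of]
  decide
theorem hphi_41 : phi p41 = mf 41 := by
  show phi (c * b * c * b) = mf 41
  simp only [map_one, map_mul, phi_of]
  decide
theorem hphi_42 : phi p42 = mf 42 := by
  show phi (c * b * c * c) = mf 42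
  simp only [map_one, map_mul, phi_of]
  decide
theorem hphi_43 : phi p43 = mf 43 := by
  show phi (a * a * c * b * a) = mf 43
  simp only [map_one, map_mul, phi_of]
  decide
theorem hphi_44 : phi p44 = mf 44 := by
  show phi (a * a * c * b * c) = mf 44
  simp only [map_one, map_mul, phi_of]
  decide
theorem hphi_45 : phi p45 = mf 45 := by
  show phi (a * a * c * c * c) = mf 45
  simp only [map_one, map_mul, phi_of]
  decide
theorem hphi_46 : phi p46 = mf 46 := by
  show phi (a * c * b * a * a) = mf 46
  simp only [map_one, map_mul, phi_of]
  decide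
theorem hphi_47 : phi p47 = mf 47 := by
  show phi (a * c * b * a * c) = mf 47
  simp only [map_one, map_mul, phi_of]
  decide
theorem hphi_48 : phi p48 = mf 48 := by
  show phi (a * c * b * c * b) = mf 48
  simp only [map_one, map_mul, phi_of]
  decide
theorem hphi_49 : phi p49 = mf 49 := by
  show phi (a * c * b * c * c) = mf 49
  simp only [map_one, map_mul, phi_of]
  decide
theorem hphi_50 : phi p50 = mf 50 := by
  show phi (b * a * a * c * b) = mf 50
  simp only [map_one, map_mul, phi_of]
  decide
theorem hphi_51 : phi p51 = mf 51 := by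
  show phi (b * a * a * c * c) = mf 51
  simp only [map_one, map_mul, phi_of]
  decide
theorem hphi_52 : phi p52 = mf 52 := by
  show phi (b * a * c * b * a) = mf 52
  simp only [map_one, map_mul, phi_of]
  decide
theorem hphi_53 : phi p53 = mf 53 := by
  show phi (b * a * c * b * c) = mf 53
  simp only [map_one, map_mul, phi_of]
  decide
theorem hphi_54 : phi p54 = mf 54 := by
  show phi (b * a * c * c * c) = mf 54
  simp only [map_one, map_mul, phi_of]
  decide
theorem hphi_55 : phi p55 = mf 55 := by
  show phi (b * b * a * c * b) = mf 55
  simp only [map_one, map_mul, phi_of]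
  decide
theorem hphi_56 : phi p56 = mf 56 := by
  show phi (b * b * a * c * c) = mf 56
  simp only [map_one, map_mul, phi_of]
  decide
theorem hphi_57 : phi p57 = mf 57 := by
  show phi (b * b * c * b * c) = mf 57
  simp only [map_one, map_mul, phi_of]
  decide
theorem hphi_58 : phi p58 = mf 58 := by
  show phi (b * b * c * c * c) = mf 58
  simp only [map_one, map_mul, phi_of]
  decide
theorem hphi_59 : phi p59 = mf 59 := by
  show phi (b * c * b * c * c) = mf 59
  simp only [map_one, map_mul, phi_of]
  decide
theorem hphi_60 : phi p60 = mf 60 := by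
  show phi (c * b * a * c * b) = mf 60
  simp only [map_one, map_mul, phi_of]
  decide
theorem hphi_61 : phi p61 = mf 61 := by
  show phi (c * b * a * c * c) = mf 61
  simp only [map_one, map_mul, phi_of]
  decide
theorem hphi_62 : phi p62 = mf 62 := by
  show phi (c * b * c * b * c) = mf 62
  simp only [map_one, map_mul, phi_of]
  decide
theorem hphi_63 : phi p63 = mf 63 := by
  show phi (c * b * c * c * c) = mf 63
  simp only [map_one, map_mul, phi_of]
  decide
theorem hphi_64 : phi p64 = mf 64 := by
  show phi (a * a * c * b * a * c) = mf 64
  simp only [map_one, map_mul, phi_of]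
  decide
theorem hphi_65 : phi p65 = mf 65 := by
  show phi (a * a * c * b * c * b) = mf 65
  simp only [map_one, map_mul, phi_of]
  decide
theorem hphi_66 : phi p66 = mf 66 := by
  show phi (a * a * c * b * c * c) = mf 66
  simp only [map_one, map_mul, phi_of]
  decide
theorem hphi_67 : phi p67 = mf 67 := by
  show phi (a * c * b * a * c * b) = mf 67
  simp only [map_one, map_mul, phi_of]
  decide
theorem hphi_68 : phi p68 = mf 68 := by
  show phi (a * c * b * a * c * c) = mf 68
  simp only [map_one, map_mul, phi_of]
  decide
theorem hphi_69 : phi p69 = mf 69 := by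
  show phi (a * c * b * c * b * c) = mf 69
  simp only [map_one, map_mul, phi_of]
  decide
theorem hphi_70 : phi p70 = mf 70 := by
  show phi (a * c * b * c * c * c) = mf 70
  simp only [map_one, map_mul, phi_of]
  decide
theorem hphi_71 : phi p71 = mf 71 := by
  show phi (b * a * a * c * b * a) = mf 71
  simp only [map_one, map_mul, phi_of]
  decide
theorem hphi_72 : phi p72 = mf 72 := by
  show phi (b * a * a * c * b * c) = mf 72
  simp only [map_one, map_mul, phi_of]
  decide
theorem hphi_73 : phi p73 = mf 73 := by
  show phi (b * a * a * c * c * c) = mf 73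
  simp only [map_one, map_mul, phi_of]
  decide
theorem hphi_74 : phi p74 = mf 74 := by
  show phi (b * a * c * b * a * a) = mf 74
  simp only [map_one, map_mul, phi_of]
  decide
theorem hphi_75 : phi p75 = mf 75 := by
  show phi (b * a * c * b * a * c) = mf 75
  simp only [map_one, map_mul, phi_of]
  decide
theorem hphi_76 : phi p76 = mf 76 := by
  show phi (b * a * c * b * c * c) = mf 76
  simp only [map_one, map_mul, phi_of]
  decide
theorem hphi_77 : phi p77 = mf 77 := by
  show phi (b * b * a * c * b * a) = mf 77
  simp only [map_one, map_mul, phi_of]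
  decide
theorem hphi_78 : phi p78 = mf 78 := by
  show phi (b * b * a * c * b * c) = mf 78
  simp only [map_one, map_mul, phi_of]
  decide
theorem hphi_79 : phi p79 = mf 79 := by
  show phi (b * b * a * c * c * c) = mf 79
  simp only [map_one, map_mul, phi_of]
  decide
theorem hphi_80 : phi p80 = mf 80 := by
  show phi (b * b * c * b * c * c) = mf 80
  simp only [map_one, map_mul, phi_of]
  decide
theorem hphi_81 : phi p81 = mf 81 := by
  show phi (c * b * a * c * b * a) = mf 81
  simp only [map_one, map_mul, phi_of]
  decide
theorem hphi_82 : phi p82 = mf 82 := by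
  show phi (c * b * a * c * b * c) = mf 82
  simp only [map_one, map_mul, phi_of]
  decide
theorem hphi_83 : phi p83 = mf 83 := by
  show phi (c * b * a * c * c * c) = mf 83
  simp only [map_one, map_mul, phi_of]
  decide
theorem hphi_84 : phi p84 = mf 84 := by
  show phi (c * b * c * b * c * c) = mf 84
  simp only [map_one, map_mul, phi_of]
  decide
theorem hphi_85 : phi p85 = mf 85 := by
  show phi (a * a * c * b * a * c * b) = mf 85
  simp only [map_one, map_mul, phi_of]
  decide
theorem hphi_86 : phi p86 = mf 86 := by
  show phi (a * a * c * b * a * c * c) = mf 86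
  simp only [map_one, map_mul, phi_of]
  decide
theorem hphi_87 : phi p87 = mf 87 := by
  show phi (a * a * c * b * c * b * c) = mf 87
  simp only [map_one, map_mul, phi_of]
  decide
theorem hphi_88 : phi p88 = mf 88 := by
  show phi (a * a * c * b * c * c * c) = mf 88
  simp only [map_one, map_mul, phi_of]
  decide
theorem hphi_89 : phi p89 = mf 89 := by
  show phi (a * c * b * a * c * b * a) = mf 89
  simp only [map_one, map_mul, phi_of]
  decide
theorem hphi_90 : phi p90 = mf 90 := by
  show phi (a * c * b * a * c * b * c) = mf 90
  simp only [map_one, map_mul, phi_of]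
  decide
theorem hphi_91 : phi p91 = mf 91 := by
  show phi (a * c * b * a * c * c * c) = mf 91
  simp only [map_one, map_mul, phi_of]
  decide
theorem hphi_92 : phi p92 = mf 92 := by
  show phi (a * c * b * c * b * c * c) = mf 92
  simp only [map_one, map_mul, phi_of]
  decide
theorem hphi_93 : phi p93 = mf 93 := by
  show phi (b * a * a * c * b * a * c) = mf 93
  simp only [map_one, map_mul, phi_of]
  decide
theorem hphi_94 : phi p94 = mf 94 := by
  show phi (b * a * a * c * b * c * b) = mf 94
  simp only [map_one, map_mul, phi_of]
  decide
theorem hphi_95 : phi p95 = mf 95 := by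
  show phi (b * a * a * c * b * c * c) = mf 95
  simp only [map_one, map_mul, phi_of]
  decide
theorem hphi_96 : phi p96 = mf 96 := by
  show phi (b * a * c * b * a * c * b) = mf 96
  simp only [map_one, map_mul, phi_of]
  decide
theorem hphi_97 : phi p97 = mf 97 := by
  show phi (b * a * c * b * c * c * c) = mf 97
  simp only [map_one, map_mul, phi_of]
  decide
theorem hphi_98 : phi p98 = mf 98 := by
  show phi (b * b * a * c * b * a * c) = mf 98
  simp only [map_one, map_mul, phi_of]
  decide
theorem hphi_99 : phi p99 = mf 99 := by
  show phi (b * b * a * c * b * c * c) = mf 99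
  simp only [map_one, map_mul, phi_of]
  decide
theorem hphi_100 : phi p100 = mf 100 := by
  show phi (c * b * a * c * b * a * c) = mf 100
  simp only [map_one, map_mul, phi_of]
  decide
theorem hphi_101 : phi p101 = mf 101 := by
  show phi (c * b * a * c * b * c * c) = mf 101
  simp only [map_one, map_mul, phi_of]
  decide
theorem hphi_102 : phi p102 = mf 102 := by
  show phi (a * a * c * b * a * c * b * a) = mf 102
  simp only [map_one, map_mul, phi_of]
  decide
theorem hphi_103 : phi p103 = mf 103 := by
  show phi (a * a * c * b * a * c * b * c) = mf 103
  simp only [map_one, map_mul, phi_of]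
  decide
theorem hphi_104 : phi p104 = mf 104 := by
  show phi (a * a * c * b * a * c * c * c) = mf 104
  simp only [map_one, map_mul, phi_of]
  decide
theorem hphi_105 : phi p105 = mf 105 := by
  show phi (a * a * c * b * c * b * c * c) = mf 105
  simp only [map_one, map_mul, phi_of]
  decide
theorem hphi_106 : phi p106 = mf 106 := by
  show phi (a * c * b * a * c * b * a * c) = mf 106
  simp only [map_one, map_mul, phi_of]
  decide
theorem hphi_107 : phi p107 = mf 107 := by
  show phi (a * c * b * a * c * b * c * c) = mf 107
  simp only [map_one, map_mul, phi_of]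
  decide
theorem hphi_108 : phi p108 = mf 108 := by
  show phi (b * a * a * c * b * a * c * b) = mf 108
  simp only [map_one, map_mul, phi_of]
  decide
theorem hphi_109 : phi p109 = mf 109 := by
  show phi (b * a * a * c * b * a * c * c) = mf 109
  simp only [map_one, map_mul, phi_of]
  decide
theorem hphi_110 : phi p110 = mf 110 := by
  show phi (b * a * a * c * b * c * c * c) = mf 110
  simp only [map_one, map_mul, phi_of]
  decide
theorem hphi_111 : phi p111 = mf 111 := by
  show phi (b * a * c * b * a * c * b * a) = mf 111
  simp only [map_one, map_mul, phi_of]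
  decide
theorem hphi_112 : phi p112 = mf 112 := by
  show phi (b * b * a * c * b * a * c * b) = mf 112
  simp only [map_one, map_mul, phi_of]
  decide
theorem hphi_113 : phi p113 = mf 113 := by
  show phi (b * b * a * c * b * c * c * c) = mf 113
  simp only [map_one, map_mul, phi_of]
  decide
theorem hphi_114 : phi p114 = mf 114 := by
  show phi (c * b * a * c * b * a * c * b) = mf 114
  simp only [map_one, map_mul, phi_of]
  decide
theorem hphi_115 : phi p115 = mf 115 := by
  show phi (c * b * a * c * b * c * c * c) = mf 115
  simp only [map_one, map_mul, phi_of]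
  decide
theorem hphi_116 : phi p116 = mf 116 := by
  show phi (a * a * c * b * a * c * b * a * c) = mf 116
  simp only [map_one, map_mul, phi_of]
  decide
theorem hphi_117 : phi p117 = mf 117 := by
  show phi (a * c * b * a * c * b * c * c * c) = mf 117
  simp only [map_one, map_mul, phi_of]
  decide
theorem hphi_118 : phi p118 = mf 118 := by
  show phi (b * a * a * c * b * a * c * b * c) = mf 118
  simp only [map_one, map_mul, phi_of]
  decide
theorem hphi_119 : phi p119 = mf 119 := by
  show phi (b * a * a * c * b * a * c * c * c) = mf 119
  simp only [map_one, map_mul, phi_of]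
  decide
theorem hphi : ∀ i, phi (pf i) = mf i := by
  intro i; fin_cases i
  · exact hphi_0
  · exact hphi_1
  · exact hphi_2
  · exact hphi_3
  · exact hphi_4
  · exact hphi_5
  · exact hphi_6
  · exact hphi_7
  · exact hphi_8
  · exact hphi_9
  · exact hphi_10
  · exact hphi_11
  · exact hphi_12
  · exact hphi_13
  · exact hphi_14
  · exact hphi_15
  · exact hphi_16
  · exact hphi_17
  · exact hphi_18
  · exact hphi_19
  · exact hphi_20
  · exact hphi_21
  · exact hphi_22
  · exact hphi_23
  · exact hphi_24
  · exact hphi_25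
  · exact hphi_26
  · exact hphi_27
  · exact hphi_28
  · exact hphi_29
  · exact hphi_30
  · exact hphi_31
  · exact hphi_32
  · exact hphi_33
  · exact hphi_34
  · exact hphi_35
  · exact hphi_36
  · exact hphi_37
  · exact hphi_38
  · exact hphi_39
  · exact hphi_40
  · exact hphi_41
  · exact hphi_42
  · exact hphi_43
  · exact hphi_44
  · exact hphi_45
  · exact hphi_46
  · exact hphi_47
  · exact hphi_48
  · exact hphi_49
  · exact hphi_50
  · exact hphi_51
  · exact hphi_52
  · exact hphi_53
  · exact hphi_54
  · exact hphi_55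
  · exact hphi_56
  · exact hphi_57
  · exact hphi_58
  · exact hphi_59
  · exact hphi_60
  · exact hphi_61
  · exact hphi_62
  · exact hphi_63
  · exact hphi_64
  · exact hphi_65
  · exact hphi_66
  · exact hphi_67
  · exact hphi_68
  · exact hphi_69
  · exact hphi_70
  · exact hphi_71
  · exact hphi_72
  · exact hphi_73
  · exact hphi_74
  · exact hphi_75
  · exact hphi_76
  · exact hphi_77
  · exact hphi_78
  · exact hphi_79
  · exact hphi_80
  · exact hphi_81
  · exact hphi_82
  · exact hphi_83
  · exact hphi_84
  · exact hphi_85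
  · exact hphi_86
  · exact hphi_87
  · exact hphi_88
  · exact hphi_89
  · exact hphi_90
  · exact hphi_91
  · exact hphi_92
  · exact hphi_93
  · exact hphi_94
  · exact hphi_95
  · exact hphi_96
  · exact hphi_97
  · exact hphi_98
  · exact hphi_99
  · exact hphi_100
  · exact hphi_101
  · exact hphi_102
  · exact hphi_103
  · exact hphi_104
  · exact hphi_105
  · exact hphi_106
  · exact hphi_107
  · exact hphi_108
  · exact hphi_109
  · exact hphi_110
  · exact hphi_111
  · exact hphi_112
  · exact hphi_113
  · exact hphi_114
  · exact hphi_115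
  · exact hphi_116
  · exact hphi_117
  · exact hphi_118
  · exact hphi_119

set_option maxHeartbeats 4000000 in
theorem minj : Function.Injective mf := by decide

set_option maxHeartbeats 4000000 in
theorem msurj : ∀ m : Matrix.SpecialLinearGroup (Fin 2) (ZMod 5), ∃ i, mf i = m := by decide

theorem inv_edge_a (i : Fin 120) : pf i * a⁻¹ = pf (qA i) := by
  have h := eA (qA i); rw [hqA] at h; rw [← h, mul_inv_cancel_right]
theorem inv_edge_b (i : Fin 120) : pf i * b⁻¹ = pf (qB i) := by
  have h := eB (qB i); rw [hqB] at h; rw [← h, mul_inv_cancel_right]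
theorem inv_edge_c (i : Fin 120) : pf i * c⁻¹ = pf (qC i) := by
  have h := eC (qC i); rw [hqC] at h; rw [← h, mul_inv_cancel_right]

theorem S_aux : ∀ L : List (Fin 3 × Bool),
    ∃ i : Fin 120, PresentedGroup.mk (binaryPolyhedralRels 5 3 2) (FreeGroup.mk L) = pf i := by
  intro L
  induction L using List.reverseRecOn with
  | nil => exact ⟨0, rfl⟩
  | append_singleton L x ih =>
    obtain ⟨i, hi⟩ := ih
    rw [← FreeGroup.mul_mk, map_mul, hi]
    obtain ⟨s, bl⟩ := x
    cases bl
    · have hx : (FreeGroup.mk [(s, false)] : FreeGroup (Fin 3)) = (FreeGroup.of s)⁻¹ := by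
        show _ = (FreeGroup.mk [(s, true)])⁻¹
        rw [FreeGroup.inv_mk]; rfl
      rw [hx, map_inv]
      fin_cases s
      · exact ⟨qA i, inv_edge_a i⟩
      · exact ⟨qB i, inv_edge_b i⟩
      · exact ⟨qC i, inv_edge_c i⟩
    · have hx : (FreeGroup.mk [(s, true)] : FreeGroup (Fin 3)) = FreeGroup.of s := rfl
      rw [hx]
      fin_cases s
      · exact ⟨nA i, eA i⟩
      · exact ⟨nB i, eB i⟩
      · exact ⟨nC i, eC i⟩

theorem S : ∀ x : P, ∃ i : Fin 120, x = pf i := by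
  intro x
  refine PresentedGroup.induction_on (C := fun y => ∃ i : Fin 120, y = pf i) x ?_
  intro z
  obtain ⟨L, rfl⟩ : ∃ L, FreeGroup.mk L = z := ⟨z.toWord, FreeGroup.mk_toWord⟩
  exact S_aux L

theorem phi_bij : Function.Bijective phi := by
  constructor
  · intro x y h
    obtain ⟨i, rfl⟩ := S x
    obtain ⟨j, rfl⟩ := S y
    rw [hphi, hphi] at h
    rw [minj h]
  · intro m
    obtain ⟨i, hi⟩ := msurj m
    exact ⟨pf i, (hphi i).trans hi⟩

end BinIcoProof

/-- The binary icosahedral group is isomorphic to `SL₂(𝔽₅)` via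
`α ↦ [[-1,-1],[0,-1]]`, `β ↦ [[1,1],[-1,0]]`, `γ ↦ [[0,-1],[1,0]]`. -/
theorem binaryIcosahedral_iso_SL2_F5 :
    ∃ e : BinaryIcosahedralGroup ≃* Matrix.SpecialLinearGroup (Fin 2) (ZMod 5),
      e (PresentedGroup.of 0) = ⟨!![-1, -1; 0, -1], by decide⟩ ∧
      e (PresentedGroup.of 1) = ⟨!![1, 1; -1, 0], by decide⟩ ∧
      e (PresentedGroup.of 2) = ⟨!![0, -1; 1, 0], by decide⟩ := by
  refine ⟨MulEquiv.ofBijective BinIcoProof.phi BinIcoProof.phi_bij, ?_, ?_, ?_⟩ <;>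
    · show BinIcoProof.phi (PresentedGroup.of _) = _
      rw [BinIcoProof.phi_of]
      rfl
end

section
/- SL₂(F₄) is isomorphic to the alternating group Alt₅; in particular SL₂(F₄) is a simple group of order 60. -/
/-!
`SL₂(𝔽₄)` acts on the five points of the projective line `ℙ¹(𝔽₄)`. The kernel of this action is
the centre, i.e. the scalars `r` with `r ^ 2 = 1`, which is trivial in characteristic 2; so
`SL₂(𝔽₄)` embeds into `Sym(ℙ¹(𝔽₄)) ≅ S₅`. Since `det : GL₂(𝔽₄) → 𝔽₄ˣ` is onto,
`|SL₂(𝔽₄)| = |GL₂(𝔽₄)| / 3 = 180 / 3 = 60`, so the image has index 2 and is therefore the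
alternating group, which is simple.
-/

open scoped LinearAlgebra.Projectivization

namespace Matrix.SpecialLinearGroup

variable {n R : Type*} [Fintype n] [DecidableEq n] [CommRing R]

theorem center_eq_bot_of_card_eq_pow [IsReduced R] {p k : ℕ} [ExpChar R p]
    (hn : Fintype.card n = p ^ k) : Subgroup.center (SpecialLinearGroup n R) = ⊥ := by
  rw [eq_bot_iff]
  intro A hA
  obtain ⟨r, hr, hA⟩ := mem_center_iff.mp hA
  rw [hn, ← mul_one (p ^ k), ExpChar.pow_prime_pow_mul_eq_one_iff, pow_one] at hr
  rw [Subgroup.mem_bot]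
  ext : 1
  simp [← hA, hr]

theorem card_mul_card_units_eq_card_GL [Nonempty n] :
    Nat.card (SpecialLinearGroup n R) * Nat.card Rˣ = Nat.card (GL n R) := by
  have hker : Nat.card (GeneralLinearGroup.det : GL n R →* Rˣ).ker =
      Nat.card (SpecialLinearGroup n R) :=
    Nat.card_congr
      { toFun g := ⟨g.1.1, congrArg Units.val g.2⟩
        invFun A := ⟨toGL A, Units.ext A.2⟩
        left_inv _ := Subtype.ext (Units.ext rfl)
        right_inv _ := rfl }
  rw [← hker, ← Subgroup.card_mul_index (GeneralLinearGroup.det : GL n R →* Rˣ).ker,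
    Subgroup.index_ker, MonoidHom.range_eq_top.mpr GeneralLinearGroup.det_surjective,
    Subgroup.card_top]

theorem card_fin_two (F : Type*) [Field F] [Finite F] :
    Nat.card (SpecialLinearGroup (Fin 2) F) = Nat.card F * (Nat.card F ^ 2 - 1) := by
  have := Fintype.ofFinite F
  have h := card_mul_card_units_eq_card_GL (n := Fin 2) (R := F)
  rw [card_GL_field, Fin.prod_univ_two, Nat.card_units, ← Nat.card_eq_fintype_card] at h
  have hq : 1 < Nat.card F := Finite.one_lt_card
  apply Nat.eq_of_mul_eq_mul_right (Nat.sub_pos_of_lt hq)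
  rw [h]
  simp only [Fin.val_zero, Fin.val_one, pow_zero, pow_one]
  rw [sq, ← Nat.mul_sub_one]
  ring

theorem injective_toPermHom_projectivization {F : Type*} [Field F] {p k : ℕ} [ExpChar F p]
    (hn : Fintype.card n = p ^ k) :
    Function.Injective (MulAction.toPermHom (SpecialLinearGroup n F) (ℙ F (n → F))) := by
  rw [← MonoidHom.ker_eq_bot_iff, Projectivization.SL_mulAction_ker]
  exact center_eq_bot_of_card_eq_pow hn

end Matrix.SpecialLinearGroup

theorem Equiv.Perm.range_eq_alternatingGroup_of_injective {G α : Type*} [Group G] [Fintype α]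
    [DecidableEq α] {f : G →* Equiv.Perm α} (hf : Function.Injective f)
    (hG : 2 * Nat.card G = Nat.card (Equiv.Perm α)) : f.range = alternatingGroup α := by
  apply eq_alternatingGroup_of_index_eq_two
  have hpos : 0 < Nat.card G := by have := Nat.card_pos (α := Equiv.Perm α); omega
  have h := f.range.card_mul_index
  rw [Nat.card_congr (MonoidHom.ofInjective hf).toEquiv.symm, ← hG, mul_comm 2] at h
  exact Nat.eq_of_mul_eq_mul_left hpos h

/-- `SL₂(𝔽₄)` is isomorphic to the alternating group `Alt₅`; in particular
it is a simple group of order 60. -/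
theorem SL2_F4_iso_alternatingGroup_five :
    Nonempty (Matrix.SpecialLinearGroup (Fin 2) (GaloisField 2 2) ≃*
      alternatingGroup (Fin 5)) ∧
    IsSimpleGroup (Matrix.SpecialLinearGroup (Fin 2) (GaloisField 2 2)) ∧
    Nat.card (Matrix.SpecialLinearGroup (Fin 2) (GaloisField 2 2)) = 60 := by
  classical
  have hF : Nat.card (GaloisField 2 2) = 4 := GaloisField.card 2 2 two_ne_zero
  have hSL : Nat.card (Matrix.SpecialLinearGroup (Fin 2) (GaloisField 2 2)) = 60 := by
    rw [Matrix.SpecialLinearGroup.card_fin_two, hF]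
    norm_num
  have hP : Nat.card (ℙ (GaloisField 2 2) (Fin 2 → GaloisField 2 2)) = 5 := by
    rw [Projectivization.card_of_finrank_two _ _ (Module.finrank_fin_fun _), hF]
  have := Fintype.ofFinite (ℙ (GaloisField 2 2) (Fin 2 → GaloisField 2 2))
  have hinj := Matrix.SpecialLinearGroup.injective_toPermHom_projectivization
    (F := GaloisField 2 2) (p := 2) (k := 1) (Fintype.card_fin 2)
  have hrange := Equiv.Perm.range_eq_alternatingGroup_of_injective hinj
    (by rw [Nat.card_perm, hP, hSL]; rfl)
  let e := ((MonoidHom.ofInjective hinj).trans (MulEquiv.subgroupCongr hrange)).trans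
    (Equiv.altCongrHom (Finite.equivFinOfCardEq hP))
  exact ⟨⟨e⟩, e.isSimpleGroup, hSL⟩
end
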